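/- arXiv:0903.1321 — 12 statements merged into one kernel-verified Lean document; each statement's English description precedes it below -/
import Mathlib

section
/- Let δ > 0 and let f : (−δ, δ) → ℝ be a smooth function with f(0) = 0, f′(0) = 0 and f″(0) = −2a for some a > 0. Suppose c₀ > 0 and t : (0, c₀) → (0, δ) is a function such that for every c ∈ (0, c₀): f(t(c)) + c = 0, f(t) + c > 0 for all t ∈ [0, t(c)), and t(c) → 0 as c → 0⁺. Then the limit as c → 0⁺ of ∫₀^{t(c)} (f(t) + c)^{−1/2} dt exists and equals π/(2√a). -/
open Real Filter Set MeasureTheory intervalIntegral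

private lemma rpow_neg_half_mul (K X : ℝ) (hK : 0 ≤ K) :
    (K * X) ^ (-(1:ℝ)/2) = K ^ (-(1:ℝ)/2) * X ^ (-(1:ℝ)/2) := by
  rcases le_or_gt 0 X with h | h
  · exact Real.mul_rpow hK h
  · rcases eq_or_lt_of_le hK with hK0 | hK'
    · rw [← hK0, zero_mul, Real.zero_rpow (by norm_num : (-(1:ℝ)/2) ≠ 0), zero_mul]
    · have h1 : K * X < 0 := mul_neg_of_pos_of_neg hK' h
      have hc : Real.cos (-(1:ℝ)/2 * π) = 0 := by
        rw [show (-(1:ℝ)/2 * π) = -(π/2) by ring, Real.cos_neg, Real.cos_pi_div_two]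
      rw [Real.rpow_def_of_neg h1, Real.rpow_def_of_neg h, hc]
      ring

private lemma sqrt_int_integrable (T : ℝ) (hT : 0 < T) :
    IntervalIntegrable (fun s => (T^2 - s^2) ^ (-(1:ℝ)/2)) volume 0 T := by
  have h1 : IntervalIntegrable (fun x : ℝ => x ^ (-(1:ℝ)/2)) volume 0 T :=
    intervalIntegral.intervalIntegrable_rpow' (by norm_num)
  have h2 : IntervalIntegrable (fun x : ℝ => (T - x) ^ (-(1:ℝ)/2)) volume 0 T := by
    simpa using (h1.comp_sub_left T).symm
  have h3 : IntervalIntegrable (fun x : ℝ => T ^ (-(1:ℝ)/2) * (T - x) ^ (-(1:ℝ)/2))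
      volume 0 T := h2.const_mul _
  refine h3.mono_fun ?_ ?_
  · rw [uIoc_of_le hT.le, ← MeasureTheory.Measure.restrict_congr_set MeasureTheory.Ioo_ae_eq_Ioc]
    refine ContinuousOn.aestronglyMeasurable ?_ measurableSet_Ioo
    refine ContinuousOn.rpow_const ?_ ?_
    · exact (continuous_const.sub (continuous_pow 2)).continuousOn
    · intro x hx
      left
      have : x^2 < T^2 := by nlinarith [hx.1, hx.2]
      exact (sub_pos.2 this).ne'
  · rw [uIoc_of_le hT.le]
    refine (ae_restrict_mem measurableSet_Ioc).mono (fun s hs => ?_)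
    have hs0 : 0 ≤ T - s := sub_nonneg.2 hs.2
    have hbase : 0 ≤ T^2 - s^2 := by nlinarith [hs.1.le, hs.2]
    simp only [Real.norm_eq_abs]
    rw [abs_of_nonneg (Real.rpow_nonneg hbase _),
        abs_of_nonneg (mul_nonneg (Real.rpow_nonneg hT.le _) (Real.rpow_nonneg hs0 _)),
        ← Real.mul_rpow hT.le hs0]
    rcases eq_or_lt_of_le hs.2 with heq | hlt
    · rw [heq]
      simp [Real.zero_rpow (by norm_num : (-(1:ℝ)/2) ≠ 0)]
    · have hpos : 0 < T * (T - s) := mul_pos hT (sub_pos.2 hlt)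
      refine Real.rpow_le_rpow_of_nonpos hpos ?_ (by norm_num)
      nlinarith [hs.1.le]

private lemma sqrt_int_value (T : ℝ) (hT : 0 < T) :
    ∫ s in (0:ℝ)..T, (T^2 - s^2) ^ (-(1:ℝ)/2) = π / 2 := by
  have key : ∫ s in (0:ℝ)..T, (T^2 - s^2) ^ (-(1:ℝ)/2)
      = Real.arcsin (T / T) - Real.arcsin (0 / T) := by
    refine intervalIntegral.integral_eq_sub_of_hasDeriv_right_of_le hT.le
      ((Real.continuous_arcsin.comp (continuous_id.div_const T)).continuousOn) ?_
      (sqrt_int_integrable T hT)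
    intro x hx
    have hb : 0 < T^2 - x^2 := by nlinarith [hx.1, hx.2]
    have h1 : x / T ≠ 1 := ne_of_lt ((div_lt_one hT).2 hx.2)
    have h2 : x / T ≠ -1 := ne_of_gt (lt_trans (by norm_num) (div_pos hx.1 hT))
    have hd : HasDerivAt (fun s => Real.arcsin (s / T))
        (1 / Real.sqrt (1 - (x/T)^2) * (1/T)) x :=
      HasDerivAt.comp (h₂ := Real.arcsin) x (Real.hasDerivAt_arcsin h2 h1) ((hasDerivAt_id' x).div_const T)
    have hsq : Real.sqrt (1 - (x/T)^2) = Real.sqrt (T^2 - x^2) / T := by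
      rw [show (1 - (x/T)^2) = (T^2 - x^2)/T^2 by field_simp,
          Real.sqrt_div hb.le, Real.sqrt_sq hT.le]
    have hval : (T^2 - x^2) ^ (-(1:ℝ)/2) = 1 / Real.sqrt (1 - (x/T)^2) * (1/T) := by
      rw [hsq, show (-(1:ℝ)/2) = -(1/2) by norm_num, Real.rpow_neg hb.le,
          ← Real.sqrt_eq_rpow]
      have hs1 : Real.sqrt (T^2 - x^2) ≠ 0 := (Real.sqrt_pos.2 hb).ne'
      field_simp
    rw [hval]
    exact hd.hasDerivWithinAt
  rw [key, div_self hT.ne', Real.arcsin_one, zero_div, Real.arcsin_zero, sub_zero]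

private lemma sqrt_int_integrableK (K T : ℝ) (hK : 0 ≤ K) (hT : 0 < T) :
    IntervalIntegrable (fun s => (K * (T^2 - s^2)) ^ (-(1:ℝ)/2)) volume 0 T := by
  simp only [rpow_neg_half_mul _ _ hK]
  exact (sqrt_int_integrable T hT).const_mul _

private lemma sqrt_int_valueK (K T : ℝ) (hK : 0 < K) (hT : 0 < T) :
    ∫ s in (0:ℝ)..T, (K * (T^2 - s^2)) ^ (-(1:ℝ)/2) = π / (2 * Real.sqrt K) := by
  simp only [rpow_neg_half_mul _ _ hK.le]
  rw [intervalIntegral.integral_const_mul, sqrt_int_value T hT,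
      show (-(1:ℝ)/2) = -(1/2) by norm_num, Real.rpow_neg hK.le, ← Real.sqrt_eq_rpow]
  rw [← div_div, div_eq_mul_inv (π/2), mul_comm]

/-- Let `δ > 0` and `f : (−δ, δ) → ℝ` smooth with `f 0 = 0`,
`f' 0 = 0`, `f'' 0 = −2a < 0`.  If `t c` is the first positive root of `f + c`
for `c ∈ (0, c₀)`, with `t c → 0` as `c → 0⁺`, then
`∫₀^{t c} (f s + c)^{-1/2} ds → π / (2 √a)` as `c → 0⁺`. -/
theorem stmt_0 (δ a c₀ : ℝ) (hδ : 0 < δ) (ha : 0 < a) (hc₀ : 0 < c₀)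
    (f t : ℝ → ℝ)
    (hf : ContDiffOn ℝ (⊤ : ℕ∞) f (Set.Ioo (-δ) δ))
    (hf0 : f 0 = 0) (hf'0 : deriv f 0 = 0) (hf''0 : deriv (deriv f) 0 = -(2 * a))
    (ht_mem : ∀ c ∈ Set.Ioo 0 c₀, t c ∈ Set.Ioo 0 δ)
    (ht_root : ∀ c ∈ Set.Ioo 0 c₀, f (t c) + c = 0)
    (ht_pos : ∀ c ∈ Set.Ioo 0 c₀, ∀ s ∈ Set.Ico 0 (t c), 0 < f s + c)
    (ht_lim : Filter.Tendsto t (nhdsWithin 0 (Set.Ioi 0)) (nhds 0)) :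
    Filter.Tendsto (fun c => ∫ s in (0:ℝ)..(t c), (f s + c) ^ (-(1:ℝ)/2))
      (nhdsWithin 0 (Set.Ioi 0)) (nhds (Real.pi / (2 * Real.sqrt a))) := by
  have h0δ : (0:ℝ) ∈ Set.Ioo (-δ) δ := ⟨by linarith, hδ⟩
  have hopen : IsOpen (Set.Ioo (-δ) δ) := isOpen_Ioo
  have hf' : ContDiffOn ℝ (⊤ : ℕ∞) (deriv f) (Set.Ioo (-δ) δ) := hf.deriv_of_isOpen hopen (by simp)
  have hfd : ∀ x ∈ Set.Ioo (-δ) δ, DifferentiableAt ℝ f x := fun x hx =>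
    (hf.differentiableOn (by simp)).differentiableAt (hopen.mem_nhds hx)
  -- derivative of deriv f at 0
  have hderiv2 : HasDerivAt (deriv f) (-(2*a)) 0 := by
    have h := ((hf'.differentiableOn (by simp)).differentiableAt
      (hopen.mem_nhds h0δ)).hasDerivAt
    rwa [hf''0] at h
  have hslope : Tendsto (fun s => deriv f s / s) (nhdsWithin (0:ℝ) (Set.Ioi 0))
      (nhds (-(2*a))) := by
    have h1 := hasDerivAt_iff_tendsto_slope.1 hderiv2
    have h2 : Tendsto (slope (deriv f) 0) (nhdsWithin (0:ℝ) (Set.Ioi 0)) (nhds (-(2*a))) :=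
      h1.mono_left (nhdsWithin_mono 0 (fun x hx => ne_of_gt hx))
    refine h2.congr (fun s => ?_)
    rw [slope_def_field, hf'0, sub_zero, sub_zero]
  -- main estimate
  rw [Metric.tendsto_nhds]
  intro ε' hε'
  set L := π / (2 * Real.sqrt a) with hL
  -- choose ε
  have hcont : ContinuousAt (fun x : ℝ => π / (2 * Real.sqrt x)) a := by
    have h2a : (2:ℝ) * Real.sqrt a ≠ 0 := by positivity
    exact continuousAt_const.div ((continuous_const.mul Real.continuous_sqrt).continuousAt) h2a
  have hev0 : ∀ᶠ x in nhds a, dist (π / (2 * Real.sqrt x)) L < ε' :=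
    (Metric.tendsto_nhds.1 hcont.tendsto) ε' hε'
  rw [Metric.eventually_nhds_iff] at hev0
  obtain ⟨r, hr, hball⟩ := hev0
  set ε := min (a/2) (r/2) with hεdef
  have hε : 0 < ε := lt_min (by linarith) (by linarith)
  have hεa : ε < a := lt_of_le_of_lt (min_le_left _ _) (by linarith)
  have hεr : ε < r := lt_of_le_of_lt (min_le_right _ _) (by linarith)
  have haε : 0 < a - ε := by linarith
  have haε' : 0 < a + ε := by linarith
  have hub : dist (π / (2 * Real.sqrt (a - ε))) L < ε' := by
    refine hball ?_
    rw [Real.dist_eq, show a - ε - a = -ε by ring, abs_neg, abs_of_pos hε]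
    exact hεr
  have hlb : dist (π / (2 * Real.sqrt (a + ε))) L < ε' := by
    refine hball ?_
    rw [Real.dist_eq, show a + ε - a = ε by ring, abs_of_pos hε]
    exact hεr
  -- get η from slope bound
  have hev : ∀ᶠ s in nhdsWithin (0:ℝ) (Set.Ioi 0), |deriv f s / s - (-(2*a))| < 2*ε := by
    have h := (Metric.tendsto_nhds.1 hslope) (2*ε) (by positivity)
    simpa [Real.dist_eq] using h
  obtain ⟨η, hη, hsub⟩ := mem_nhdsGT_iff_exists_Ioo_subset.1 hev
  rw [Set.mem_Ioi] at hη
  have hderiv_bounds : ∀ s ∈ Set.Ioo (0:ℝ) η,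
      -(2*(a+ε))*s ≤ deriv f s ∧ deriv f s ≤ -(2*(a-ε))*s := by
    intro s hs
    have h := hsub hs
    rw [Set.mem_setOf_eq, sub_neg_eq_add, abs_lt] at h
    have hs0 : (0:ℝ) < s := hs.1
    constructor
    · have h1 : -(2*(a+ε)) ≤ deriv f s / s := by linarith [h.1]
      calc -(2*(a+ε))*s ≤ (deriv f s / s) * s := by
            exact mul_le_mul_of_nonneg_right h1 hs0.le
        _ = deriv f s := by field_simp
    · have h1 : deriv f s / s ≤ -(2*(a-ε)) := by linarith [h.2]
      calc deriv f s = (deriv f s / s) * s := by field_simp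
        _ ≤ -(2*(a-ε))*s := mul_le_mul_of_nonneg_right h1 hs0.le
  -- eventual facts about c
  have hev1 : ∀ᶠ c in nhdsWithin (0:ℝ) (Set.Ioi 0), c ∈ Set.Ioo 0 c₀ :=
    Filter.eventually_mem_set.2 (Ioo_mem_nhdsGT_of_mem ⟨le_refl 0, hc₀⟩)
  have hev2 : ∀ᶠ c in nhdsWithin (0:ℝ) (Set.Ioi 0), t c < η :=
    ht_lim.eventually_lt_const hη
  filter_upwards [hev1, hev2] with c hc hcη
  set T := t c with hTdef
  have hT : T ∈ Set.Ioo 0 δ := ht_mem c hc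
  have hT0 : 0 < T := hT.1
  have hroot : f T + c = 0 := ht_root c hc
  have hIccsub : Set.Icc (0:ℝ) T ⊆ Set.Ioo (-δ) δ := fun s hs =>
    ⟨by linarith [hs.1], lt_of_le_of_lt hs.2 hT.2⟩
  -- derivative facts on Ioo 0 T
  have hbnd : ∀ x ∈ Set.Ioo (0:ℝ) T,
      -(2*(a+ε))*x ≤ deriv f x ∧ deriv f x ≤ -(2*(a-ε))*x := fun x hx =>
    hderiv_bounds x ⟨hx.1, lt_trans hx.2 hcη⟩
  have hfcont : ContinuousOn (fun s => f s + c) (Set.Icc 0 T) :=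
    (hf.continuousOn.mono hIccsub).add continuousOn_const
  have hfx : ∀ x ∈ Set.Ioo (0:ℝ) T, HasDerivAt f (deriv f x) x := fun x hx =>
    (hfd x (hIccsub (Set.Ioo_subset_Icc_self hx))).hasDerivAt
  have hqx : ∀ (K : ℝ) (x : ℝ), HasDerivAt (fun s => K*(T^2 - s^2)) (K * (0 - 2*x)) x := by
    intro K x
    have h1 : HasDerivAt (fun s : ℝ => s^2) (2*x) x := by
      simpa using hasDerivAt_pow 2 x
    exact ((hasDerivAt_const x (T^2)).sub h1).const_mul K
  -- upper comparison: f s + c ≤ (a+ε)(T² - s²)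
  have comp_upper : ∀ s ∈ Set.Icc (0:ℝ) T, f s + c ≤ (a+ε) * (T^2 - s^2) := by
    intro s hs
    set G := fun s => (a+ε)*(T^2 - s^2) - (f s + c) with hGdef
    have hGder : ∀ x ∈ Set.Ioo (0:ℝ) T,
        HasDerivAt G ((a+ε)*(0 - 2*x) - deriv f x) x := fun x hx =>
      (hqx (a+ε) x).sub ((hfx x hx).add_const c)
    have hanti : AntitoneOn G (Set.Icc 0 T) := by
      refine antitoneOn_of_deriv_nonpos (convex_Icc 0 T) ?_ ?_ ?_
      · exact ((continuous_const.mul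
          (continuous_const.sub (continuous_pow 2))).continuousOn).sub hfcont
      · rw [interior_Icc]
        exact fun x hx => ((hGder x hx).differentiableAt).differentiableWithinAt
      · rw [interior_Icc]
        intro x hx
        rw [(hGder x hx).deriv]
        have := (hbnd x hx).1
        nlinarith
    have hGT : G T = 0 := by
      simp only [hGdef, sub_self, mul_zero, zero_sub, hroot, neg_zero]
    have h := hanti hs (Set.right_mem_Icc.2 hT0.le) hs.2
    rw [hGT] at h
    simp only [hGdef] at h
    linarith
  -- lower comparison: (a-ε)(T² - s²) ≤ f s + c
  have comp_lower : ∀ s ∈ Set.Icc (0:ℝ) T, (a-ε) * (T^2 - s^2) ≤ f s + c := by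
    intro s hs
    set H := fun s => (f s + c) - (a-ε)*(T^2 - s^2) with hHdef
    have hHder : ∀ x ∈ Set.Ioo (0:ℝ) T,
        HasDerivAt H (deriv f x - (a-ε)*(0 - 2*x)) x := fun x hx =>
      ((hfx x hx).add_const c).sub (hqx (a-ε) x)
    have hanti : AntitoneOn H (Set.Icc 0 T) := by
      refine antitoneOn_of_deriv_nonpos (convex_Icc 0 T) ?_ ?_ ?_
      · exact hfcont.sub ((continuous_const.mul
          (continuous_const.sub (continuous_pow 2))).continuousOn)
      · rw [interior_Icc]
        exact fun x hx => ((hHder x hx).differentiableAt).differentiableWithinAt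
      · rw [interior_Icc]
        intro x hx
        rw [(hHder x hx).deriv]
        have := (hbnd x hx).2
        nlinarith
    have hHT : H T = 0 := by
      simp only [hHdef, sub_self, mul_zero, hroot, sub_zero, zero_sub, neg_zero]
    have h := hanti hs (Set.right_mem_Icc.2 hT0.le) hs.2
    rw [hHT] at h
    simp only [hHdef] at h
    linarith
  -- pointwise rpow bounds
  have hbound_up : ∀ s ∈ Set.Icc (0:ℝ) T,
      (f s + c) ^ (-(1:ℝ)/2) ≤ ((a-ε) * (T^2 - s^2)) ^ (-(1:ℝ)/2) := by
    intro s hs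
    rcases eq_or_lt_of_le hs.2 with heq | hlt
    · rw [heq, hroot, sub_self, mul_zero,
        Real.zero_rpow (by norm_num : (-(1:ℝ)/2) ≠ 0)]
    · have hq : 0 < (a-ε) * (T^2 - s^2) := by
        refine mul_pos haε ?_
        nlinarith [hs.1, hlt]
      exact Real.rpow_le_rpow_of_nonpos hq (comp_lower s hs) (by norm_num)
  have hbound_lo : ∀ s ∈ Set.Icc (0:ℝ) T,
      ((a+ε) * (T^2 - s^2)) ^ (-(1:ℝ)/2) ≤ (f s + c) ^ (-(1:ℝ)/2) := by
    intro s hs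
    rcases eq_or_lt_of_le hs.2 with heq | hlt
    · rw [heq, hroot, sub_self, mul_zero,
        Real.zero_rpow (by norm_num : (-(1:ℝ)/2) ≠ 0)]
    · have hpos : 0 < f s + c := ht_pos c hc s ⟨hs.1, hlt⟩
      exact Real.rpow_le_rpow_of_nonpos hpos (comp_upper s hs) (by norm_num)
  -- integrability
  have hint_lo := sqrt_int_integrableK (a+ε) T haε'.le hT0
  have hint_up := sqrt_int_integrableK (a-ε) T haε.le hT0
  have hint_main : IntervalIntegrable (fun s => (f s + c) ^ (-(1:ℝ)/2)) volume 0 T := by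
    refine hint_up.mono_fun' ?_ ?_
    · rw [uIoc_of_le hT0.le, ← MeasureTheory.Measure.restrict_congr_set
        MeasureTheory.Ioo_ae_eq_Ioc]
      refine ContinuousOn.aestronglyMeasurable ?_ measurableSet_Ioo
      refine ContinuousOn.rpow_const ?_ ?_
      · exact (hf.continuousOn.mono
          (Set.Subset.trans Set.Ioo_subset_Icc_self hIccsub)).add continuousOn_const
      · intro x hx
        left
        exact (ht_pos c hc x ⟨hx.1.le, hx.2⟩).ne'
    · rw [uIoc_of_le hT0.le]
      refine (ae_restrict_mem measurableSet_Ioc).mono (fun s hs => ?_)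
      have hs' : s ∈ Set.Icc (0:ℝ) T := ⟨hs.1.le, hs.2⟩
      have h0 : 0 ≤ f s + c := by
        rcases eq_or_lt_of_le hs.2 with heq | hlt
        · rw [heq, hroot]
        · exact (ht_pos c hc s ⟨hs'.1, hlt⟩).le
      simp only [Real.norm_eq_abs]
      rw [abs_of_nonneg (Real.rpow_nonneg h0 _)]
      exact hbound_up s hs'
  -- integral bounds
  have hle1 : π / (2 * Real.sqrt (a+ε)) ≤ ∫ s in (0:ℝ)..T, (f s + c) ^ (-(1:ℝ)/2) := by
    rw [← sqrt_int_valueK (a+ε) T haε' hT0]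
    exact intervalIntegral.integral_mono_on hT0.le hint_lo hint_main hbound_lo
  have hle2 : (∫ s in (0:ℝ)..T, (f s + c) ^ (-(1:ℝ)/2)) ≤ π / (2 * Real.sqrt (a-ε)) := by
    rw [← sqrt_int_valueK (a-ε) T haε hT0]
    exact intervalIntegral.integral_mono_on hT0.le hint_main hint_up hbound_up
  rw [Real.dist_eq] at hub hlb ⊢
  rw [abs_lt] at hub hlb ⊢
  constructor
  · linarith [hlb.1]
  · linarith [hub.2]
end

section
/- Let ε, δ > 0, t₀ ∈ ℝ, let f : (t₀−ε, t₀+ε) → ℝ be smooth with f(t₀) = 0, f′(t₀) = 0 and f″(t₀) = −2a for some a > 0, and let g : (−δ, δ) × (t₀−ε, t₀+ε) → ℝ be continuous. Suppose that for every sufficiently small c > 0 there are t₁(c) < t₀ < t₂(c) with f(t₁(c)) + c = 0 = f(t₂(c)) + c, f(t) + c > 0 for all t ∈ (t₁(c), t₂(c)), and t₁(c) → t₀, t₂(c) → t₀ as c → 0⁺. Then lim_{c→0⁺} ∫_{t₁(c)}^{t₂(c)} g(c, t)/√(f(t)+c) dt = g(0, t₀)·π/√a. -/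
open Real Filter Set MeasureTheory intervalIntegral

lemma key_int (c tl tr : ℝ) (f φ φ' : ℝ → ℝ)
    (hlt : tl < tr) (hc : 0 < c)
    (hcont : ContinuousOn φ (Icc tl tr))
    (hmono : StrictMonoOn φ (Icc tl tr))
    (hder : ∀ t ∈ Ioo tl tr, HasDerivAt φ (φ' t) t)
    (hl : φ tl = -Real.sqrt c) (hr : φ tr = Real.sqrt c)
    (hsq : ∀ t ∈ Ioo tl tr, φ t ^ 2 = - f t)
    (hfc : ∀ t ∈ Ioo tl tr, 0 < f t + c)
    (hpp : ∀ t ∈ Ioo tl tr, 0 < φ' t) :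
    (∫ t in Ioo tl tr, φ' t / Real.sqrt (f t + c)) = Real.pi ∧
      IntegrableOn (fun t => φ' t / Real.sqrt (f t + c)) (Ioo tl tr) := by
  have hsc : 0 < Real.sqrt c := Real.sqrt_pos.2 hc
  set sc := Real.sqrt c with hscdef
  have hsc2 : sc ^ 2 = c := Real.sq_sqrt hc.le
  set θ : ℝ → ℝ := fun t => Real.arcsin (φ t / sc) with hθdef
  set θ' : ℝ → ℝ := fun t => φ' t / Real.sqrt (f t + c) with hθ'def
  -- bounds on φ t / sc
  have hx : ∀ t ∈ Ioo tl tr, φ t / sc ∈ Ioo (-1 : ℝ) 1 := by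
    intro t ht
    have h1 : φ t ^ 2 < c := by
      have := hfc t ht; have := hsq t ht; linarith
    have h2 : -sc < φ t ∧ φ t < sc := by constructor <;> nlinarith
    constructor
    · rw [lt_div_iff₀ hsc]; linarith
    · rw [div_lt_one hsc]; exact h2.2
  have hxc : ∀ t ∈ Icc tl tr, φ t / sc ∈ Icc (-1 : ℝ) 1 := by
    intro t ht
    have h1 : -sc ≤ φ t := by
      rw [← hl]; exact hmono.monotoneOn (left_mem_Icc.2 hlt.le) ht ht.1
    have h2 : φ t ≤ sc := by
      rw [← hr]; exact hmono.monotoneOn ht (right_mem_Icc.2 hlt.le) ht.2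
    constructor
    · rw [le_div_iff₀ hsc]; linarith
    · rw [div_le_one hsc]; exact h2
  -- derivative of θ
  have hder' : ∀ t ∈ Ioo tl tr, HasDerivWithinAt θ (θ' t) (Ioo tl tr) t := by
    intro t ht
    have hxt := hx t ht
    have h1 : HasDerivAt (fun y => φ y / sc) (φ' t / sc) t := (hder t ht).div_const sc
    have harc : HasDerivAt Real.arcsin (1 / Real.sqrt (1 - (φ t / sc) ^ 2)) (φ t / sc) :=
      Real.hasDerivAt_arcsin (ne_of_gt hxt.1) (ne_of_lt hxt.2)
    have h2 := harc.comp t h1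
    have hval : 1 / Real.sqrt (1 - (φ t / sc) ^ 2) * (φ' t / sc) = θ' t := by
      have he : 1 - (φ t / sc) ^ 2 = (f t + c) / c := by
        rw [div_pow, hsq t ht, hsc2]; field_simp; ring
      rw [he, Real.sqrt_div (by have := hfc t ht; linarith) c]
      have h3 : 0 < Real.sqrt (f t + c) := Real.sqrt_pos.2 (hfc t ht)
      rw [hθ'def]
      field_simp
      ring
    rw [← hval]
    exact h2.hasDerivWithinAt
  -- strict monotonicity and injectivity of θ
  have hmonoθ : StrictMonoOn θ (Icc tl tr) := by
    intro x hxm y hym hxy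
    exact Real.strictMonoOn_arcsin (hxc x hxm) (hxc y hym)
      (div_lt_div_of_pos_right (hmono hxm hym hxy) hsc)
  have hinj : InjOn θ (Ioo tl tr) :=
    (hmonoθ.mono Ioo_subset_Icc_self).injOn
  -- image of θ
  have hθl : θ tl = -(Real.pi / 2) := by
    rw [hθdef]; simp only [hl, neg_div, div_self (ne_of_gt hsc)]
    exact Real.arcsin_neg_one
  have hθr : θ tr = Real.pi / 2 := by
    rw [hθdef]; simp only [hr, div_self (ne_of_gt hsc)]
    exact Real.arcsin_one
  have hcontθ : ContinuousOn θ (Icc tl tr) :=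
    Real.continuous_arcsin.comp_continuousOn (hcont.div_const sc)
  have himg : θ '' Ioo tl tr = Ioo (-(Real.pi / 2)) (Real.pi / 2) := by
    apply Subset.antisymm
    · rintro _ ⟨t, ht, rfl⟩
      exact ⟨Real.neg_pi_div_two_lt_arcsin.2 (hx t ht).1,
        Real.arcsin_lt_pi_div_two.2 (hx t ht).2⟩
    · have h := intermediate_value_Ioo hlt.le hcontθ
      rw [hθl, hθr] at h; exact h
  have habs : ∀ t ∈ Ioo tl tr, |θ' t| • (1 : ℝ) = θ' t := by
    intro t ht
    have : 0 < θ' t := div_pos (hpp t ht) (Real.sqrt_pos.2 (hfc t ht))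
    rw [smul_eq_mul, mul_one, abs_of_pos this]
  constructor
  · have hchg := MeasureTheory.integral_image_eq_integral_abs_deriv_smul
      measurableSet_Ioo hder' hinj (fun _ => (1 : ℝ))
    rw [himg] at hchg
    have hLHS : (∫ _ in Ioo (-(Real.pi / 2)) (Real.pi / 2), (1 : ℝ)) = Real.pi := by
      rw [MeasureTheory.setIntegral_const, smul_eq_mul, mul_one, measureReal_def, Real.volume_Ioo,
        ENNReal.toReal_ofReal (by linarith [Real.pi_pos])]
      ring
    calc (∫ t in Ioo tl tr, θ' t) = ∫ t in Ioo tl tr, |θ' t| • (1 : ℝ) :=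
          MeasureTheory.setIntegral_congr_fun measurableSet_Ioo (fun t ht => (habs t ht).symm)
      _ = Real.pi := by rw [← hchg, hLHS]
  · have hInt := (MeasureTheory.integrableOn_image_iff_integrableOn_abs_deriv_smul
      measurableSet_Ioo hder' hinj (fun _ => (1 : ℝ))).1
      (by rw [himg]; exact integrableOn_const measure_Ioo_lt_top.ne)
    exact hInt.congr_fun habs measurableSet_Ioo

set_option maxHeartbeats 2000000 in
/-- If `f` is smooth near `t₀` with `f t₀ = 0`, `f' t₀ = 0`,
`f'' t₀ = −2a < 0`, `g` is continuous near `(0, t₀)`, and `t₁ c < t₀ < t₂ c` are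
roots of `f + c` between which `f + c > 0`, with `t₁ c, t₂ c → t₀` as `c → 0⁺`, then
`∫_{t₁ c}^{t₂ c} g c s / √(f s + c) ds → g 0 t₀ · π / √a` as `c → 0⁺`. -/
theorem stmt_1 (ε δ t₀ a c₀ : ℝ) (hε : 0 < ε) (hδ : 0 < δ) (ha : 0 < a) (hc₀ : 0 < c₀)
    (f : ℝ → ℝ) (g : ℝ → ℝ → ℝ) (t₁ t₂ : ℝ → ℝ)
    (hf : ContDiffOn ℝ (⊤ : ℕ∞) f (Set.Ioo (t₀ - ε) (t₀ + ε)))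
    (hg : ContinuousOn (fun p : ℝ × ℝ => g p.1 p.2)
      (Set.Ioo (-δ) δ ×ˢ Set.Ioo (t₀ - ε) (t₀ + ε)))
    (hf0 : f t₀ = 0) (hf' : deriv f t₀ = 0) (hf'' : deriv (deriv f) t₀ = -(2 * a))
    (horder : ∀ c ∈ Set.Ioo 0 c₀, t₁ c < t₀ ∧ t₀ < t₂ c)
    (hroot : ∀ c ∈ Set.Ioo 0 c₀, f (t₁ c) + c = 0 ∧ f (t₂ c) + c = 0)
    (hpos : ∀ c ∈ Set.Ioo 0 c₀, ∀ s ∈ Set.Ioo (t₁ c) (t₂ c), 0 < f s + c)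
    (hl1 : Filter.Tendsto t₁ (nhdsWithin 0 (Set.Ioi 0)) (nhds t₀))
    (hl2 : Filter.Tendsto t₂ (nhdsWithin 0 (Set.Ioi 0)) (nhds t₀)) :
    Filter.Tendsto (fun c => ∫ s in (t₁ c)..(t₂ c), g c s / Real.sqrt (f s + c))
      (nhdsWithin 0 (Set.Ioi 0)) (nhds (g 0 t₀ * Real.pi / Real.sqrt a)) := by
  have hBopen : IsOpen (Ioo (t₀ - ε) (t₀ + ε)) := isOpen_Ioo
  have ht₀B : t₀ ∈ Ioo (t₀ - ε) (t₀ + ε) := ⟨by linarith, by linarith⟩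
  -- basic differentiability facts
  have hd1 : ∀ t ∈ Ioo (t₀ - ε) (t₀ + ε), HasDerivAt f (deriv f t) t := fun t ht =>
    ((hf.contDiffAt (hBopen.mem_nhds ht)).differentiableAt (by simp)).hasDerivAt
  have hfd1 : ContDiffOn ℝ 1 (deriv f) (Ioo (t₀ - ε) (t₀ + ε)) :=
    hf.deriv_of_isOpen hBopen (WithTop.coe_le_coe.2 le_top)
  have hd2 : ∀ t ∈ Ioo (t₀ - ε) (t₀ + ε), HasDerivAt (deriv f) (deriv (deriv f) t) t := fun t ht =>
    ((hfd1.contDiffAt (hBopen.mem_nhds ht)).differentiableAt one_ne_zero).hasDerivAt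
  have hc2 : ContinuousOn (deriv (deriv f)) (Ioo (t₀ - ε) (t₀ + ε)) :=
    hfd1.continuousOn_deriv_of_isOpen hBopen le_rfl
  -- choose a small radius r on which f'' < 0
  have hcont2 : ContinuousAt (deriv (deriv f)) t₀ := hc2.continuousAt (hBopen.mem_nhds ht₀B)
  have hev : ∀ᶠ t in nhds t₀, deriv (deriv f) t < 0 ∧ t ∈ Ioo (t₀ - ε) (t₀ + ε) := by
    have h1 : ∀ᶠ t in nhds t₀, deriv (deriv f) t < 0 :=
      hcont2 (Iio_mem_nhds (show deriv (deriv f) t₀ < 0 by rw [hf'']; linarith))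
    exact h1.and (hBopen.mem_nhds ht₀B |> eventually_of_mem <| fun x hx => hx)
  obtain ⟨r', hr', hball⟩ := Metric.eventually_nhds_iff_ball.1 hev
  set r := r' / 2 with hrdef
  have hrpos : 0 < r := by positivity
  have hJcsub : Icc (t₀ - r) (t₀ + r) ⊆ Metric.ball t₀ r' := by
    intro t ht
    rw [Metric.mem_ball, Real.dist_eq, abs_lt]
    obtain ⟨h1, h2⟩ := ht
    constructor <;> [linarith; linarith]
  have hJcB : Icc (t₀ - r) (t₀ + r) ⊆ Ioo (t₀ - ε) (t₀ + ε) := fun t ht => (hball _ (hJcsub ht)).2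
  have hneg : ∀ t ∈ Icc (t₀ - r) (t₀ + r), deriv (deriv f) t < 0 := fun t ht =>
    (hball _ (hJcsub ht)).1
  have ht₀J : t₀ ∈ Icc (t₀ - r) (t₀ + r) := ⟨by linarith, by linarith⟩
  -- sign of f' on Jc
  have hf'anti : StrictAntiOn (deriv f) (Icc (t₀ - r) (t₀ + r)) := by
    apply strictAntiOn_of_deriv_neg (convex_Icc _ _) (hfd1.continuousOn.mono hJcB)
    intro t ht
    rw [interior_Icc] at ht
    exact hneg t (Ioo_subset_Icc_self ht)
  have hf'pos : ∀ t ∈ Icc (t₀ - r) (t₀ + r), t < t₀ → 0 < deriv f t := by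
    intro t ht h
    have := hf'anti ht ht₀J h
    rw [hf'] at this; linarith
  have hf'neg : ∀ t ∈ Icc (t₀ - r) (t₀ + r), t₀ < t → deriv f t < 0 := by
    intro t ht h
    have := hf'anti ht₀J ht h
    rw [hf'] at this; linarith
  -- f < 0 away from t₀ on Jc
  have hfneg : ∀ t ∈ Icc (t₀ - r) (t₀ + r), t ≠ t₀ → f t < 0 := by
    intro t ht hne
    rcases lt_or_gt_of_ne hne with h | h
    · have hmono : StrictMonoOn f (Icc (t₀ - r) t₀) := by
        apply strictMonoOn_of_deriv_pos (convex_Icc _ _)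
        · exact (hf.continuousOn.mono (fun x hx => hJcB ⟨hx.1, by linarith [hx.2]⟩))
        · intro x hx
          rw [interior_Icc] at hx
          exact (hd1 x (hJcB ⟨hx.1.le, by linarith [hx.2]⟩)).deriv ▸
            hf'pos x ⟨hx.1.le, by linarith [hx.2]⟩ hx.2
      have := hmono ⟨ht.1, h.le⟩ ⟨by linarith, le_refl t₀⟩ h
      rw [hf0] at this; exact this
    · have hmono : StrictAntiOn f (Icc t₀ (t₀ + r)) := by
        apply strictAntiOn_of_deriv_neg (convex_Icc _ _)
        · exact (hf.continuousOn.mono (fun x hx => hJcB ⟨by linarith [hx.1], hx.2⟩))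
        · intro x hx
          rw [interior_Icc] at hx
          exact (hd1 x (hJcB ⟨by linarith [hx.1], hx.2.le⟩)).deriv ▸
            hf'neg x ⟨by linarith [hx.1], hx.2.le⟩ hx.1
      have := hmono ⟨le_refl t₀, by linarith⟩ ⟨h.le, ht.2⟩ h
      rw [hf0] at this; exact this
  have hfle : ∀ t ∈ Icc (t₀ - r) (t₀ + r), f t ≤ 0 := by
    intro t ht
    rcases eq_or_ne t t₀ with h | h
    · rw [h, hf0]
    · exact (hfneg t ht h).le
  -- definition of φ and φ'
  set φ : ℝ → ℝ := fun t => if t < t₀ then -Real.sqrt (-f t) else Real.sqrt (-f t) with hφdef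
  set φ' : ℝ → ℝ := fun t =>
    if t = t₀ then Real.sqrt a else |deriv f t| / (2 * Real.sqrt (-f t)) with hφ'def
  have hφt₀ : φ t₀ = 0 := by
    rw [hφdef]; simp [hf0]
  have hφ't₀ : φ' t₀ = Real.sqrt a := by rw [hφ'def]; simp
  have hφsq : ∀ t ∈ Icc (t₀ - r) (t₀ + r), φ t ^ 2 = -f t := by
    intro t ht
    have h := hfle t ht
    by_cases hlt : t < t₀
    · simp only [hφdef, hlt, if_true]
      rw [show (-Real.sqrt (-f t)) ^ 2 = Real.sqrt (-f t) ^ 2 from by ring,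
        Real.sq_sqrt (by linarith)]
    · simp only [hφdef, hlt, if_false]
      rw [Real.sq_sqrt (by linarith)]
  -- derivative of φ away from t₀
  have hd : ∀ t ∈ Icc (t₀ - r) (t₀ + r), t ≠ t₀ → HasDerivAt φ (φ' t) t := by
    intro t ht hne
    have hft : f t < 0 := hfneg t ht hne
    have hsq : HasDerivAt (fun y => Real.sqrt (-f y))
        (-deriv f t / (2 * Real.sqrt (-f t))) t :=
      HasDerivAt.sqrt ((hd1 t (hJcB ht)).neg) (by linarith)
    rcases lt_or_gt_of_ne hne with h | h
    · -- t < t₀ : φ = -√(-f ·) near t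
      have hev : φ =ᶠ[nhds t] fun y => -Real.sqrt (-f y) := by
        filter_upwards [Iio_mem_nhds h] with y hy
        have hy' : y < t₀ := hy
        simp only [hφdef]; rw [if_pos hy']
      have h2 : HasDerivAt φ (-(-deriv f t / (2 * Real.sqrt (-f t)))) t :=
        hsq.neg.congr_of_eventuallyEq hev
      convert h2 using 1
      rw [hφ'def]
      simp only [hne, if_false]
      rw [abs_of_pos (hf'pos t ht h)]
      ring
    · -- t > t₀ : φ = √(-f ·) near t
      have hev : φ =ᶠ[nhds t] fun y => Real.sqrt (-f y) := by
        filter_upwards [Ioi_mem_nhds h] with y hy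
        have hy' : ¬ y < t₀ := not_lt.2 (le_of_lt hy)
        simp only [hφdef]; rw [if_neg hy']
      have h2 : HasDerivAt φ (-deriv f t / (2 * Real.sqrt (-f t))) t :=
        hsq.congr_of_eventuallyEq hev
      convert h2 using 1
      rw [hφ'def]
      simp only [hne, if_false]
      rw [abs_of_neg (hf'neg t ht h)]
  -- limit facts
  have hslope2 : Tendsto (fun t => deriv f t / (t - t₀)) (nhdsWithin t₀ {t₀}ᶜ)
      (nhds (-(2 * a))) := by
    have h := hasDerivAt_iff_tendsto_slope.1 (hd2 t₀ ht₀B)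
    rw [hf''] at h
    apply h.congr
    intro t
    simp [slope_def_field, hf', div_eq_div_iff]
  have hfa2 : Tendsto (fun t => f t / (t - t₀) ^ 2) (nhdsWithin t₀ {t₀}ᶜ) (nhds (-a)) := by
    have hBmem : Ioo (t₀ - ε) (t₀ + ε) ∈ nhds t₀ := hBopen.mem_nhds ht₀B
    apply HasDerivAt.lhopital_zero_nhdsNE (f' := deriv f) (g' := fun t => 2 * (t - t₀))
    · filter_upwards [mem_nhdsWithin_of_mem_nhds hBmem] with t ht
      exact hd1 t ht
    · filter_upwards with t
      simpa using (((hasDerivAt_id t).sub_const t₀).fun_pow 2)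
    · filter_upwards [self_mem_nhdsWithin] with t (ht : t ≠ t₀)
      intro hcon
      apply ht
      have : t - t₀ = 0 := by linarith
      linarith
    · have hfc : ContinuousAt f t₀ := (hd1 t₀ ht₀B).continuousAt
      have := hfc.tendsto
      rw [hf0] at this
      exact this.mono_left nhdsWithin_le_nhds
    · have : Tendsto (fun t : ℝ => (t - t₀) ^ 2) (nhds t₀) (nhds ((t₀ - t₀) ^ 2)) := by
        exact ((continuous_id.sub continuous_const).pow 2).continuousAt
      simp only [sub_self] at this
      norm_num at this
      exact this.mono_left nhdsWithin_le_nhds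
    · have h2 : Tendsto (fun t => deriv f t / (t - t₀) / 2) (nhdsWithin t₀ {t₀}ᶜ)
          (nhds (-(2 * a) / 2)) := hslope2.div_const 2
      have h3 : -(2 * a) / 2 = -a := by ring
      rw [h3] at h2
      apply h2.congr
      intro t
      rw [div_div, mul_comm]
  have hsqlim : Tendsto (fun t => Real.sqrt (-(f t / (t - t₀) ^ 2))) (nhdsWithin t₀ {t₀}ᶜ)
      (nhds (Real.sqrt a)) := by
    have h1 : Tendsto (fun t => -(f t / (t - t₀) ^ 2)) (nhdsWithin t₀ {t₀}ᶜ) (nhds a) := by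
      have := hfa2.neg; rwa [neg_neg] at this
    exact (Real.continuous_sqrt.continuousAt.tendsto.comp h1)
  have hsa : 0 < Real.sqrt a := Real.sqrt_pos.2 ha
  have hJmem : Ioo (t₀ - r) (t₀ + r) ∈ nhds t₀ := isOpen_Ioo.mem_nhds ⟨by linarith, by linarith⟩
  -- φ' expressed through the normalized quantities, for t ≠ t₀ near t₀
  have hφ'eq : ∀ t ∈ Ioo (t₀ - r) (t₀ + r), t ≠ t₀ →
      φ' t = |deriv f t / (t - t₀)| / (2 * Real.sqrt (-(f t / (t - t₀) ^ 2))) := by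
    intro t ht hne
    have hu : t - t₀ ≠ 0 := sub_ne_zero.2 hne
    have huabs : 0 < |t - t₀| := abs_pos.2 hu
    have hft : f t < 0 := hfneg t (Ioo_subset_Icc_self ht) hne
    have hq : 0 < -(f t / (t - t₀) ^ 2) := by
      have : f t / (t - t₀) ^ 2 < 0 := div_neg_of_neg_of_pos hft (by positivity)
      linarith
    have h1 : Real.sqrt (-f t) = Real.sqrt (-(f t / (t - t₀) ^ 2)) * |t - t₀| := by
      rw [← Real.sqrt_sq_eq_abs, ← Real.sqrt_mul hq.le]
      congr 1
      field_simp
    rw [hφ'def]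
    simp only [hne, if_false]
    rw [h1, abs_div]
    ring
  -- φ' tends to √a at t₀
  have hφ'lim : Tendsto φ' (nhds t₀) (nhds (Real.sqrt a)) := by
    rw [← nhdsNE_sup_pure t₀]
    rw [tendsto_sup]
    constructor
    · have hlim : Tendsto (fun t => |deriv f t / (t - t₀)| /
          (2 * Real.sqrt (-(f t / (t - t₀) ^ 2)))) (nhdsWithin t₀ {t₀}ᶜ)
          (nhds (|(-(2 * a))| / (2 * Real.sqrt a))) := by
        apply Tendsto.div hslope2.abs (by
          exact (tendsto_const_nhds.mul hsqlim))
        positivity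
      have hval : |(-(2 * a))| / (2 * Real.sqrt a) = Real.sqrt a := by
        rw [abs_of_neg (by linarith : -(2 * a) < 0), neg_neg]
        rw [div_eq_iff (by positivity)]
        nlinarith [Real.sq_sqrt ha.le]
      rw [hval] at hlim
      apply hlim.congr'
      filter_upwards [mem_nhdsWithin_of_mem_nhds hJmem, self_mem_nhdsWithin]
        with t ht (hne : t ≠ t₀)
      exact (hφ'eq t ht hne).symm
    · rw [tendsto_pure_left]
      intro s hs
      rw [hφ't₀]
      exact mem_of_mem_nhds hs |> fun h => h
  -- derivative of φ at t₀
  have hd0 : HasDerivAt φ (Real.sqrt a) t₀ := by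
    rw [hasDerivAt_iff_tendsto_slope]
    apply hsqlim.congr'
    filter_upwards [mem_nhdsWithin_of_mem_nhds hJmem, self_mem_nhdsWithin]
      with t ht (hne : t ≠ t₀)
    have hu : t - t₀ ≠ 0 := sub_ne_zero.2 hne
    have hft : f t < 0 := hfneg t (Ioo_subset_Icc_self ht) hne
    have hq : 0 < -(f t / (t - t₀) ^ 2) := by
      have : f t / (t - t₀) ^ 2 < 0 := div_neg_of_neg_of_pos hft (by positivity)
      linarith
    have h1 : Real.sqrt (-f t) = Real.sqrt (-(f t / (t - t₀) ^ 2)) * |t - t₀| := by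
      rw [← Real.sqrt_sq_eq_abs, ← Real.sqrt_mul hq.le]
      congr 1
      field_simp
    rw [slope_def_field, hφt₀, sub_zero]
    rcases lt_or_gt_of_ne hne with h | h
    · have : φ t = -Real.sqrt (-f t) := by simp only [hφdef]; rw [if_pos h]
      rw [this, h1, abs_of_neg (by linarith : t - t₀ < 0)]
      field_simp
    · have : φ t = Real.sqrt (-f t) := by
        simp only [hφdef]; rw [if_neg (not_lt.2 h.le)]
      rw [this, h1, abs_of_pos (by linarith : 0 < t - t₀)]
      field_simp
  -- continuity of φ on Jc
  have hφcont : ContinuousOn φ (Icc (t₀ - r) (t₀ + r)) := by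
    intro t ht
    apply ContinuousAt.continuousWithinAt
    rcases eq_or_ne t t₀ with h | h
    · subst h
      exact hd0.continuousAt
    · exact (hd t ht h).continuousAt
  -- strict monotonicity of φ on Jc
  have hφmono : StrictMonoOn φ (Icc (t₀ - r) (t₀ + r)) := by
    apply strictMonoOn_of_deriv_pos (convex_Icc _ _) hφcont
    intro t ht
    rw [interior_Icc] at ht
    rcases eq_or_ne t t₀ with h | h
    · subst h
      rw [hd0.deriv]
      exact hsa
    · rw [(hd t (Ioo_subset_Icc_self ht) h).deriv]
      simp only [hφ'def, h, if_false]
      have hfn := hfneg t (Ioo_subset_Icc_self ht) h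
      have h2 : 0 < Real.sqrt (-f t) := Real.sqrt_pos.2 (by linarith)
      have h3 : deriv f t ≠ 0 := by
        rcases lt_or_gt_of_ne h with h2' | h2'
        · exact ne_of_gt (hf'pos t (Ioo_subset_Icc_self ht) h2')
        · exact ne_of_lt (hf'neg t (Ioo_subset_Icc_self ht) h2')
      exact div_pos (abs_pos.2 h3) (by linarith)
  -- combined derivative on Jc
  have hdAll : ∀ t ∈ Icc (t₀ - r) (t₀ + r), HasDerivAt φ (φ' t) t := by
    intro t ht
    rcases eq_or_ne t t₀ with h | h
    · subst h; rw [hφ't₀]; exact hd0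
    · exact hd t ht h
  -- positivity of φ' on Jc
  have hφ'posAll : ∀ t ∈ Icc (t₀ - r) (t₀ + r), 0 < φ' t := by
    intro t ht
    rcases eq_or_ne t t₀ with h | h
    · subst h; rw [hφ't₀]; exact hsa
    · simp only [hφ'def, h, if_false]
      have hfn := hfneg t ht h
      have h2 : 0 < Real.sqrt (-f t) := Real.sqrt_pos.2 (by linarith)
      have h3 : deriv f t ≠ 0 := by
        rcases lt_or_gt_of_ne h with h2' | h2'
        · exact ne_of_gt (hf'pos t ht h2')
        · exact ne_of_lt (hf'neg t ht h2')
      exact div_pos (abs_pos.2 h3) (by linarith)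
  -- main estimate
  set g0 := g 0 t₀ with hg0def
  rw [Metric.tendsto_nhds]
  intro η hη
  set η' := η / 4 with hη'def
  have hη'pos : 0 < η' := by positivity
  have hmemp : ((0 : ℝ), t₀) ∈ Ioo (-δ) δ ×ˢ Ioo (t₀ - ε) (t₀ + ε) := by
    refine ⟨?_, ht₀B⟩
    show (0 : ℝ) ∈ Ioo (-δ) δ
    constructor <;> [linarith; linarith]
  have hgc : ContinuousAt (fun p : ℝ × ℝ => g p.1 p.2) (0, t₀) :=
    hg.continuousAt ((isOpen_Ioo.prod isOpen_Ioo).mem_nhds hmemp)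
  set η₂ := η' * Real.sqrt a / 4 with hη₂def
  have hη₂pos : 0 < η₂ := by positivity
  obtain ⟨ρ₂, hρ₂pos, hρ₂⟩ := Metric.continuousAt_iff.1 hgc η₂ hη₂pos
  set η₁ := min (Real.sqrt a / 2) (η' * a / (4 * (|g0| + 1))) with hη₁def
  have hη₁pos : 0 < η₁ := lt_min (by positivity) (by positivity)
  obtain ⟨ρ₁, hρ₁pos, hρ₁⟩ :=
    Metric.eventually_nhds_iff.1 (Metric.tendsto_nhds.1 hφ'lim η₁ hη₁pos)
  set ρ := min ρ₁ (min ρ₂ r) with hρdef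
  have hρpos : 0 < ρ := lt_min hρ₁pos (lt_min hρ₂pos hrpos)
  have hρr : ρ ≤ r := le_trans (min_le_right _ _) (min_le_right _ _)
  have hρρ₁ : ρ ≤ ρ₁ := min_le_left _ _
  have hρρ₂ : ρ ≤ ρ₂ := le_trans (min_le_right _ _) (min_le_left _ _)
  have E2 : ∀ᶠ c in nhdsWithin 0 (Ioi 0), c < min c₀ (min δ ρ) :=
    mem_nhdsWithin_of_mem_nhds (Iio_mem_nhds (lt_min hc₀ (lt_min hδ hρpos)))
  have E3 : ∀ᶠ c in nhdsWithin 0 (Ioi 0), dist (t₁ c) t₀ < ρ :=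
    hl1 (Metric.ball_mem_nhds t₀ hρpos)
  have E4 : ∀ᶠ c in nhdsWithin 0 (Ioi 0), dist (t₂ c) t₀ < ρ :=
    hl2 (Metric.ball_mem_nhds t₀ hρpos)
  filter_upwards [self_mem_nhdsWithin, E2, E3, E4] with c hc1 hcm h3 h4
  have hcpos : 0 < c := hc1
  have hcc₀ : c < c₀ := lt_of_lt_of_le hcm (min_le_left _ _)
  have hcδ : c < δ := lt_of_lt_of_le hcm (le_trans (min_le_right _ _) (min_le_left _ _))
  have hcρ : c < ρ := lt_of_lt_of_le hcm (le_trans (min_le_right _ _) (min_le_right _ _))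
  have hmem : c ∈ Ioo 0 c₀ := ⟨hcpos, hcc₀⟩
  obtain ⟨ho1, ho2⟩ := horder c hmem
  obtain ⟨hr1, hr2⟩ := hroot c hmem
  have hps := hpos c hmem
  set tl := t₁ c with htldef
  set tr := t₂ c with htrdef
  have hlt : tl < tr := ho1.trans ho2
  rw [Real.dist_eq, abs_lt] at h3 h4
  have hIccsub : ∀ t ∈ Icc tl tr, |t - t₀| < ρ := by
    intro t ht
    rw [abs_lt]
    obtain ⟨ha1, ha2⟩ := ht
    constructor <;> linarith
  have hIccJc : Icc tl tr ⊆ Icc (t₀ - r) (t₀ + r) := by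
    intro t ht
    have := hIccsub t ht
    rw [abs_lt] at this
    constructor <;> [linarith [hρr]; linarith [hρr]]
  -- apply the key integral lemma
  have hsub' : ∀ t ∈ Ioo tl tr, t ∈ Icc (t₀ - r) (t₀ + r) :=
    fun t ht => hIccJc (Ioo_subset_Icc_self ht)
  have hφl : φ tl = -Real.sqrt c := by
    simp only [hφdef]
    rw [if_pos ho1, show -f tl = c from by linarith]
  have hφr : φ tr = Real.sqrt c := by
    simp only [hφdef]
    rw [if_neg (not_lt.2 ho2.le), show -f tr = c from by linarith]
  obtain ⟨hKey, hKeyInt⟩ := key_int c tl tr f φ φ' hlt hcpos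
    (hφcont.mono hIccJc) (hφmono.mono hIccJc)
    (fun t ht => hdAll t (hsub' t ht)) hφl hφr
    (fun t ht => hφsq t (hsub' t ht)) hps
    (fun t ht => hφ'posAll t (hsub' t ht))
  -- pointwise bounds on the interval
  have hb1 : ∀ t ∈ Icc tl tr, |φ' t - Real.sqrt a| < η₁ := by
    intro t ht
    have := hρ₁ (show dist t t₀ < ρ₁ from lt_of_lt_of_le
      (by rw [Real.dist_eq]; exact hIccsub t ht) hρρ₁)
    rwa [Real.dist_eq] at this
  have hφ'lb : ∀ t ∈ Icc tl tr, Real.sqrt a / 2 ≤ φ' t := by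
    intro t ht
    have h1 := hb1 t ht
    have h2 : η₁ ≤ Real.sqrt a / 2 := min_le_left _ _
    rw [abs_lt] at h1
    linarith
  have hb2 : ∀ t ∈ Icc tl tr, |g c t - g0| < η₂ := by
    intro t ht
    have hd2' : dist ((c, t) : ℝ × ℝ) (0, t₀) < ρ₂ := by
      rw [Prod.dist_eq]
      apply max_lt
      · rw [Real.dist_eq, sub_zero, abs_of_pos hcpos]; linarith
      · rw [Real.dist_eq]; exact lt_of_lt_of_le (hIccsub t ht) hρρ₂
    have := hρ₂ hd2'
    rwa [Real.dist_eq] at this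
  have hpt : ∀ t ∈ Icc tl tr, |g c t - g0 / Real.sqrt a * φ' t| ≤ η' * φ' t := by
    intro t ht
    have h1 := hb1 t ht
    have h2 := hb2 t ht
    have h3' := hφ'lb t ht
    have hη₁b : η₁ ≤ η' * a / (4 * (|g0| + 1)) := min_le_right _ _
    have key2 : |g0 / Real.sqrt a| * |Real.sqrt a - φ' t| ≤ η' * Real.sqrt a / 4 := by
      rw [abs_div, abs_of_pos hsa, abs_sub_comm]
      calc |g0| / Real.sqrt a * |φ' t - Real.sqrt a|
          ≤ |g0| / Real.sqrt a * (η' * a / (4 * (|g0| + 1))) := by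
            apply mul_le_mul_of_nonneg_left (le_trans h1.le hη₁b) (by positivity)
        _ = η' * Real.sqrt a * (|g0| / (|g0| + 1)) / 4 := by
            have hne1 : Real.sqrt a ≠ 0 := ne_of_gt hsa
            have hne2 : |g0| + 1 ≠ 0 := by positivity
            field_simp
            ring_nf
            rw [Real.sq_sqrt ha.le]
        _ ≤ η' * Real.sqrt a * 1 / 4 := by
            have hd1' : |g0| / (|g0| + 1) ≤ 1 := by
              rw [div_le_one (by positivity)]
              linarith [abs_nonneg g0]
            have := mul_le_mul_of_nonneg_left hd1' (by positivity : (0:ℝ) ≤ η' * Real.sqrt a)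
            linarith
        _ = η' * Real.sqrt a / 4 := by ring
    calc |g c t - g0 / Real.sqrt a * φ' t|
        = |(g c t - g0) + g0 / Real.sqrt a * (Real.sqrt a - φ' t)| := by
          rw [mul_sub, div_mul_cancel₀ g0 (ne_of_gt hsa)]
          ring_nf
      _ ≤ |g c t - g0| + |g0 / Real.sqrt a * (Real.sqrt a - φ' t)| := abs_add_le _ _
      _ ≤ η₂ + η' * Real.sqrt a / 4 := by
          rw [abs_mul]
          exact add_le_add h2.le key2
      _ = η' * Real.sqrt a / 2 := by rw [hη₂def]; ring
      _ ≤ η' * φ' t := by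
          have := mul_le_mul_of_nonneg_left h3' hη'pos.le
          linarith
  -- integrability
  have hsqrtpos : ∀ t ∈ Ioo tl tr, 0 < Real.sqrt (f t + c) :=
    fun t ht => Real.sqrt_pos.2 (hps t ht)
  have hgcont : ContinuousOn (fun t => g c t) (Ioo tl tr) := by
    have hmap : MapsTo (fun t => ((c : ℝ), t)) (Ioo tl tr)
        (Ioo (-δ) δ ×ˢ Ioo (t₀ - ε) (t₀ + ε)) := by
      intro t ht
      exact ⟨⟨by linarith, hcδ⟩, hJcB (hsub' t ht)⟩
    exact hg.comp ((continuous_const.prodMk continuous_id).continuousOn) hmap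
  have hfcont : ContinuousOn (fun t => Real.sqrt (f t + c)) (Ioo tl tr) := by
    apply Real.continuous_sqrt.comp_continuousOn
    exact (hf.continuousOn.mono (fun t ht => hJcB (hsub' t ht))).add continuousOn_const
  have hIg : IntegrableOn (fun t => g c t / Real.sqrt (f t + c)) (Ioo tl tr) := by
    apply MeasureTheory.Integrable.mono'
      (hKeyInt.const_mul ((|g0| + η₂) * (2 / Real.sqrt a)))
    · exact (hgcont.div hfcont (fun t ht => ne_of_gt (hsqrtpos t ht))).aestronglyMeasurable
        measurableSet_Ioo
    · filter_upwards [MeasureTheory.self_mem_ae_restrict measurableSet_Ioo] with t ht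
      have hsp := hsqrtpos t ht
      have hgb : |g c t| ≤ |g0| + η₂ := by
        have := hb2 t (Ioo_subset_Icc_self ht)
        have := abs_sub_abs_le_abs_sub (g c t) g0
        linarith
      have hlb := hφ'lb t (Ioo_subset_Icc_self ht)
      have h1 : 1 ≤ 2 / Real.sqrt a * φ' t := by
        rw [div_mul_eq_mul_div, le_div_iff₀ hsa]
        linarith
      have hnum : |g c t| ≤ (|g0| + η₂) * (2 / Real.sqrt a) * φ' t := by
        calc |g c t| ≤ |g0| + η₂ := hgb
          _ = (|g0| + η₂) * 1 := (mul_one _).symm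
          _ ≤ (|g0| + η₂) * (2 / Real.sqrt a * φ' t) :=
              mul_le_mul_of_nonneg_left h1 (by positivity)
          _ = (|g0| + η₂) * (2 / Real.sqrt a) * φ' t := by ring
      rw [Real.norm_eq_abs, abs_div, abs_of_pos hsp]
      calc |g c t| / Real.sqrt (f t + c)
          ≤ ((|g0| + η₂) * (2 / Real.sqrt a) * φ' t) / Real.sqrt (f t + c) := by
            gcongr
        _ = (|g0| + η₂) * (2 / Real.sqrt a) * (φ' t / Real.sqrt (f t + c)) := by ring
  have hIconst : IntegrableOn (fun t => g0 / Real.sqrt a * (φ' t / Real.sqrt (f t + c)))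
      (Ioo tl tr) := hKeyInt.const_mul _
  -- the final computation
  rw [Real.dist_eq]
  have hIeq : (∫ s in tl..tr, g c s / Real.sqrt (f s + c))
      = ∫ t in Ioo tl tr, g c t / Real.sqrt (f t + c) := by
    rw [intervalIntegral.integral_of_le hlt.le, MeasureTheory.integral_Ioc_eq_integral_Ioo]
  have hLeq : g0 * Real.pi / Real.sqrt a
      = ∫ t in Ioo tl tr, g0 / Real.sqrt a * (φ' t / Real.sqrt (f t + c)) := by
    rw [MeasureTheory.integral_const_mul, hKey]
    ring
  rw [hIeq, hLeq, ← MeasureTheory.integral_sub hIg hIconst]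
  calc |∫ t in Ioo tl tr, (g c t / Real.sqrt (f t + c)
          - g0 / Real.sqrt a * (φ' t / Real.sqrt (f t + c)))|
      ≤ ∫ t in Ioo tl tr, |g c t / Real.sqrt (f t + c)
          - g0 / Real.sqrt a * (φ' t / Real.sqrt (f t + c))| := by
        have := MeasureTheory.norm_integral_le_integral_norm
          (μ := volume.restrict (Ioo tl tr)) (fun t => g c t / Real.sqrt (f t + c)
            - g0 / Real.sqrt a * (φ' t / Real.sqrt (f t + c)))
        simpa [Real.norm_eq_abs] using this
    _ ≤ ∫ t in Ioo tl tr, η' * (φ' t / Real.sqrt (f t + c)) := by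
        apply MeasureTheory.setIntegral_mono_on ((hIg.sub hIconst).abs)
          (hKeyInt.const_mul η') measurableSet_Ioo
        intro t ht
        have hsp := hsqrtpos t ht
        simp only [Pi.sub_apply]
        have heq : g c t / Real.sqrt (f t + c)
            - g0 / Real.sqrt a * (φ' t / Real.sqrt (f t + c))
            = (g c t - g0 / Real.sqrt a * φ' t) / Real.sqrt (f t + c) := by ring
        rw [heq, abs_div, abs_of_pos hsp]
        calc |g c t - g0 / Real.sqrt a * φ' t| / Real.sqrt (f t + c)
            ≤ (η' * φ' t) / Real.sqrt (f t + c) := by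
              gcongr
              exact hpt t (Ioo_subset_Icc_self ht)
          _ = η' * (φ' t / Real.sqrt (f t + c)) := by ring
    _ = η' * Real.pi := by rw [MeasureTheory.integral_const_mul, hKey]
    _ < η := by
        have hπ : Real.pi < 4 := by linarith [Real.pi_lt_d2]
        rw [hη'def]
        calc η / 4 * Real.pi < η / 4 * 4 :=
              mul_lt_mul_of_pos_left hπ (by positivity)
          _ = η := by ring
end

section
/- Let n ≥ 2 be an integer, H ≥ 0 and C real, and define q(v) = C − v^{2−2n} − (1+H²)v² − 2H·v^{2−n} for v > 0, and v₀ = ((√(H²n² + 4(n−1)) + (n−2)H)/(2 + 2H²))^{1/n}. Then: (i) q′(v) > 0 for 0 < v < v₀ and q′(v) < 0 for v > v₀ (so v₀ is the unique positive critical point of q, and q is strictly increasing on (0, v₀] and strictly decreasing on [v₀, ∞)); (ii) if moreover C > c₀, where c₀ = n·(2+2H²)^{(n−2)/n} · (2 + nH² + H√(H²n² + 4(n−1))) / ((n−2)H + √(H²n² + 4(n−1)))^{(2n−2)/n}, then q has exactly two zeros t₁, t₂ in (0, ∞), they satisfy t₁ < v₀ < t₂, and q(v) > 0 for all v ∈ (t₁,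 t₂). -/
/-!
With `w = vⁿ`, `q'(v) = 2 v^{1-2n} ((n-1) + (n-2) H w - (1+H²) w²)`, a concave quadratic in `w`
whose positive root is `w₀ = v₀ⁿ`; this gives the monotonicity on either side of `v₀`.
Completing squares, `q(v) = C - v^{2-2n} ((1 + H w)² + w²)`, so `q → -∞` at both ends of
`(0, ∞)`, and the quadratic equation for `w₀` turns `q(v₀)` into `C - c₀`. When `C > c₀` the
intermediate value theorem gives one zero on each side of `v₀`, and strict monotonicity there
makes them the only ones.
-/

open Real Set Filter Topology

theorem exists_two_zeros_of_strictMonoOn_of_strictAntiOn {f : ℝ → ℝ} {l m : ℝ} (hlm : l < m)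
    (hf : ContinuousOn f (Ioi l)) (hmono : StrictMonoOn f (Ioc l m))
    (hanti : StrictAntiOn f (Ici m)) (hm : 0 < f m)
    (hl : Tendsto f (𝓝[>] l) atBot) (htop : Tendsto f atTop atBot) :
    ∃ t₁ t₂ : ℝ, l < t₁ ∧ t₁ < m ∧ m < t₂ ∧ f t₁ = 0 ∧ f t₂ = 0 ∧
      (∀ v ∈ Ioo t₁ t₂, 0 < f v) ∧ (∀ v : ℝ, l < v → f v = 0 → v = t₁ ∨ v = t₂) := by
  obtain ⟨a, ⟨ha, ham⟩, hfa⟩ :=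
    (Eventually.and (Ioo_mem_nhdsGT hlm) (hl.eventually_lt_atBot 0)).exists
  obtain ⟨b, hmb, hfb⟩ := ((eventually_gt_atTop m).and (htop.eventually_lt_atBot 0)).exists
  obtain ⟨t₁, ⟨hat₁, ht₁m⟩, ht₁⟩ := intermediate_value_Ioo ham.le
    (hf.mono fun x hx => lt_of_lt_of_le ha hx.1) ⟨hfa, hm⟩
  obtain ⟨t₂, ⟨hmt₂, -⟩, ht₂⟩ := intermediate_value_Ioo' hmb.le
    (hf.mono fun x hx => lt_of_lt_of_le hlm hx.1) ⟨hfb, hm⟩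
  have hlt₁ : l < t₁ := lt_trans ha hat₁
  refine ⟨t₁, t₂, hlt₁, ht₁m, hmt₂, ht₁, ht₂, fun v hv => ?_, fun v hv hfv => ?_⟩
  · rcases le_or_gt v m with hvm | hmv
    · exact ht₁ ▸ hmono ⟨hlt₁, ht₁m.le⟩ ⟨hlt₁.trans hv.1, hvm⟩ hv.1
    · exact ht₂ ▸ hanti (mem_Ici.2 hmv.le) (mem_Ici.2 hmt₂.le) hv.2
  · rcases le_or_gt v m with hvm | hmv
    · exact .inl (hmono.injOn ⟨hv, hvm⟩ ⟨hlt₁, ht₁m.le⟩ (hfv.trans ht₁.symm))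
    · exact .inr (hanti.injOn (mem_Ici.2 hmv.le) (mem_Ici.2 hmt₂.le) (hfv.trans ht₂.symm))

/-- The positive root of `(1 + H²) w² - (m - 2) H w - (m - 1)`; for `m = n` it is `v₀ ^ n`. -/
noncomputable def cmcCritPow (m H : ℝ) : ℝ :=
  (√(H ^ 2 * m ^ 2 + 4 * (m - 1)) + (m - 2) * H) / (2 + 2 * H ^ 2)

noncomputable def cmcCritPoint (n : ℕ) (H : ℝ) : ℝ :=
  cmcCritPow n H ^ ((1 : ℝ) / n)

noncomputable def cmcCritValue (m H : ℝ) : ℝ :=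
  m * (2 + 2 * H ^ 2) ^ ((m - 2) / m) * (2 + m * H ^ 2 + H * √(H ^ 2 * m ^ 2 + 4 * (m - 1)))
    / ((m - 2) * H + √(H ^ 2 * m ^ 2 + 4 * (m - 1))) ^ ((2 * m - 2) / m)

section CritPow

variable {m H : ℝ}

theorem abs_mul_lt_sqrt (hm : 1 < m) : |(m - 2) * H| < √(H ^ 2 * m ^ 2 + 4 * (m - 1)) := by
  have hsq (x : ℝ) (hx : x ^ 2 = ((m - 2) * H) ^ 2) : x < √(H ^ 2 * m ^ 2 + 4 * (m - 1)) :=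
    lt_sqrt_of_sq_lt (by nlinarith [sq_nonneg H])
  exact abs_lt.2 ⟨neg_lt.1 (hsq _ (neg_sq _)), hsq _ rfl⟩

theorem cmcCritPow_pos (hm : 1 < m) : 0 < cmcCritPow m H := by
  have := neg_abs_le ((m - 2) * H)
  have := abs_mul_lt_sqrt (H := H) hm
  unfold cmcCritPow
  apply div_pos <;> nlinarith [sq_nonneg H]

theorem cmcCritPow_cofactor_pos (hm : 1 < m) {w : ℝ} (hw : 0 ≤ w) :
    0 < (1 + H ^ 2) * (w + cmcCritPow m H) - (m - 2) * H := by
  have := le_abs_self ((m - 2) * H)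
  have := abs_mul_lt_sqrt (H := H) hm
  have : (1 + H ^ 2) * cmcCritPow m H = (√(H ^ 2 * m ^ 2 + 4 * (m - 1)) + (m - 2) * H) / 2 := by
    rw [cmcCritPow]; field_simp
  nlinarith [mul_nonneg (by positivity : (0 : ℝ) ≤ 1 + H ^ 2) hw]

theorem cmcCritPow_quadratic (hm : 1 ≤ m) :
    (1 + H ^ 2) * cmcCritPow m H ^ 2 = (m - 2) * H * cmcCritPow m H + (m - 1) := by
  have hS := sq_sqrt (show 0 ≤ H ^ 2 * m ^ 2 + 4 * (m - 1) by nlinarith [sq_nonneg (H * m)])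
  unfold cmcCritPow
  field_simp
  linear_combination hS

theorem cmcCritPow_factorization (hm : 1 ≤ m) (w : ℝ) :
    (m - 1) + (m - 2) * H * w - (1 + H ^ 2) * w ^ 2
      = (cmcCritPow m H - w) * ((1 + H ^ 2) * (w + cmcCritPow m H) - (m - 2) * H) := by
  linear_combination (-1 : ℝ) * cmcCritPow_quadratic (H := H) hm

theorem cmcCritValue_eq (hm : 1 < m) :
    cmcCritValue m H = m * (1 + H * cmcCritPow m H) * cmcCritPow m H ^ (-((2 * m - 2) / m)) := by
  set S := √(H ^ 2 * m ^ 2 + 4 * (m - 1))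
  set B := 2 + 2 * H ^ 2 with hB
  have hBpos : 0 < B := by positivity
  have hw := cmcCritPow_pos (H := H) hm
  have hBw : (m - 2) * H + S = B * cmcCritPow m H := by
    rw [cmcCritPow, mul_div_cancel₀ _ hBpos.ne']; ring
  have hnum : 2 + m * H ^ 2 + H * S = B * (1 + H * cmcCritPow m H) := by
    linear_combination H * hBw
  have hexp : B ^ ((2 * m - 2) / m) = B ^ ((m - 2) / m) * B := by
    rw [← rpow_add_one hBpos.ne']
    congr 1
    field_simp
    ring
  rw [cmcCritValue, ← hB, hnum, hBw, mul_rpow hBpos.le hw.le, hexp, rpow_neg hw.le]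
  field_simp

end CritPow

theorem zpow_two_sub_two_mul_mul_pow_sq {K : Type*} [Field K] {v : K} (hv : v ≠ 0) (n : ℕ) :
    v ^ (2 - 2 * (n : ℤ)) * (v ^ n) ^ 2 = v ^ 2 := by
  rw [← zpow_natCast, ← zpow_natCast, ← zpow_mul, ← zpow_add₀ hv]; ring_nf; norm_cast

noncomputable def cmcProfile (n : ℕ) (H C v : ℝ) : ℝ :=
  C - v ^ (2 - 2 * (n : ℤ)) - (1 + H ^ 2) * v ^ 2 - 2 * H * v ^ (2 - (n : ℤ))

section Profile

variable {n : ℕ} {H C v : ℝ}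

theorem cmcProfile_eq (hv : v ≠ 0) :
    cmcProfile n H C v = C - v ^ (2 - 2 * (n : ℤ)) * ((1 + H * v ^ n) ^ 2 + (v ^ n) ^ 2) := by
  have h₁ : v ^ (2 - 2 * (n : ℤ)) * v ^ n = v ^ (2 - (n : ℤ)) := by
    rw [← zpow_natCast, ← zpow_add₀ hv]; ring_nf
  rw [cmcProfile]
  linear_combination (2 * H) * h₁ + (1 + H ^ 2) * zpow_two_sub_two_mul_mul_pow_sq hv n

theorem hasDerivAt_cmcProfile (hv : v ≠ 0) :
    HasDerivAt (cmcProfile n H C)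
      (2 * v ^ (1 - 2 * (n : ℤ))
        * ((n - 1) + (n - 2) * H * v ^ n - (1 + H ^ 2) * (v ^ n) ^ 2)) v := by
  have h₁ : v ^ (2 - (n : ℤ) - 1) = v ^ (1 - 2 * (n : ℤ)) * v ^ n := by
    rw [← zpow_natCast, ← zpow_add₀ hv]; ring_nf
  have h₂ : v ^ (1 - 2 * (n : ℤ)) * (v ^ n) ^ 2 = v := by
    rw [← zpow_natCast, ← zpow_natCast, ← zpow_mul, ← zpow_add₀ hv]; ring_nf; exact zpow_one v
  have h := (((hasDerivAt_zpow (2 - 2 * (n : ℤ)) v (.inl hv)).const_sub C).sub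
    ((hasDerivAt_pow 2 v).const_mul (1 + H ^ 2))).sub
    ((hasDerivAt_zpow (2 - (n : ℤ)) v (.inl hv)).const_mul (2 * H))
  refine h.congr_deriv ?_
  rw [h₁, show (2 - 2 * (n : ℤ) - 1) = 1 - 2 * (n : ℤ) by ring]
  push_cast
  linear_combination (2 * (1 + H ^ 2)) * h₂

theorem cmcCritPoint_pos (hn : 1 < n) : 0 < cmcCritPoint n H :=
  rpow_pos_of_pos (cmcCritPow_pos (Nat.one_lt_cast.2 hn)) _

theorem cmcCritPoint_pow (hn : 1 < n) : cmcCritPoint n H ^ n = cmcCritPow n H := by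
  rw [cmcCritPoint, ← rpow_natCast, ← rpow_mul (cmcCritPow_pos (Nat.one_lt_cast.2 hn)).le,
    one_div_mul_cancel (by positivity), rpow_one]

theorem deriv_cmcProfile (hn : 1 < n) (hv : v ≠ 0) :
    deriv (cmcProfile n H C) v = 2 * v ^ (1 - 2 * (n : ℤ)) * (cmcCritPow n H - v ^ n)
      * ((1 + H ^ 2) * (v ^ n + cmcCritPow n H) - (n - 2) * H) := by
  rw [(hasDerivAt_cmcProfile hv).deriv, cmcCritPow_factorization (Nat.one_le_cast.2 hn.le)]
  ring

theorem deriv_cmcProfile_pos (hn : 1 < n) (hv : 0 < v) (hlt : v < cmcCritPoint n H) :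
    0 < deriv (cmcProfile n H C) v := by
  have hw : v ^ n < cmcCritPow n H :=
    cmcCritPoint_pow hn ▸ pow_lt_pow_left₀ hlt hv.le (by omega)
  rw [deriv_cmcProfile hn hv.ne']
  exact mul_pos (mul_pos (mul_pos two_pos (zpow_pos hv _)) (sub_pos.2 hw))
    (cmcCritPow_cofactor_pos (Nat.one_lt_cast.2 hn) (pow_pos hv n).le)

theorem deriv_cmcProfile_neg (hn : 1 < n) (hlt : cmcCritPoint n H < v) :
    deriv (cmcProfile n H C) v < 0 := by
  have hv : 0 < v := (cmcCritPoint_pos hn).trans hlt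
  have hw : cmcCritPow n H < v ^ n :=
    cmcCritPoint_pow hn ▸ pow_lt_pow_left₀ hlt (cmcCritPoint_pos hn).le (by omega)
  rw [deriv_cmcProfile hn hv.ne']
  exact mul_neg_of_neg_of_pos (mul_neg_of_pos_of_neg (mul_pos two_pos (zpow_pos hv _))
    (sub_neg.2 hw)) (cmcCritPow_cofactor_pos (Nat.one_lt_cast.2 hn) (pow_pos hv n).le)

theorem continuousOn_cmcProfile : ContinuousOn (cmcProfile n H C) (Ioi 0) :=
  fun _ hv => (hasDerivAt_cmcProfile (ne_of_gt hv)).continuousAt.continuousWithinAt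

theorem strictMonoOn_cmcProfile (hn : 1 < n) :
    StrictMonoOn (cmcProfile n H C) (Ioc 0 (cmcCritPoint n H)) :=
  strictMonoOn_of_deriv_pos (convex_Ioc _ _) (continuousOn_cmcProfile.mono Ioc_subset_Ioi_self)
    fun v hv => by
      rw [interior_Ioc] at hv
      exact deriv_cmcProfile_pos hn hv.1 hv.2

theorem strictAntiOn_cmcProfile (hn : 1 < n) :
    StrictAntiOn (cmcProfile n H C) (Ici (cmcCritPoint n H)) :=
  strictAntiOn_of_deriv_neg (convex_Ici _)
    (continuousOn_cmcProfile.mono (Ici_subset_Ioi.2 (cmcCritPoint_pos hn)))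
    fun v hv => by
      rw [interior_Ici] at hv
      exact deriv_cmcProfile_neg hn hv

theorem cmcProfile_cmcCritPoint (hn : 1 < n) :
    cmcProfile n H C (cmcCritPoint n H) = C - cmcCritValue n H := by
  have hm : (1 : ℝ) < n := Nat.one_lt_cast.2 hn
  have hw := cmcCritPow_pos (H := H) hm
  have hsum :
      (1 + H * cmcCritPow n H) ^ 2 + cmcCritPow n H ^ 2 = n * (1 + H * cmcCritPow n H) := by
    linear_combination cmcCritPow_quadratic (H := H) hm.le
  have hzpow :
      cmcCritPoint n H ^ (2 - 2 * (n : ℤ)) = cmcCritPow n H ^ (-((2 * n - 2) / n : ℝ)) := by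
    rw [← rpow_intCast, cmcCritPoint, ← rpow_mul hw.le]
    congr 1
    push_cast
    field_simp
    ring
  rw [cmcProfile_eq (cmcCritPoint_pos hn).ne', cmcCritPoint_pow hn, hsum, hzpow,
    cmcCritValue_eq hm]
  ring

theorem tendsto_const_sub_atBot {α : Type*} {l : Filter α} {f : α → ℝ} (C : ℝ)
    (hf : Tendsto f l atTop) : Tendsto (fun x => C - f x) l atBot := by
  simpa only [sub_eq_add_neg, Function.comp_def] using
    tendsto_atBot_add_const_left l C (tendsto_neg_atTop_atBot.comp hf)

theorem tendsto_cmcProfile_atTop : Tendsto (cmcProfile n H C) atTop atBot := by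
  refine tendsto_atBot_mono' _ ?_ (tendsto_const_sub_atBot C (tendsto_pow_atTop two_ne_zero))
  filter_upwards [eventually_gt_atTop 0] with v hv
  rw [cmcProfile_eq hv.ne', ← zpow_two_sub_two_mul_mul_pow_sq hv.ne' n]
  have := zpow_pos hv (2 - 2 * (n : ℤ))
  nlinarith [sq_nonneg (1 + H * v ^ n)]

theorem tendsto_cmcProfile_nhdsGT_zero (hn : 1 < n) :
    Tendsto (cmcProfile n H C) (𝓝[>] 0) atBot := by
  have hpow : Tendsto (fun v : ℝ => v ^ (2 - 2 * (n : ℤ))) (𝓝[>] 0) atTop := by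
    have := (tendsto_zpow_atTop_atTop (show (0 : ℤ) < 2 * n - 2 by omega)).comp
      (tendsto_inv_nhdsGT_zero (𝕜 := ℝ))
    simpa only [Function.comp_def, inv_zpow', neg_sub] using this
  refine tendsto_atBot_mono' _ ?_
    (tendsto_const_sub_atBot C (hpow.atTop_div_const (by positivity : (0 : ℝ) < 1 + H ^ 2)))
  filter_upwards [self_mem_nhdsWithin] with v (hv : 0 < v)
  rw [cmcProfile_eq hv.ne']
  have hA := zpow_pos hv (2 - 2 * (n : ℤ))
  -- `(1 + H²)((1 + H w)² + w²) = 1 + (H + (1 + H²) w)²`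
  have hB : 1 / (1 + H ^ 2) ≤ (1 + H * v ^ n) ^ 2 + (v ^ n) ^ 2 := by
    rw [div_le_iff₀ (by positivity)]
    nlinarith [sq_nonneg (H + (1 + H ^ 2) * v ^ n)]
  have := mul_le_mul_of_nonneg_left hB hA.le
  rw [mul_one_div] at this
  linarith

end Profile

theorem stmt_3_general (n : ℕ) (hn : 2 ≤ n) (H C : ℝ)
    (q : ℝ → ℝ)
    (hq : q = fun v : ℝ => C - v ^ (2 - 2 * (n : ℤ)) - (1 + H ^ 2) * v ^ 2
      - 2 * H * v ^ (2 - (n : ℤ)))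
    (v₀ : ℝ)
    (hv₀ : v₀ = ((Real.sqrt (H ^ 2 * (n : ℝ) ^ 2 + 4 * ((n : ℝ) - 1)) + ((n : ℝ) - 2) * H)
      / (2 + 2 * H ^ 2)) ^ ((1 : ℝ) / (n : ℝ)))
    (c₀ : ℝ)
    (hc₀ : c₀ = (n : ℝ) * (2 + 2 * H ^ 2) ^ (((n : ℝ) - 2) / (n : ℝ))
      * (2 + (n : ℝ) * H ^ 2 + H * Real.sqrt (H ^ 2 * (n : ℝ) ^ 2 + 4 * ((n : ℝ) - 1)))
      / (((n : ℝ) - 2) * H + Real.sqrt (H ^ 2 * (n : ℝ) ^ 2 + 4 * ((n : ℝ) - 1)))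
        ^ ((2 * (n : ℝ) - 2) / (n : ℝ))) :
    (∀ v : ℝ, 0 < v → v < v₀ → 0 < deriv q v) ∧
    (∀ v : ℝ, v₀ < v → deriv q v < 0) ∧
    StrictMonoOn q (Set.Ioc 0 v₀) ∧
    StrictAntiOn q (Set.Ici v₀) ∧
    (C > c₀ → ∃ t₁ t₂ : ℝ, 0 < t₁ ∧ t₁ < v₀ ∧ v₀ < t₂ ∧ q t₁ = 0 ∧ q t₂ = 0 ∧
      (∀ v ∈ Set.Ioo t₁ t₂, 0 < q v) ∧
      (∀ v : ℝ, 0 < v → q v = 0 → v = t₁ ∨ v = t₂)) := by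
  obtain rfl : q = cmcProfile n H C := hq
  obtain rfl : v₀ = cmcCritPoint n H := hv₀
  obtain rfl : c₀ = cmcCritValue n H := hc₀
  refine ⟨fun _ hv hlt => deriv_cmcProfile_pos hn hv hlt, fun _ hlt => deriv_cmcProfile_neg hn hlt,
    strictMonoOn_cmcProfile hn, strictAntiOn_cmcProfile hn, fun hC => ?_⟩
  have hmax : 0 < cmcProfile n H C (cmcCritPoint n H) := by
    rw [cmcProfile_cmcCritPoint hn]
    linarith
  exact exists_two_zeros_of_strictMonoOn_of_strictAntiOn (cmcCritPoint_pos hn)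
    continuousOn_cmcProfile (strictMonoOn_cmcProfile hn) (strictAntiOn_cmcProfile hn) hmax
    (tendsto_cmcProfile_nhdsGT_zero hn) tendsto_cmcProfile_atTop

/-- For `n ≥ 2`, `H ≥ 0`, let
`q v = C − v^{2−2n} − (1+H²)v² − 2H v^{2−n}` and
`v₀ = ((√(H²n² + 4(n−1)) + (n−2)H)/(2+2H²))^{1/n}`.  Then `q` is strictly increasing on
`(0, v₀]` and strictly decreasing on `[v₀, ∞)` (with `q' > 0` before `v₀` and `q' < 0`
after), and if `C > c₀` then `q` has exactly two positive zeros `t₁ < v₀ < t₂` with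
`q > 0` on `(t₁, t₂)`. -/
theorem stmt_3 (n : ℕ) (hn : 2 ≤ n) (H C : ℝ) (hH : 0 ≤ H)
    (q : ℝ → ℝ)
    (hq : q = fun v : ℝ => C - v ^ (2 - 2 * (n : ℤ)) - (1 + H ^ 2) * v ^ 2
      - 2 * H * v ^ (2 - (n : ℤ)))
    (v₀ : ℝ)
    (hv₀ : v₀ = ((Real.sqrt (H ^ 2 * (n : ℝ) ^ 2 + 4 * ((n : ℝ) - 1)) + ((n : ℝ) - 2) * H)
      / (2 + 2 * H ^ 2)) ^ ((1 : ℝ) / (n : ℝ)))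
    (c₀ : ℝ)
    (hc₀ : c₀ = (n : ℝ) * (2 + 2 * H ^ 2) ^ (((n : ℝ) - 2) / (n : ℝ))
      * (2 + (n : ℝ) * H ^ 2 + H * Real.sqrt (H ^ 2 * (n : ℝ) ^ 2 + 4 * ((n : ℝ) - 1)))
      / (((n : ℝ) - 2) * H + Real.sqrt (H ^ 2 * (n : ℝ) ^ 2 + 4 * ((n : ℝ) - 1)))
        ^ ((2 * (n : ℝ) - 2) / (n : ℝ))) :
    (∀ v : ℝ, 0 < v → v < v₀ → 0 < deriv q v) ∧
    (∀ v : ℝ, v₀ < v → deriv q v < 0) ∧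
    StrictMonoOn q (Set.Ioc 0 v₀) ∧
    StrictAntiOn q (Set.Ici v₀) ∧
    (C > c₀ → ∃ t₁ t₂ : ℝ, 0 < t₁ ∧ t₁ < v₀ ∧ v₀ < t₂ ∧ q t₁ = 0 ∧ q t₂ = 0 ∧
      (∀ v ∈ Set.Ioo t₁ t₂, 0 < q v) ∧
      (∀ v : ℝ, 0 < v → q v = 0 → v = t₁ ∨ v = t₂)) :=
  stmt_3_general n hn H C q hq v₀ hv₀ c₀ hc₀
end

section
/- Let n ≥ 2 be an integer, H ≥ 0 and C real, q(v) = C − v^{2−2n} − (1+H²)v² − 2H·v^{2−n} for v > 0, and v₀ = ((√(H²n² + 4(n−1)) + (n−2)H)/(2 + 2H²))^{1/n}. Then q(v₀) = C − c₀, where c₀ = n·(2+2H²)^{(n−2)/n} · (2 + nH² + H√(H²n² + 4(n−1))) / ((n−2)H + √(H²n² + 4(n−1)))^{(2n−2)/n}, and q″(v₀) = −2a, where a = 2n(1+H²) · (4(n−1) + H²n² + H(n−2)√(4(n−1) + H²n²)) / ((H(n−2) + √(4(n−1) + H²n²))²). -/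
/-!
Put `w = vⁿ`. Then `q v = C - v² (1 + 2Hw + (1 + H²)w²) / w²` and
`q'' v = -((2n-2)(2n-1) + 2(n-1)(n-2)Hw + 2(1+H²)w²) / w²`, while `v₀ⁿ` is the positive root
of `(1 + H²)w² = (n-1) + (n-2)Hw`, the equation `q' v = 0` multiplied by `v^(2n-1) / 2`.
Eliminating `(1 + H²)w²` with it leaves `q v₀ = C - n v₀² (1 + Hw)/w²` and
`q'' v₀ = -2n (2(n-1) + (n-2)Hw)/w²`, which become `c₀` and `a` once `w = v₀ⁿ` is
written out.
-/

open Real Filter Topology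

noncomputable section

def profile (n : ℕ) (H C v : ℝ) : ℝ :=
  C - v ^ (2 - 2 * (n : ℤ)) - (1 + H ^ 2) * v ^ 2 - 2 * H * v ^ (2 - (n : ℤ))

def profileDeriv (n : ℕ) (H v : ℝ) : ℝ :=
  (2 * n - 2) * v ^ (1 - 2 * (n : ℤ)) - 2 * (1 + H ^ 2) * v
    + 2 * H * (n - 2) * v ^ (1 - (n : ℤ))

section Calculus

variable {n : ℕ} {H C v : ℝ}

theorem hasDerivAt_profile (hv : v ≠ 0) :
    HasDerivAt (profile n H C) (profileDeriv n H v) v := by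
  have h := (((hasDerivAt_const v C).sub (hasDerivAt_zpow (2 - 2 * (n : ℤ)) v (.inl hv))).sub
    ((hasDerivAt_pow 2 v).const_mul (1 + H ^ 2))).sub
    ((hasDerivAt_zpow (2 - (n : ℤ)) v (.inl hv)).const_mul (2 * H))
  refine h.congr_deriv ?_
  rw [profileDeriv, show (2 : ℤ) - 2 * n - 1 = 1 - 2 * n by ring,
    show (2 : ℤ) - n - 1 = 1 - n by ring]
  push_cast
  ring

theorem hasDerivAt_profileDeriv (hv : v ≠ 0) :
    HasDerivAt (profileDeriv n H)
      ((2 * n - 2) * (1 - 2 * n) * v ^ (-(2 * (n : ℤ))) - 2 * (1 + H ^ 2)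
        + 2 * H * (n - 2) * (1 - n) * v ^ (-(n : ℤ))) v := by
  have h := (((hasDerivAt_zpow (1 - 2 * (n : ℤ)) v (.inl hv)).const_mul (2 * (n : ℝ) - 2)).sub
    ((hasDerivAt_id v).const_mul (2 * (1 + H ^ 2)))).add
    ((hasDerivAt_zpow (1 - (n : ℤ)) v (.inl hv)).const_mul (2 * H * ((n : ℝ) - 2)))
  refine h.congr_deriv ?_
  rw [show (1 : ℤ) - 2 * n - 1 = -(2 * n) by ring, show (1 : ℤ) - n - 1 = -n by ring]
  push_cast
  ring

theorem deriv_deriv_profile (hv : v ≠ 0) :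
    deriv (deriv (profile n H C)) v =
      (2 * n - 2) * (1 - 2 * n) * v ^ (-(2 * (n : ℤ))) - 2 * (1 + H ^ 2)
        + 2 * H * (n - 2) * (1 - n) * v ^ (-(n : ℤ)) := by
  have hderiv : deriv (profile n H C) =ᶠ[𝓝 v] profileDeriv n H := by
    filter_upwards [eventually_ne_nhds hv] with x hx using (hasDerivAt_profile hx).deriv
  rw [hderiv.deriv_eq, (hasDerivAt_profileDeriv hv).deriv]

end Calculus

section CriticalPoint

variable {n : ℕ} {H C v w : ℝ}

theorem profile_eq_of_quadratic (hv : v ≠ 0) (hw : v ^ n = w)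
    (hquad : (1 + H ^ 2) * w ^ 2 = (n - 1) + (n - 2) * H * w) :
    profile n H C v = C - n * v ^ 2 * (1 + H * w) / w ^ 2 := by
  have hw0 : w ≠ 0 := hw ▸ pow_ne_zero n hv
  have h2n : v ^ (2 - 2 * (n : ℤ)) = v ^ 2 / w ^ 2 := by
    rw [zpow_sub₀ hv, mul_comm, zpow_mul, ← hw]; norm_cast
  have hn : v ^ (2 - (n : ℤ)) = v ^ 2 / w := by
    rw [zpow_sub₀ hv, ← hw]; norm_cast
  rw [profile, h2n, hn]
  field_simp
  linear_combination (-v ^ 2) * hquad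

theorem deriv_deriv_profile_of_quadratic (hv : v ≠ 0) (hw : v ^ n = w)
    (hquad : (1 + H ^ 2) * w ^ 2 = (n - 1) + (n - 2) * H * w) :
    deriv (deriv (profile n H C)) v = -(2 * n * (2 * (n - 1) + (n - 2) * H * w) / w ^ 2) := by
  have hw0 : w ≠ 0 := hw ▸ pow_ne_zero n hv
  have h2n : v ^ (-(2 * (n : ℤ))) = (w ^ 2)⁻¹ := by
    rw [zpow_neg, mul_comm, zpow_mul, ← hw]; norm_cast
  have hn : v ^ (-(n : ℤ)) = w⁻¹ := by
    rw [zpow_neg, ← hw]; norm_cast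
  rw [deriv_deriv_profile hv, h2n, hn]
  field_simp
  linear_combination -hquad

end CriticalPoint

section Root

variable {n H : ℝ}

def critRoot (n H : ℝ) : ℝ :=
  (√(H ^ 2 * n ^ 2 + 4 * (n - 1)) + (n - 2) * H) / (2 + 2 * H ^ 2)

theorem sqrt_add_sub_two_mul_pos (hn : 1 < n) :
    0 < √(H ^ 2 * n ^ 2 + 4 * (n - 1)) + (n - 2) * H := by
  have h : |(n - 2) * H| < √(H ^ 2 * n ^ 2 + 4 * (n - 1)) := by
    rw [← sqrt_sq_eq_abs]
    exact sqrt_lt_sqrt (sq_nonneg _) (by nlinarith [sq_nonneg H])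
  linarith [neg_abs_le ((n - 2) * H)]

theorem critRoot_pos (hn : 1 < n) : 0 < critRoot n H :=
  div_pos (sqrt_add_sub_two_mul_pos hn) (by positivity)

theorem one_add_sq_mul_critRoot_sq (hn : 1 ≤ n) :
    (1 + H ^ 2) * critRoot n H ^ 2 = (n - 1) + (n - 2) * H * critRoot n H := by
  have hs := sq_sqrt (show 0 ≤ H ^ 2 * n ^ 2 + 4 * (n - 1) by nlinarith [sq_nonneg (H * n)])
  rw [critRoot]
  field_simp
  linear_combination hs

end Root

theorem rpow_div_rpow_eq_sq_rpow_one_div {n A B : ℝ} (hn : n ≠ 0) (hA : 0 < A) (hB : 0 < B) :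
    A ^ ((n - 2) / n) / B ^ ((2 * n - 2) / n) = ((B / A) ^ (1 / n)) ^ 2 * A / B ^ 2 := by
  rw [← rpow_natCast, ← rpow_mul (div_pos hB hA).le, div_rpow hB.le hA.le,
    show (n - 2) / n = 1 - 2 / n by field_simp, show (2 * n - 2) / n = 2 - 2 / n by field_simp,
    rpow_sub hA, rpow_sub hB, rpow_one]
  push_cast
  rw [one_div_mul_eq_div, rpow_two]
  field_simp

end

theorem stmt_4_general (n : ℕ) (hn : 2 ≤ n) (H C : ℝ)
    (q : ℝ → ℝ)
    (hq : q = fun v : ℝ => C - v ^ (2 - 2 * (n : ℤ)) - (1 + H ^ 2) * v ^ 2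
      - 2 * H * v ^ (2 - (n : ℤ)))
    (v₀ : ℝ)
    (hv₀ : v₀ = ((Real.sqrt (H ^ 2 * (n : ℝ) ^ 2 + 4 * ((n : ℝ) - 1)) + ((n : ℝ) - 2) * H)
      / (2 + 2 * H ^ 2)) ^ ((1 : ℝ) / (n : ℝ))) :
    q v₀ = C - (n : ℝ) * (2 + 2 * H ^ 2) ^ (((n : ℝ) - 2) / (n : ℝ))
        * (2 + (n : ℝ) * H ^ 2 + H * Real.sqrt (H ^ 2 * (n : ℝ) ^ 2 + 4 * ((n : ℝ) - 1)))
        / (((n : ℝ) - 2) * H + Real.sqrt (H ^ 2 * (n : ℝ) ^ 2 + 4 * ((n : ℝ) - 1)))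
          ^ ((2 * (n : ℝ) - 2) / (n : ℝ)) ∧
    deriv (deriv q) v₀ = -(2 * (2 * (n : ℝ) * (1 + H ^ 2)
      * (4 * ((n : ℝ) - 1) + H ^ 2 * (n : ℝ) ^ 2
        + H * ((n : ℝ) - 2) * Real.sqrt (4 * ((n : ℝ) - 1) + H ^ 2 * (n : ℝ) ^ 2))
      / ((H * ((n : ℝ) - 2) + Real.sqrt (4 * ((n : ℝ) - 1) + H ^ 2 * (n : ℝ) ^ 2)) ^ 2))) := by
  have hn1 : (1 : ℝ) < n := by exact_mod_cast hn
  have hA : (0 : ℝ) < 2 + 2 * H ^ 2 := by positivity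
  have hB := sqrt_add_sub_two_mul_pos (H := H) hn1
  have hv₀' : v₀ = critRoot n H ^ (1 / (n : ℝ)) := hv₀
  have hw : v₀ ^ n = critRoot n H := by
    rw [hv₀', one_div, rpow_inv_natCast_pow (critRoot_pos hn1).le (by omega)]
  have hv : v₀ ≠ 0 := hv₀' ▸ (rpow_pos_of_pos (critRoot_pos hn1) _).ne'
  have hquad := one_add_sq_mul_critRoot_sq (H := H) hn1.le
  rw [show q = profile n H C from hq, profile_eq_of_quadratic hv hw hquad,
    deriv_deriv_profile_of_quadratic hv hw hquad]
  constructor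
  · have hpow := rpow_div_rpow_eq_sq_rpow_one_div (by positivity : (n : ℝ) ≠ 0) hA hB
    rw [← hv₀] at hpow
    rw [add_comm (((n : ℝ) - 2) * H)]
    conv_rhs => rw [mul_right_comm, mul_div_assoc, hpow]
    rw [critRoot]
    field_simp
    ring
  · rw [add_comm (4 * ((n : ℝ) - 1)), critRoot]
    field_simp
    ring

/-- With `q v = C − v^{2−2n} − (1+H²)v² − 2H v^{2−n}` and `v₀` its
positive critical point, one has `q v₀ = C − c₀` and `q'' v₀ = −2a` for the explicit
constants `c₀` and `a`. -/
theorem stmt_4 (n : ℕ) (hn : 2 ≤ n) (H C : ℝ) (hH : 0 ≤ H)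
    (q : ℝ → ℝ)
    (hq : q = fun v : ℝ => C - v ^ (2 - 2 * (n : ℤ)) - (1 + H ^ 2) * v ^ 2
      - 2 * H * v ^ (2 - (n : ℤ)))
    (v₀ : ℝ)
    (hv₀ : v₀ = ((Real.sqrt (H ^ 2 * (n : ℝ) ^ 2 + 4 * ((n : ℝ) - 1)) + ((n : ℝ) - 2) * H)
      / (2 + 2 * H ^ 2)) ^ ((1 : ℝ) / (n : ℝ))) :
    q v₀ = C - (n : ℝ) * (2 + 2 * H ^ 2) ^ (((n : ℝ) - 2) / (n : ℝ))
        * (2 + (n : ℝ) * H ^ 2 + H * Real.sqrt (H ^ 2 * (n : ℝ) ^ 2 + 4 * ((n : ℝ) - 1)))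
        / (((n : ℝ) - 2) * H + Real.sqrt (H ^ 2 * (n : ℝ) ^ 2 + 4 * ((n : ℝ) - 1)))
          ^ ((2 * (n : ℝ) - 2) / (n : ℝ)) ∧
    deriv (deriv q) v₀ = -(2 * (2 * (n : ℝ) * (1 + H ^ 2)
      * (4 * ((n : ℝ) - 1) + H ^ 2 * (n : ℝ) ^ 2
        + H * ((n : ℝ) - 2) * Real.sqrt (4 * ((n : ℝ) - 1) + H ^ 2 * (n : ℝ) ^ 2))
      / ((H * ((n : ℝ) - 2) + Real.sqrt (4 * ((n : ℝ) - 1) + H ^ 2 * (n : ℝ) ^ 2)) ^ 2))) :=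
  stmt_4_general n hn H C q hq v₀ hv₀
end

section
/- Let n ≥ 2 be an integer, H ∈ ℝ, C > 0, and suppose 0 < t₁ < t₂ are such that the polynomial ξ(s) = C·s^{2n−2} − 1 − (1+H²)s^{2n} − 2H·s^{n} satisfies ξ(t₁) = ξ(t₂) = 0, ξ(s) > 0 for all s ∈ (t₁, t₂), ξ′(t₁) ≠ 0 and ξ′(t₂) ≠ 0. Set T = 2·∫_{t₁}^{t₂} t^{n−1}/√(ξ(t)) dt (a finite improper integral). Then there exists a continuously differentiable, T-periodic function g : ℝ → [t₁, t₂] with g(0) = t₁, g(T/2) = t₂, g strictly increasing on [0, T/2], which satisfies (g′(u))² + g(u)^{2−2n} + (1+H²)·g(u)² + 2H·g(u)^{2−n} = C for all u ∈ ℝ. -/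
/-!
With `ψ s = √(ξ s) / s^{n-1}` the equation reads `(g')² = ψ(g)²`. Since `ξ` has simple zeros at
`t₁` and `t₂`, `1/ψ` has only inverse-square-root singularities there and is integrable. The
inverse `g₀` of `s ↦ ∫_{t₁}^s 1/ψ` solves `g₀' = ψ(g₀)` on `(0, T/2)`; composing it with the
triangle wave of period `T` gives `g`, whose derivative `±ψ(g)` stays continuous across the
turning points because `ψ` vanishes at `t₁` and `t₂`. The turning points are countably many, so
the fundamental theorem of calculus with countable exceptions makes `g` differentiable there too.
-/

open Real Set MeasureTheory intervalIntegral Filter Topology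

theorem intervalIntegrable_abs_sub_rpow {r : ℝ} (hr : -1 < r) (a m : ℝ) :
    IntervalIntegrable (fun x => |x - a| ^ r) volume a m := by
  rcases le_total a m with ham | hma
  · have := (intervalIntegrable_rpow' hr (a := 0) (b := m - a)).comp_sub_right a
    simp only [zero_add, sub_add_cancel] at this
    refine this.congr_uIoo fun x hx => ?_
    rw [uIoo_of_le ham] at hx
    simp [abs_of_pos (sub_pos.mpr hx.1)]
  · have := (intervalIntegrable_rpow' hr (a := 0) (b := a - m)).comp_sub_left a
    simp only [sub_zero, sub_sub_cancel] at this
    refine this.congr_uIoo fun x hx => ?_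
    rw [uIoo_of_ge hma] at hx
    simp [abs_of_neg (sub_neg.mpr hx.2)]

theorem intervalIntegrable_div_sqrt_of_mul_abs_sub_le {φ ξ : ℝ → ℝ} {a m c : ℝ}
    (hφ : Continuous φ) (hξ : Continuous ξ) (hc : 0 < c)
    (hle : ∀ x ∈ uIcc a m, c * |x - a| ≤ ξ x) :
    IntervalIntegrable (fun x => φ x / √(ξ x)) volume a m := by
  obtain ⟨M, hM⟩ := isCompact_uIcc.exists_bound_of_continuousOn hφ.continuousOn
  refine ((intervalIntegrable_abs_sub_rpow (r := -(1 / 2)) (by norm_num) a m).const_mul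
    (M / √c)).mono_fun (hφ.measurable.div hξ.measurable.sqrt).aestronglyMeasurable ?_
  filter_upwards [ae_restrict_mem measurableSet_uIoc, ae_restrict_of_ae (volume.ae_ne a)]
    with x hx hxa
  have hx' : x ∈ uIcc a m := uIoc_subset_uIcc hx
  have hpos : 0 < |x - a| := abs_pos.mpr (sub_ne_zero.mpr hxa)
  have hM0 : 0 ≤ M := (norm_nonneg _).trans (hM x hx')
  have hrhs : 0 ≤ M / √c * |x - a| ^ (-(1 / 2) : ℝ) := by positivity
  rw [Real.norm_of_nonneg hrhs, norm_div, Real.norm_of_nonneg (sqrt_nonneg _),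
    rpow_neg (abs_nonneg _), ← sqrt_eq_rpow]
  calc ‖φ x‖ / √(ξ x) ≤ M / √(c * |x - a|) :=
        div_le_div₀ hM0 (hM x hx') (by positivity) (sqrt_le_sqrt (hle x hx'))
    _ = M / √c * (√|x - a|)⁻¹ := by rw [sqrt_mul hc.le]; field_simp

theorem exists_pos_mul_abs_sub_le {ξ : ℝ → ℝ} {a m : ℝ} (hξ : Continuous ξ)
    (hd : DifferentiableAt ℝ ξ a) (ha : ξ a = 0) (hd0 : deriv ξ a ≠ 0)
    (hpos : ∀ x ∈ uIcc a m, x ≠ a → 0 < ξ x) :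
    ∃ c > 0, ∀ x ∈ uIcc a m, c * |x - a| ≤ ξ x := by
  have hq : Continuous (dslope ξ a) :=
    continuousOn_univ.mp ((continuousOn_dslope univ_mem).mpr ⟨hξ.continuousOn, hd⟩)
  have hξq : ∀ x, ξ x = dslope ξ a x * (x - a) := fun x => by
    simpa [ha, mul_comm] using (sub_smul_dslope ξ a x).symm
  have hq0 : ∀ x ∈ uIcc a m, 0 < |dslope ξ a x| := fun x hx => by
    rcases eq_or_ne x a with rfl | hxa
    · rwa [dslope_same, abs_pos]
    · have := hpos x hx hxa
      rw [hξq] at this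
      exact abs_pos.mpr (left_ne_zero_of_mul this.ne')
  obtain ⟨x₀, hx₀, hmin⟩ := isCompact_uIcc.exists_isMinOn nonempty_uIcc hq.abs.continuousOn
  refine ⟨|dslope ξ a x₀|, hq0 x₀ hx₀, fun x hx => ?_⟩
  have hξx : ξ x = |dslope ξ a x| * |x - a| := by
    rcases eq_or_ne x a with rfl | hxa
    · simp [ha]
    · rw [← abs_mul, ← hξq, abs_of_pos (hpos x hx hxa)]
  rw [hξx]
  exact mul_le_mul_of_nonneg_right (hmin hx) (abs_nonneg _)

theorem intervalIntegrable_div_sqrt_of_simple_zeros {φ ξ : ℝ → ℝ} {a b : ℝ} (hab : a < b)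
    (hφ : Continuous φ) (hξ : Continuous ξ) (hda : DifferentiableAt ℝ ξ a)
    (hdb : DifferentiableAt ℝ ξ b) (ha : ξ a = 0) (hb : ξ b = 0) (hda0 : deriv ξ a ≠ 0)
    (hdb0 : deriv ξ b ≠ 0) (hpos : ∀ x ∈ Ioo a b, 0 < ξ x) :
    IntervalIntegrable (fun x => φ x / √(ξ x)) volume a b := by
  obtain ⟨m, ham, hmb⟩ := exists_between hab
  obtain ⟨c₁, hc₁, h₁⟩ := exists_pos_mul_abs_sub_le (m := m) hξ hda ha hda0 fun x hx hxa => by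
    rw [uIcc_of_le ham.le] at hx
    exact hpos x ⟨lt_of_le_of_ne hx.1 hxa.symm, hx.2.trans_lt hmb⟩
  obtain ⟨c₂, hc₂, h₂⟩ := exists_pos_mul_abs_sub_le (m := m) hξ hdb hb hdb0 fun x hx hxb => by
    rw [uIcc_of_ge hmb.le] at hx
    exact hpos x ⟨ham.trans_le hx.1, lt_of_le_of_ne hx.2 hxb⟩
  exact (intervalIntegrable_div_sqrt_of_mul_abs_sub_le hφ hξ hc₁ h₁).trans
    (intervalIntegrable_div_sqrt_of_mul_abs_sub_le hφ hξ hc₂ h₂).symm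

theorem exists_continuous_inverse_of_strictMonoOn_Icc {G : ℝ → ℝ} {a b : ℝ} (hab : a ≤ b)
    (hc : ContinuousOn G (Icc a b)) (hm : StrictMonoOn G (Icc a b)) :
    ∃ g : ℝ → ℝ, Continuous g ∧ (∀ u, g u ∈ Icc a b) ∧
      (∀ u ∈ Icc (G a) (G b), G (g u) = u) ∧ ∀ s ∈ Icc a b, g (G s) = s := by
  have hmaps : MapsTo G (Icc a b) (Icc (G a) (G b)) := fun s hs =>
    ⟨hm.monotoneOn (left_mem_Icc.mpr hab) hs hs.1, hm.monotoneOn hs (right_mem_Icc.mpr hab) hs.2⟩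
  have hsurj : SurjOn G (Icc a b) (Icc (G a) (G b)) := intermediate_value_Icc hab hc
  have : CompactSpace (Icc a b) := isCompact_iff_compactSpace.mp isCompact_Icc
  let e : Icc a b ≃ₜ Icc (G a) (G b) :=
    Continuous.homeoOfEquivCompactToT2 (f := Equiv.ofBijective (hmaps.restrict)
      ⟨hmaps.restrict_inj.mpr hm.injOn, hmaps.restrict_surjective_iff.mpr hsurj⟩)
      (hc.mapsToRestrict hmaps)
  have hGab : G a ≤ G b := hmaps (left_mem_Icc.mpr hab) |>.2
  refine ⟨fun u => e.symm (projIcc _ _ hGab u), by fun_prop, fun u => (e.symm _).2,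
    fun u hu => ?_, fun s hs => ?_⟩
  · dsimp only
    rw [projIcc_of_mem hGab hu]
    exact congrArg Subtype.val (e.apply_symm_apply ⟨u, hu⟩)
  · dsimp only
    rw [projIcc_of_mem hGab (hmaps hs)]
    exact congrArg Subtype.val (e.symm_apply_apply ⟨s, hs⟩)

theorem strictMonoOn_primitive {F : ℝ → ℝ} {a b : ℝ} (hint : IntervalIntegrable F volume a b)
    (hpos : ∀ s ∈ Ioo a b, 0 < F s) : StrictMonoOn (fun s => ∫ t in a..s, F t) (Icc a b) := by
  intro x hx y hy hxy
  have hsub : ∀ z ∈ Icc a b, IntervalIntegrable F volume a z := fun z hz =>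
    hint.mono_set (uIcc_subset_uIcc_left (Icc_subset_uIcc hz))
  have := intervalIntegral_pos_of_pos_on ((hsub x hx).symm.trans (hsub y hy))
    (fun s hs => hpos s ⟨hx.1.trans_lt hs.1, hs.2.trans_le hy.2⟩) hxy
  rw [← integral_interval_sub_left (hsub y hy) (hsub x hx)] at this
  exact sub_pos.mp this

theorem exists_inverse_primitive {F : ℝ → ℝ} {a b : ℝ} (hab : a < b)
    (hF : ContinuousOn F (Ioo a b)) (hpos : ∀ s ∈ Ioo a b, 0 < F s)
    (hint : IntervalIntegrable F volume a b) :
    0 < ∫ t in a..b, F t ∧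
    ∃ g : ℝ → ℝ, Continuous g ∧ (∀ u, g u ∈ Icc a b) ∧ g 0 = a ∧ g (∫ t in a..b, F t) = b ∧
      StrictMonoOn g (Icc 0 (∫ t in a..b, F t)) ∧
      ∀ u ∈ Ioo 0 (∫ t in a..b, F t), HasDerivAt g (F (g u))⁻¹ u := by
  set G : ℝ → ℝ := fun s => ∫ t in a..s, F t
  have hGa : G a = 0 := integral_same
  have hGm : StrictMonoOn G (Icc a b) := strictMonoOn_primitive hint hpos
  have hGc : ContinuousOn G (Icc a b) := by
    simpa [uIcc_of_le hab.le] using continuousOn_primitive_interval' hint left_mem_uIcc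
  obtain ⟨g, hgc, hgmem, hGg, hgG⟩ := exists_continuous_inverse_of_strictMonoOn_Icc hab.le hGc hGm
  rw [hGa] at hGg
  have hga : g 0 = a := by simpa [hGa] using hgG a (left_mem_Icc.mpr hab.le)
  have hgb : g (G b) = b := hgG b (right_mem_Icc.mpr hab.le)
  have hgm : StrictMonoOn g (Icc 0 (G b)) := fun x hx y hy hxy => by
    refine (hGm.lt_iff_lt (hgmem x) (hgmem y)).mp ?_
    rwa [hGg x hx, hGg y hy]
  have hGb : 0 < G b := intervalIntegral_pos_of_pos_on hint hpos hab
  refine ⟨hGb, g, hgc, hgmem, hga, hgb, hgm, fun u hu => ?_⟩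
  have hgu : g u ∈ Ioo a b := by
    rw [← hga, ← hgb]
    exact ⟨hgm (left_mem_Icc.mpr hGb.le) (Ioo_subset_Icc_self hu) hu.1,
      hgm (Ioo_subset_Icc_self hu) (right_mem_Icc.mpr hGb.le) hu.2⟩
  have hGd : HasDerivAt G (F (g u)) (g u) :=
    integral_hasDerivAt_right
      (hint.mono_set (uIcc_subset_uIcc_left (Icc_subset_uIcc (Ioo_subset_Icc_self hgu))))
      (hF.stronglyMeasurableAtFilter isOpen_Ioo _ hgu)
      (hF.continuousAt (Ioo_mem_nhds hgu.1 hgu.2))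
  refine hGd.of_local_left_inverse hgc.continuousAt (hpos _ hgu).ne' ?_
  filter_upwards [Ioo_mem_nhds hu.1 hu.2] with v hv using hGg v (Ioo_subset_Icc_self hv)

theorem abs_cos_lt_one_of_sin_ne_zero {x : ℝ} (h : sin x ≠ 0) : |cos x| < 1 := by
  rw [← sq_lt_one_iff_abs_lt_one]
  have := pow_pos (abs_pos.mpr h) 2
  rw [sq_abs] at this
  nlinarith [sin_sq_add_cos_sq x]

/-- The distance from `u` to `2L ℤ`: the even, `2L`-periodic extension of the identity
of `[0, L]`. -/
noncomputable def triangleWave (L u : ℝ) : ℝ := L / π * arccos (cos (π / L * u))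

namespace triangleWave

variable {L : ℝ}

theorem continuous : Continuous (triangleWave L) := by
  unfold triangleWave; fun_prop

theorem periodic (hL : L ≠ 0) : Function.Periodic (triangleWave L) (2 * L) := by
  intro u
  have : π / L * (u + 2 * L) = π / L * u + (1 : ℤ) * (2 * π) := by field_simp; ring
  simp only [triangleWave, this, cos_add_int_mul_two_pi]

theorem mem_Icc (hL : 0 ≤ L) (u : ℝ) : triangleWave L u ∈ Icc 0 L := by
  have h₀ := arccos_nonneg (cos (π / L * u))
  have hπ := arccos_le_pi (cos (π / L * u))
  constructor
  · unfold triangleWave; positivity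
  · calc triangleWave L u ≤ L / π * π := by unfold triangleWave; gcongr
      _ = L := div_mul_cancel₀ L pi_ne_zero

theorem eq_self (hL : 0 < L) {u : ℝ} (hu : u ∈ Icc 0 L) : triangleWave L u = u := by
  have h₁ : 0 ≤ π / L * u := by have := hu.1; positivity
  have h₂ : π / L * u ≤ π := by
    rw [div_mul_eq_mul_div, div_le_iff₀ hL]; exact mul_le_mul_of_nonneg_left hu.2 pi_pos.le
  rw [triangleWave, arccos_cos h₁ h₂]
  field_simp

theorem mem_Ioo (hL : 0 < L) {u : ℝ} (h : sin (π / L * u) ≠ 0) :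
    triangleWave L u ∈ Ioo 0 L := by
  obtain ⟨h₁, h₂⟩ := abs_lt.mp (abs_cos_lt_one_of_sin_ne_zero h)
  have h₀ : 0 < arccos (cos (π / L * u)) := arccos_pos.mpr h₂
  have hπ : arccos (cos (π / L * u)) < π := arccos_lt_pi.mpr h₁
  constructor
  · unfold triangleWave; positivity
  · calc triangleWave L u < L / π * π := by unfold triangleWave; gcongr
      _ = L := div_mul_cancel₀ L pi_ne_zero

theorem eq_zero_or_eq_of_sin_eq_zero {u : ℝ} (h : sin (π / L * u) = 0) :
    triangleWave L u = 0 ∨ triangleWave L u = L := by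
  have : cos (π / L * u) ^ 2 = 1 ^ 2 := by nlinarith [sin_sq_add_cos_sq (π / L * u)]
  rcases eq_or_eq_neg_of_sq_eq_sq _ _ this with h₁ | h₁
  · left; simp [triangleWave, h₁]
  · right; simp [triangleWave, h₁, pi_ne_zero]

theorem hasDerivAt (hL : 0 < L) {u : ℝ} (h : sin (π / L * u) ≠ 0) :
    HasDerivAt (triangleWave L) (SignType.sign (sin (π / L * u)) : ℝ) u := by
  obtain ⟨h₁, h₂⟩ := abs_lt.mp (abs_cos_lt_one_of_sin_ne_zero h)
  have hcos : HasDerivAt (fun u => cos (π / L * u)) (-sin (π / L * u) * (π / L)) u := by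
    simpa using ((hasDerivAt_id u).const_mul (π / L)).cos
  refine (((hasDerivAt_arccos h₁.ne' h₂.ne).comp u hcos).const_mul (L / π)).congr_deriv ?_
  rw [← sin_sq, sqrt_sq_eq_abs]
  generalize sin (π / L * u) = s at h
  field_simp
  exact (abs_mul_sign s).symm

end triangleWave

theorem continuous_sign_mul {X : Type*} [TopologicalSpace X] {s w : X → ℝ} (hs : Continuous s)
    (hw : Continuous w) (h : ∀ x, s x = 0 → w x = 0) :
    Continuous fun x => (SignType.sign (s x) : ℝ) * w x := by
  refine continuous_iff_continuousAt.mpr fun x => ?_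
  by_cases hx : s x = 0
  · have hw0 : Tendsto w (𝓝 x) (𝓝 0) := h x hx ▸ hw.continuousAt
    rw [ContinuousAt, hx, h x hx, mul_zero]
    refine squeeze_zero_norm (fun y => ?_) (tendsto_norm_zero.comp hw0)
    rw [norm_mul]
    refine mul_le_of_le_one_left (norm_nonneg _) ?_
    rcases lt_trichotomy (s y) 0 with hy | hy | hy <;> simp [hy]
  · have hsign : ContinuousAt (fun y => (SignType.sign (s y) : ℝ)) x :=
      (continuous_of_discreteTopology (f := ((↑) : SignType → ℝ))).continuousAt.comp
        ((continuousAt_sign_of_ne_zero hx).comp hs.continuousAt)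
    exact hsign.mul hw.continuousAt

theorem hasDerivAt_of_hasDerivAt_off_countable {E : Type*} [NormedAddCommGroup E]
    [NormedSpace ℝ E] [CompleteSpace E] {f f' : ℝ → E} {S : Set ℝ} (hS : S.Countable)
    (hf : Continuous f) (hf' : Continuous f') (h : ∀ x ∉ S, HasDerivAt f (f' x) x) (x : ℝ) :
    HasDerivAt f (f' x) x := by
  have hFTC : f = fun y => f 0 + ∫ t in 0..y, f' t := by
    funext y
    rw [integral_eq_of_hasDerivAt_off_countable f f' hS hf.continuousOn
      (fun t ht => h t ht.2) (hf'.intervalIntegrable _ _)]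
    abel
  rw [hFTC]
  exact ((hf'.integral_hasStrictDerivAt 0 x).hasDerivAt).const_add _

theorem contDiff_comp_triangleWave {f v : ℝ → ℝ} {L : ℝ} (hL : 0 < L)
    (hf : ContinuousOn f (Icc 0 L)) (hv : ContinuousOn v (Icc 0 L))
    (hfv : ∀ u ∈ Ioo 0 L, HasDerivAt f (v u) u) (hv0 : v 0 = 0) (hvL : v L = 0) :
    ContDiff ℝ 1 (f ∘ triangleWave L) ∧
      ∀ u, |deriv (f ∘ triangleWave L) u| = |v (triangleWave L u)| := by
  set d : ℝ → ℝ := fun u => (SignType.sign (sin (π / L * u)) : ℝ) * v (triangleWave L u)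
  have hvanish : ∀ u, sin (π / L * u) = 0 → v (triangleWave L u) = 0 := fun u hu => by
    rcases triangleWave.eq_zero_or_eq_of_sin_eq_zero hu with h | h <;> simp [h, hv0, hvL]
  have hd : Continuous d := continuous_sign_mul (by fun_prop)
    (hv.comp_continuous triangleWave.continuous (triangleWave.mem_Icc hL.le)) hvanish
  have hS : {u | sin (π / L * u) = 0}.Countable := by
    refine (countable_range (fun k : ℤ => k * L)).mono fun u hu => ?_
    obtain ⟨k, hk⟩ := sin_eq_zero_iff.mp hu
    exact ⟨k, by field_simp at hk ⊢; linarith⟩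
  have hderiv : ∀ u, HasDerivAt (f ∘ triangleWave L) (d u) u :=
    hasDerivAt_of_hasDerivAt_off_countable hS
      (hf.comp_continuous triangleWave.continuous (triangleWave.mem_Icc hL.le)) hd
      fun u hu => ((hfv _ (triangleWave.mem_Ioo hL hu)).comp u
        (triangleWave.hasDerivAt hL hu)).congr_deriv (mul_comm _ _)
  refine ⟨contDiff_one_iff_deriv.mpr ⟨fun u => (hderiv u).differentiableAt, ?_⟩, fun u => ?_⟩
  · rwa [funext fun u => (hderiv u).deriv]
  · rw [(hderiv u).deriv, abs_mul]
    by_cases hu : sin (π / L * u) = 0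
    · simp [hvanish u hu]
    · rcases lt_or_gt_of_ne hu with hs | hs <;> simp [hs]

theorem nonneg_of_pos_on_Ioo {f : ℝ → ℝ} {a b : ℝ} (ha : f a = 0) (hb : f b = 0)
    (hpos : ∀ s ∈ Ioo a b, 0 < f s) {s : ℝ} (hs : s ∈ Icc a b) : 0 ≤ f s := by
  rcases eq_endpoints_or_mem_Ioo_of_mem_Icc hs with rfl | rfl | hs
  · exact ha.ge
  · exact hb.ge
  · exact (hpos s hs).le

theorem exists_periodic_abs_deriv_eq {ψ : ℝ → ℝ} {a b : ℝ} (hab : a < b)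
    (hψ : ContinuousOn ψ (Icc a b)) (hpos : ∀ s ∈ Ioo a b, 0 < ψ s) (ha : ψ a = 0)
    (hb : ψ b = 0) (hint : IntervalIntegrable (fun s => (ψ s)⁻¹) volume a b) :
    ∃ g : ℝ → ℝ, ContDiff ℝ 1 g ∧ Function.Periodic g (2 * ∫ s in a..b, (ψ s)⁻¹) ∧
      (∀ u, g u ∈ Icc a b) ∧ g 0 = a ∧ g (∫ s in a..b, (ψ s)⁻¹) = b ∧
      StrictMonoOn g (Icc 0 (∫ s in a..b, (ψ s)⁻¹)) ∧ ∀ u, |deriv g u| = ψ (g u) := by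
  obtain ⟨hL, g₀, hg₀c, hg₀mem, hg₀a, hg₀b, hg₀m, hg₀d⟩ :=
    exists_inverse_primitive (F := fun s => (ψ s)⁻¹) hab
      ((hψ.mono Ioo_subset_Icc_self).inv₀ fun s hs => (hpos s hs).ne')
      (fun s hs => inv_pos.mpr (hpos s hs)) hint
  set L := ∫ s in a..b, (ψ s)⁻¹
  obtain ⟨hgC1, hderiv⟩ := contDiff_comp_triangleWave (v := ψ ∘ g₀) hL hg₀c.continuousOn
    (hψ.comp_continuous hg₀c hg₀mem).continuousOn
    (fun u hu => by simpa only [inv_inv, Function.comp_apply] using hg₀d u hu) (by simp [hg₀a, ha])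
    (by simp [hg₀b, hb])
  refine ⟨g₀ ∘ triangleWave L, hgC1, (triangleWave.periodic hL.ne').comp g₀,
    fun u => hg₀mem _, ?_, ?_, ?_, fun u => ?_⟩
  · simp [triangleWave.eq_self hL (left_mem_Icc.mpr hL.le), hg₀a]
  · simp [triangleWave.eq_self hL (right_mem_Icc.mpr hL.le), hg₀b]
  · exact hg₀m.congr fun u hu => by simp [triangleWave.eq_self hL hu]
  · rw [hderiv u, Function.comp_apply, abs_of_nonneg (nonneg_of_pos_on_Ioo ha hb hpos (hg₀mem _))]
    rfl

theorem energy_eq_of_sq_eq {n : ℕ} (hn : 1 ≤ n) {H C s p : ℝ} (hs : s ≠ 0)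
    (hp : p ^ 2 = (C * s ^ (2 * n - 2) - 1 - (1 + H ^ 2) * s ^ (2 * n) - 2 * H * s ^ n) /
      s ^ (2 * n - 2)) :
    p ^ 2 + s ^ (2 - 2 * (n : ℤ)) + (1 + H ^ 2) * s ^ 2 + 2 * H * s ^ (2 - (n : ℤ)) = C := by
  obtain ⟨m, rfl⟩ : ∃ m, n = m + 1 := ⟨n - 1, by omega⟩
  have h₁ : s ^ (2 - 2 * ((m + 1 : ℕ) : ℤ)) = (s ^ (2 * m))⁻¹ := by
    rw [← zpow_natCast, ← zpow_neg]; push_cast; ring_nf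
  have h₂ : s ^ (2 - ((m + 1 : ℕ) : ℤ)) = s / s ^ m := by
    rw [div_eq_mul_inv, ← zpow_natCast, ← zpow_neg, ← zpow_one_add₀ hs]; push_cast; ring_nf
  rw [hp, h₁, h₂, show 2 * (m + 1) - 2 = 2 * m by omega]
  field_simp
  ring

theorem stmt_5_general (n : ℕ) (hn : 2 ≤ n) (H C : ℝ)
    (t₁ t₂ : ℝ) (ht₁ : 0 < t₁) (h12 : t₁ < t₂)
    (ξ : ℝ → ℝ)
    (hξ : ξ = fun s : ℝ => C * s ^ (2 * n - 2) - 1 - (1 + H ^ 2) * s ^ (2 * n)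
      - 2 * H * s ^ n)
    (hz1 : ξ t₁ = 0) (hz2 : ξ t₂ = 0)
    (hpos : ∀ s ∈ Set.Ioo t₁ t₂, 0 < ξ s)
    (hd1 : deriv ξ t₁ ≠ 0) (hd2 : deriv ξ t₂ ≠ 0)
    (T : ℝ)
    (hT : T = 2 * ∫ t in t₁..t₂, t ^ (n - 1) / Real.sqrt (ξ t)) :
    ∃ g : ℝ → ℝ, ContDiff ℝ 1 g ∧ Function.Periodic g T ∧
      (∀ u, g u ∈ Set.Icc t₁ t₂) ∧ g 0 = t₁ ∧ g (T / 2) = t₂ ∧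
      StrictMonoOn g (Set.Icc 0 (T / 2)) ∧
      ∀ u, (deriv g u) ^ 2 + (g u) ^ (2 - 2 * (n : ℤ)) + (1 + H ^ 2) * (g u) ^ 2
        + 2 * H * (g u) ^ (2 - (n : ℤ)) = C := by
  have hξc : Continuous ξ := by subst hξ; fun_prop
  have hξd : Differentiable ℝ ξ := by subst hξ; fun_prop
  have hint := intervalIntegrable_div_sqrt_of_simple_zeros h12 (continuous_pow (n - 1)) hξc
    (hξd t₁) (hξd t₂) hz1 hz2 hd1 hd2 hpos
  obtain ⟨g, hgC1, hper, hmem, hg₁, hg₂, hmono, hderiv⟩ :=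
    exists_periodic_abs_deriv_eq (ψ := fun s => √(ξ s) / s ^ (n - 1)) h12
      (hξc.continuousOn.sqrt.div (continuous_pow _).continuousOn
        fun s hs => pow_ne_zero _ (ht₁.trans_le hs.1).ne')
      (fun s hs => div_pos (sqrt_pos.mpr (hpos s hs)) (pow_pos (ht₁.trans hs.1) _))
      (by simp [hz1]) (by simp [hz2]) (by simpa only [inv_div] using hint)
  simp only [inv_div, ← hT] at hper hg₂ hmono
  have hTL : T / 2 = ∫ t in t₁..t₂, t ^ (n - 1) / √(ξ t) := by rw [hT]; ring
  refine ⟨g, hgC1, hper, hmem, hg₁, hTL ▸ hg₂, hTL ▸ hmono, fun u => ?_⟩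
  have hg : 0 < g u := ht₁.trans_le (hmem u).1
  have hsq : deriv g u ^ 2 = ξ (g u) / g u ^ (2 * n - 2) := by
    rw [← sq_abs, hderiv u, div_pow, sq_sqrt (nonneg_of_pos_on_Ioo hz1 hz2 hpos (hmem u)),
      ← pow_mul]
    congr 2
    omega
  rw [hξ] at hsq
  exact energy_eq_of_sq_eq (by omega) hg.ne' hsq

/-- Given `0 < t₁ < t₂` simple consecutive zeros of
`ξ s = C s^{2n−2} − 1 − (1+H²)s^{2n} − 2H sⁿ`, with `ξ > 0` on `(t₁, t₂)`, and
`T = 2 ∫_{t₁}^{t₂} t^{n−1}/√(ξ t) dt`, there is a `C¹`, `T`-periodic function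
`g : ℝ → [t₁, t₂]` with `g 0 = t₁`, `g (T/2) = t₂`, strictly increasing on `[0, T/2]`,
satisfying `(g')² + g^{2−2n} + (1+H²)g² + 2H g^{2−n} = C`. -/
theorem stmt_5 (n : ℕ) (hn : 2 ≤ n) (H C : ℝ) (hC : 0 < C)
    (t₁ t₂ : ℝ) (ht₁ : 0 < t₁) (h12 : t₁ < t₂)
    (ξ : ℝ → ℝ)
    (hξ : ξ = fun s : ℝ => C * s ^ (2 * n - 2) - 1 - (1 + H ^ 2) * s ^ (2 * n)
      - 2 * H * s ^ n)
    (hz1 : ξ t₁ = 0) (hz2 : ξ t₂ = 0)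
    (hpos : ∀ s ∈ Set.Ioo t₁ t₂, 0 < ξ s)
    (hd1 : deriv ξ t₁ ≠ 0) (hd2 : deriv ξ t₂ ≠ 0)
    (T : ℝ)
    (hT : T = 2 * ∫ t in t₁..t₂, t ^ (n - 1) / Real.sqrt (ξ t)) :
    ∃ g : ℝ → ℝ, ContDiff ℝ 1 g ∧ Function.Periodic g T ∧
      (∀ u, g u ∈ Set.Icc t₁ t₂) ∧ g 0 = t₁ ∧ g (T / 2) = t₂ ∧
      StrictMonoOn g (Set.Icc 0 (T / 2)) ∧
      ∀ u, (deriv g u) ^ 2 + (g u) ^ (2 - 2 * (n : ℤ)) + (1 + H ^ 2) * (g u) ^ 2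
        + 2 * H * (g u) ^ (2 - (n : ℤ)) = C :=
  stmt_5_general n hn H C t₁ t₂ ht₁ h12 ξ hξ hz1 hz2 hpos hd1 hd2 T hT
end

section
/- Let H ≥ 0 and C > 2(H + √(1+H²)) be real numbers (so that C² − 4CH − 4 > 0). Define g : ℝ → ℝ by g(t) = √( ((C − 2H) + √(C² − 4CH − 4)·sin(2√(1+H²)·t)) / (2(1+H²)) ). Then g is well-defined (the expression under the outer square root is strictly positive for all t), smooth, periodic with period π/√(1+H²), and satisfies (g′(t))² + g(t)^{−2} + (1+H²)·g(t)² + 2H = C for all t ∈ ℝ. -/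
open Real

set_option maxHeartbeats 1000000 in
/-- For `H ≥ 0` and `C > 2(H + √(1+H²))` (so `C² − 4CH − 4 > 0`), the
function `g t = √(((C−2H) + √(C²−4CH−4) sin(2√(1+H²) t))/(2(1+H²)))` is well defined
(positive radicand), smooth, periodic with period `π/√(1+H²)`, and satisfies
`(g')² + g^{−2} + (1+H²)g² + 2H = C`. -/
theorem stmt_6 (H C : ℝ) (hH : 0 ≤ H) (hC : 2 * (H + Real.sqrt (1 + H ^ 2)) < C)
    (g : ℝ → ℝ)
    (hg : g = fun t : ℝ => Real.sqrt (((C - 2 * H) + Real.sqrt (C ^ 2 - 4 * C * H - 4)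
      * Real.sin (2 * Real.sqrt (1 + H ^ 2) * t)) / (2 * (1 + H ^ 2)))) :
    0 < C ^ 2 - 4 * C * H - 4 ∧
    (∀ t : ℝ, 0 < ((C - 2 * H) + Real.sqrt (C ^ 2 - 4 * C * H - 4)
      * Real.sin (2 * Real.sqrt (1 + H ^ 2) * t)) / (2 * (1 + H ^ 2))) ∧
    ContDiff ℝ (⊤ : ℕ∞) g ∧
    Function.Periodic g (Real.pi / Real.sqrt (1 + H ^ 2)) ∧
    ∀ t, (deriv g t) ^ 2 + (g t) ^ (-(2 : ℤ)) + (1 + H ^ 2) * (g t) ^ 2 + 2 * H = C := by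
  have hs2 : (0:ℝ) < 1 + H ^ 2 := by positivity
  set s := Real.sqrt (1 + H ^ 2) with hsdef
  have hs : 0 < s := Real.sqrt_pos.2 hs2
  have hss : s ^ 2 = 1 + H ^ 2 := Real.sq_sqrt hs2.le
  have ha : 2 * s < C - 2 * H := by linarith
  have haD : C ^ 2 - 4 * C * H - 4 = (C - 2 * H) ^ 2 - 4 * s ^ 2 := by rw [hss]; ring
  have hD : 0 < C ^ 2 - 4 * C * H - 4 := by rw [haD]; nlinarith
  set b := Real.sqrt (C ^ 2 - 4 * C * H - 4) with hbdef
  have hb0 : 0 ≤ b := Real.sqrt_nonneg _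
  have hbb : b ^ 2 = C ^ 2 - 4 * C * H - 4 := Real.sq_sqrt hD.le
  have hbD : b < C - 2 * H := by
    nlinarith [hbb, haD, hs]
  set a := C - 2 * H with hadef
  -- positivity of the radicand
  have hpos : ∀ t : ℝ, 0 < (a + b * Real.sin (2 * s * t)) / (2 * (1 + H ^ 2)) := by
    intro t
    apply div_pos _ (by positivity)
    nlinarith [Real.neg_one_le_sin (2 * s * t), Real.sin_le_one (2 * s * t)]
  set r : ℝ → ℝ := fun t => (a + b * Real.sin (2 * s * t)) / (2 * (1 + H ^ 2)) with hrdef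
  have hgr : g = fun t => Real.sqrt (r t) := hg
  have hrd : ∀ t : ℝ, HasDerivAt r (b * (Real.cos (2 * s * t) * (2 * s)) / (2 * (1 + H ^ 2))) t := by
    intro t
    have h1 : HasDerivAt (fun t : ℝ => 2 * s * t) (2 * s) t := by
      simpa using (hasDerivAt_id t).const_mul (2 * s)
    exact (((Real.hasDerivAt_sin (2 * s * t)).comp t h1).const_mul b).const_add a |>.div_const _
  have hrC : ContDiff ℝ (⊤ : ℕ∞) r := by
    apply ContDiff.div_const
    exact contDiff_const.add (contDiff_const.mul (Real.contDiff_sin.comp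
      (contDiff_const.mul contDiff_id)))
  refine ⟨hD, hpos, ?_, ?_, ?_⟩
  · rw [contDiff_iff_contDiffAt]
    intro t
    rw [hgr]
    exact (Real.contDiffAt_sqrt (hpos t).ne').comp t hrC.contDiffAt
  · intro t
    rw [hgr]
    simp only
    have h2 : 2 * s * (t + Real.pi / s) = 2 * s * t + 2 * Real.pi := by
      field_simp
    rw [hrdef]
    simp only [h2, Real.sin_add_two_pi]
  · intro t
    have hgd : HasDerivAt g (b * (Real.cos (2 * s * t) * (2 * s)) / (2 * (1 + H ^ 2))
        / (2 * Real.sqrt (r t))) t := by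
      rw [hgr]
      exact (hrd t).sqrt (hpos t).ne'
    have hgt : g t = Real.sqrt (r t) := by rw [hgr]
    have hg2 : g t ^ 2 = r t := by rw [hgt]; exact Real.sq_sqrt (hpos t).le
    have hgpos : 0 < g t := by rw [hgt]; exact Real.sqrt_pos.2 (hpos t)
    rw [hgd.deriv]
    have hzp : (g t) ^ (-(2:ℤ)) = (g t ^ 2)⁻¹ := by
      rw [zpow_neg]; norm_cast
    rw [hzp, hg2]
    set u := a + b * Real.sin (2 * s * t) with hudef
    have hu : 0 < u := by
      nlinarith [Real.neg_one_le_sin (2 * s * t), Real.sin_le_one (2 * s * t)]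
    have hsin : Real.sin (2 * s * t) ^ 2 + Real.cos (2 * s * t) ^ 2 = 1 :=
      Real.sin_sq_add_cos_sq _
    have key : b ^ 2 * Real.cos (2 * s * t) ^ 2 + 4 * s ^ 2 + u ^ 2 + 4 * H * u
        - 2 * C * u = 0 := by
      rw [hudef, hadef]
      nlinarith [hsin, hbb, haD]
    have hrval : r t = u / (2 * (1 + H ^ 2)) := rfl
    have hrt : 0 < r t := hpos t
    rw [div_pow, mul_pow 2 (Real.sqrt (r t)), Real.sq_sqrt hrt.le, hrval]
    rw [← hss]
    have hs2' : s ^ 2 ≠ 0 := by positivity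
    field_simp
    linear_combination key
end

section
/- Let H ≥ 0 and C > 2(H + √(1+H²)) be real numbers, and set t₁ = √((C − 2H − √(C² − 4CH − 4))/(2(1+H²))) and t₂ = √((C − 2H + √(C² − 4CH − 4))/(2(1+H²))). Then 0 < t₁ < t₂, the polynomial ξ(s) = C·s² − 1 − (1+H²)s⁴ − 2H·s² satisfies ξ(t₁) = ξ(t₂) = 0 and ξ(s) > 0 for all s ∈ (t₁, t₂), and the function g(t) = √(((C − 2H) + √(C² − 4CH − 4)·sin(2√(1+H²)·t))/(2(1+H²))) takes values in [t₁, t₂], with minimum value t₁ and maximum value t₂. -/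
open Real Set

/-!
Put `a = 1 + H²`, `b = C - 2H`, so that `C² - 4CH - 4 = b² - 4a` and
`ξ s = b s² - 1 - a s⁴` is a quadratic in `u = s²` with roots `t₁² < t₂²`; the hypothesis on
`C` is `b > 2√a`, i.e. `b > 0` with positive discriminant. The factorisation
`ξ s = a (s² - t₁²)(t₂² - s²)` gives the zeros and the sign, and `g² = (b + √(b² - 4a) sin θ)/(2a)`
sweeps `[t₁², t₂²]` as `sin θ` sweeps `[-1, 1]`.
-/

-- The two roots of `a u² - b u + 1`.
noncomputable def lowerRoot (a b : ℝ) : ℝ := (b - √(b ^ 2 - 4 * a)) / (2 * a)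

noncomputable def upperRoot (a b : ℝ) : ℝ := (b + √(b ^ 2 - 4 * a)) / (2 * a)

section Roots

variable {a b : ℝ}

theorem four_mul_lt_sq (ha : 0 ≤ a) (hb : 2 * √a < b) : 4 * a < b ^ 2 := by
  calc 4 * a = (2 * √a) ^ 2 := by rw [mul_pow, sq_sqrt ha]; norm_num
    _ < b ^ 2 := by gcongr

theorem sqrt_sq_sub_four_mul_lt (ha : 0 < a) (hb : 2 * √a < b) : √(b ^ 2 - 4 * a) < b := by
  have hb₀ : 0 < b := lt_of_le_of_lt (by positivity) hb
  rw [sqrt_lt' hb₀]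
  linarith

theorem lowerRoot_pos (ha : 0 < a) (hb : 2 * √a < b) : 0 < lowerRoot a b :=
  div_pos (sub_pos.2 (sqrt_sq_sub_four_mul_lt ha hb)) (by positivity)

theorem lowerRoot_lt_upperRoot (ha : 0 < a) (hb : 2 * √a < b) : lowerRoot a b < upperRoot a b := by
  have hD : 0 < √(b ^ 2 - 4 * a) := sqrt_pos.2 (sub_pos.2 (four_mul_lt_sq ha.le hb))
  unfold lowerRoot upperRoot
  gcongr
  linarith

theorem mul_sub_one_sub_mul_sq_eq (ha : a ≠ 0) (hD : 4 * a ≤ b ^ 2) (u : ℝ) :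
    b * u - 1 - a * u ^ 2 = a * (u - lowerRoot a b) * (upperRoot a b - u) := by
  have hs : √(b ^ 2 - 4 * a) ^ 2 = b ^ 2 - 4 * a := sq_sqrt (by linarith)
  unfold lowerRoot upperRoot
  generalize √(b ^ 2 - 4 * a) = d at hs ⊢
  field_simp
  linear_combination (-1 : ℝ) * hs

theorem div_add_mul_sin_mem_Icc (ha : 0 ≤ a) (θ : ℝ) :
    (b + √(b ^ 2 - 4 * a) * sin θ) / (2 * a) ∈ Icc (lowerRoot a b) (upperRoot a b) := by
  have hD : 0 ≤ √(b ^ 2 - 4 * a) := sqrt_nonneg _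
  have h₁ : √(b ^ 2 - 4 * a) * (-1) ≤ √(b ^ 2 - 4 * a) * sin θ :=
    mul_le_mul_of_nonneg_left (neg_one_le_sin θ) hD
  have h₂ : √(b ^ 2 - 4 * a) * sin θ ≤ √(b ^ 2 - 4 * a) * 1 :=
    mul_le_mul_of_nonneg_left (sin_le_one θ) hD
  unfold lowerRoot upperRoot
  constructor <;> gcongr <;> linarith

end Roots

theorem exists_sin_mul_eq_one {ω : ℝ} (hω : ω ≠ 0) : ∃ t, sin (ω * t) = 1 :=
  ⟨π / 2 / ω, by rw [mul_div_cancel₀ _ hω, sin_pi_div_two]⟩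

theorem exists_sin_mul_eq_neg_one {ω : ℝ} (hω : ω ≠ 0) : ∃ t, sin (ω * t) = -1 :=
  ⟨-(π / 2) / ω, by rw [mul_div_cancel₀ _ hω, sin_neg, sin_pi_div_two]⟩

theorem stmt_7_general (H C : ℝ) (hC : 2 * (H + Real.sqrt (1 + H ^ 2)) < C)
    (t₁ t₂ : ℝ)
    (ht₁ : t₁ = Real.sqrt ((C - 2 * H - Real.sqrt (C ^ 2 - 4 * C * H - 4))
      / (2 * (1 + H ^ 2))))
    (ht₂ : t₂ = Real.sqrt ((C - 2 * H + Real.sqrt (C ^ 2 - 4 * C * H - 4))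
      / (2 * (1 + H ^ 2))))
    (ξ : ℝ → ℝ)
    (hξ : ξ = fun s : ℝ => C * s ^ 2 - 1 - (1 + H ^ 2) * s ^ 4 - 2 * H * s ^ 2)
    (g : ℝ → ℝ)
    (hg : g = fun t : ℝ => Real.sqrt (((C - 2 * H) + Real.sqrt (C ^ 2 - 4 * C * H - 4)
      * Real.sin (2 * Real.sqrt (1 + H ^ 2) * t)) / (2 * (1 + H ^ 2)))) :
    0 < t₁ ∧ t₁ < t₂ ∧ ξ t₁ = 0 ∧ ξ t₂ = 0 ∧ (∀ s ∈ Set.Ioo t₁ t₂, 0 < ξ s) ∧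
    (∀ t, g t ∈ Set.Icc t₁ t₂) ∧ (∃ t, g t = t₁) ∧ (∃ t, g t = t₂) := by
  set a := 1 + H ^ 2
  set b := C - 2 * H
  have ha : 0 < a := by positivity
  have hb : 2 * √a < b := by linarith
  have hdisc : C ^ 2 - 4 * C * H - 4 = b ^ 2 - 4 * a := by ring
  rw [hdisc] at ht₁ ht₂ hg
  change t₁ = √(lowerRoot a b) at ht₁
  change t₂ = √(upperRoot a b) at ht₂
  have hu₁ := lowerRoot_pos ha hb
  have hu₁₂ := lowerRoot_lt_upperRoot ha hb
  have hξ' (s : ℝ) : ξ s = a * (s ^ 2 - lowerRoot a b) * (upperRoot a b - s ^ 2) := by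
    rw [← mul_sub_one_sub_mul_sq_eq ha.ne' (four_mul_lt_sq ha.le hb).le, hξ]
    ring
  have hg' (t : ℝ) : g t = √((b + √(b ^ 2 - 4 * a) * sin (2 * √a * t)) / (2 * a)) := by
    rw [hg]
  have hω : 2 * √a ≠ 0 := by positivity
  subst ht₁ ht₂
  refine ⟨sqrt_pos.2 hu₁, sqrt_lt_sqrt hu₁.le hu₁₂, ?_, ?_, ?_, ?_, ?_, ?_⟩
  · rw [hξ', sq_sqrt hu₁.le]; ring
  · rw [hξ', sq_sqrt (hu₁.trans hu₁₂).le]; ring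
  · rintro s ⟨hs₁, hs₂⟩
    have hs : 0 < s := (sqrt_pos.2 hu₁).trans hs₁
    have hs₁' : lowerRoot a b < s ^ 2 := (sqrt_lt' hs).1 hs₁
    have hs₂' : s ^ 2 < upperRoot a b := (lt_sqrt hs.le).1 hs₂
    rw [hξ']
    exact mul_pos (mul_pos ha (sub_pos.2 hs₁')) (sub_pos.2 hs₂')
  · intro t
    obtain ⟨h₁, h₂⟩ := div_add_mul_sin_mem_Icc (b := b) ha.le (2 * √a * t)
    rw [hg']
    exact ⟨sqrt_le_sqrt h₁, sqrt_le_sqrt h₂⟩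
  · obtain ⟨t, ht⟩ := exists_sin_mul_eq_neg_one hω
    exact ⟨t, by rw [hg', ht, lowerRoot]; ring_nf⟩
  · obtain ⟨t, ht⟩ := exists_sin_mul_eq_one hω
    exact ⟨t, by rw [hg', ht, upperRoot]; ring_nf⟩

/-- For `H ≥ 0`, `C > 2(H+√(1+H²))`, the numbers
`t₁ = √((C−2H−√(C²−4CH−4))/(2(1+H²)))` and `t₂ = √((C−2H+√(C²−4CH−4))/(2(1+H²)))`
satisfy `0 < t₁ < t₂`, are zeros of `ξ s = Cs² − 1 − (1+H²)s⁴ − 2Hs²` with `ξ > 0` on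
`(t₁, t₂)`, and the explicit periodic solution `g` takes values in `[t₁, t₂]`,
attaining both `t₁` and `t₂`. -/
theorem stmt_7 (H C : ℝ) (hH : 0 ≤ H) (hC : 2 * (H + Real.sqrt (1 + H ^ 2)) < C)
    (t₁ t₂ : ℝ)
    (ht₁ : t₁ = Real.sqrt ((C - 2 * H - Real.sqrt (C ^ 2 - 4 * C * H - 4))
      / (2 * (1 + H ^ 2))))
    (ht₂ : t₂ = Real.sqrt ((C - 2 * H + Real.sqrt (C ^ 2 - 4 * C * H - 4))
      / (2 * (1 + H ^ 2))))
    (ξ : ℝ → ℝ)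
    (hξ : ξ = fun s : ℝ => C * s ^ 2 - 1 - (1 + H ^ 2) * s ^ 4 - 2 * H * s ^ 2)
    (g : ℝ → ℝ)
    (hg : g = fun t : ℝ => Real.sqrt (((C - 2 * H) + Real.sqrt (C ^ 2 - 4 * C * H - 4)
      * Real.sin (2 * Real.sqrt (1 + H ^ 2) * t)) / (2 * (1 + H ^ 2)))) :
    0 < t₁ ∧ t₁ < t₂ ∧ ξ t₁ = 0 ∧ ξ t₂ = 0 ∧ (∀ s ∈ Set.Ioo t₁ t₂, 0 < ξ s) ∧
    (∀ t, g t ∈ Set.Icc t₁ t₂) ∧ (∃ t, g t = t₁) ∧ (∃ t, g t = t₂) :=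
  stmt_7_general H C hC t₁ t₂ ht₁ ht₂ ξ hξ g hg
end

section
/- Let H > 0. For C > 2(H + √(1+H²)) define F(C) = ∫₀^{π} (1/C + H·(−q₂(C)·cos t − q₁(C))) / ((1 + q₁(C) + q₂(C)·cos t)·√(−q₂(C)·cos t − q₁(C))·√(1+H²)) dt, where q₁(C) = (2H − C)/(2C(1+H²)) and q₂(C) = √(C² − 4CH − 4)/(2C(1+H²)). Then F(C) tends to √2·π·(H + √(1+H²))^{3/2} / ((1+H²)^{1/4}·(1 + 2H² + 2H√(1+H²))) as C → (2(H + √(1+H²)))⁺. -/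
open Real Filter MeasureTheory intervalIntegral

/-!
For every `C > 2H` one has `q₂ < -q₁` and `q₂ < 1 + q₁`, so both the radicand and the first
factor of the denominator stay positive for all `t`; hence the integrand is jointly continuous
on `(2H, ∞) × ℝ`, a region that contains the threshold `c₀ = 2(H + √(1+H²))`, and so `F`
extends continuously to `c₀`. At `c₀` the discriminant `C² - 4CH - 4` vanishes, so `q₂ = 0`
and the integrand no longer depends on `t`: the limit is `π` times that constant.
-/

theorem ContinuousOn.parametric_intervalIntegral {X E : Type*} [TopologicalSpace X]
    [NormedAddCommGroup E] [NormedSpace ℝ E] {f : X → ℝ → E} {U : Set X}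
    (hf : ContinuousOn (Function.uncurry f) (U ×ˢ Set.univ)) (a b : ℝ) :
    ContinuousOn (fun x ↦ ∫ t in a..b, f x t) U := by
  rw [continuousOn_iff_continuous_domRestrict]
  have : Continuous fun p : U × ℝ ↦ f p.1 p.2 :=
    hf.comp_continuous (f := fun p : U × ℝ ↦ ((p.1 : X), p.2)) (by fun_prop)
      fun p ↦ ⟨p.1.2, trivial⟩
  exact continuous_parametric_intervalIntegral_of_continuous' (f := fun (x : U) t ↦ f x t)
    this a b

lemma Real.rpow_three_halves {x : ℝ} (hx : 0 ≤ x) : x ^ (3 / 2 : ℝ) = x * √x := by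
  rw [show (3 / 2 : ℝ) = 1 + 1 / 2 by norm_num, rpow_add' hx (by norm_num), rpow_one,
    sqrt_eq_rpow]

lemma Real.rpow_one_fourth {x : ℝ} (hx : 0 ≤ x) : x ^ (1 / 4 : ℝ) = √(√x) := by
  rw [sqrt_eq_rpow, sqrt_eq_rpow, ← rpow_mul hx]; norm_num

noncomputable section

namespace CMCPeriod

variable (H : ℝ)

def q₁ (C : ℝ) : ℝ := (2 * H - C) / (2 * C * (1 + H ^ 2))

def q₂ (C : ℝ) : ℝ := √(C ^ 2 - 4 * C * H - 4) / (2 * C * (1 + H ^ 2))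

def integrand (C t : ℝ) : ℝ :=
  (1 / C + H * (-q₂ H C * cos t - q₁ H C)) /
    ((1 + q₁ H C + q₂ H C * cos t) * √(-q₂ H C * cos t - q₁ H C) * √(1 + H ^ 2))

variable {H}

lemma sqrt_discr_lt_sub {C : ℝ} (hC : 2 * H < C) : √(C ^ 2 - 4 * C * H - 4) < C - 2 * H := by
  rw [sqrt_lt' (by linarith)]
  nlinarith [sq_nonneg H]

lemma q₂_nonneg {C : ℝ} (hC : 0 < C) : 0 ≤ q₂ H C := by
  unfold q₂; positivity

lemma q₂_lt_neg_q₁ (hH : 0 ≤ H) {C : ℝ} (hC : 2 * H < C) : q₂ H C < -q₁ H C := by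
  have hC0 : 0 < C := by linarith
  have hD : 0 < 2 * C * (1 + H ^ 2) := by positivity
  rw [q₂, q₁, ← neg_div, div_lt_div_iff_of_pos_right hD]
  linarith [sqrt_discr_lt_sub hC]

lemma q₂_lt_one_add_q₁ (hH : 0 ≤ H) {C : ℝ} (hC : 2 * H < C) : q₂ H C < 1 + q₁ H C := by
  have hC0 : 0 < C := by linarith
  have hD : 0 < 2 * C * (1 + H ^ 2) := by positivity
  rw [q₂, q₁, one_add_div hD.ne', div_lt_div_iff_of_pos_right hD]
  nlinarith [sqrt_discr_lt_sub hC]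

lemma radicand_pos (hH : 0 ≤ H) {C : ℝ} (hC : 2 * H < C) (t : ℝ) :
    0 < -q₂ H C * cos t - q₁ H C := by
  nlinarith [q₂_lt_neg_q₁ hH hC, q₂_nonneg (H := H) (by linarith : 0 < C), cos_le_one t,
    neg_one_le_cos t]

lemma one_add_q₁_add_q₂_mul_cos_pos (hH : 0 ≤ H) {C : ℝ} (hC : 2 * H < C) (t : ℝ) :
    0 < 1 + q₁ H C + q₂ H C * cos t := by
  nlinarith [q₂_lt_one_add_q₁ hH hC, q₂_nonneg (H := H) (by linarith : 0 < C), cos_le_one t,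
    neg_one_le_cos t]

lemma continuousOn_integrand (hH : 0 ≤ H) :
    ContinuousOn (Function.uncurry (integrand H)) (Set.Ioi (2 * H) ×ˢ Set.univ) := by
  unfold Function.uncurry integrand q₁ q₂
  fun_prop (disch := rintro ⟨C, t⟩ ⟨hC : 2 * H < C, -⟩; first
    | exact (mul_pos (mul_pos (one_add_q₁_add_q₂_mul_cos_pos hH hC t)
        (sqrt_pos.2 (radicand_pos hH hC t))) (by positivity)).ne'
    | have : 0 < C := by linarith
      positivity)

lemma integrand_threshold (t : ℝ) :
    integrand H (2 * (H + √(1 + H ^ 2))) t =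
      √2 * (H + √(1 + H ^ 2)) ^ (3 / 2 : ℝ) /
        ((1 + H ^ 2) ^ (1 / 4 : ℝ) * (1 + 2 * H ^ 2 + 2 * H * √(1 + H ^ 2))) := by
  set s := √(1 + H ^ 2) with hs
  have hs2 : s ^ 2 = 1 + H ^ 2 := sq_sqrt (by positivity)
  have hs0 : 0 < s := by positivity
  have hHs : 0 < H + s := by nlinarith
  have hq₂ : q₂ H (2 * (H + s)) = 0 := by
    rw [q₂, show (2 * (H + s)) ^ 2 - 4 * (2 * (H + s)) * H - 4 = 0 by linear_combination 4 * hs2,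
      sqrt_zero, zero_div]
  have hq₁ : q₁ H (2 * (H + s)) = -(2 * s * (H + s))⁻¹ := by
    rw [q₁, ← hs2]; field_simp; ring
  have hsqrt : √(2 * s * (H + s)) = √2 * √s * √(H + s) := by
    rw [sqrt_mul (by positivity), sqrt_mul (by positivity)]
  simp only [integrand, hq₂, hq₁, zero_mul, neg_zero, zero_sub, add_zero, neg_neg, sqrt_inv,
    hsqrt, Real.rpow_three_halves hHs.le, Real.rpow_one_fourth (by positivity : 0 ≤ 1 + H ^ 2),
    ← hs]
  have hs' : √s ^ 2 = s := sq_sqrt hs0.le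
  have hD : 1 + 2 * H ^ 2 + 2 * H * s ≠ 0 := by nlinarith
  field_simp
  rw [show 2 * s * (H + s) + -1 = 1 + 2 * H ^ 2 + 2 * H * s by linear_combination 2 * hs2, hs',
    mul_div_assoc, div_self hD]
  ring

end CMCPeriod

end

open CMCPeriod in
/-- For `H > 0`, the closed-form period integral `F C` tends to
`√2 π (H+√(1+H²))^{3/2} / ((1+H²)^{1/4}(1+2H²+2H√(1+H²)))` as
`C → (2(H+√(1+H²)))⁺`. -/
theorem stmt_9 (H : ℝ) (hH : 0 < H) (F : ℝ → ℝ)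
    (hF : ∀ C : ℝ, 2 * (H + Real.sqrt (1 + H ^ 2)) < C →
      F C = ∫ t in (0 : ℝ)..Real.pi,
        (1 / C + H * (-(Real.sqrt (C ^ 2 - 4 * C * H - 4) / (2 * C * (1 + H ^ 2))) * Real.cos t
          - (2 * H - C) / (2 * C * (1 + H ^ 2))))
        / ((1 + (2 * H - C) / (2 * C * (1 + H ^ 2))
            + (Real.sqrt (C ^ 2 - 4 * C * H - 4) / (2 * C * (1 + H ^ 2))) * Real.cos t)
          * Real.sqrt (-(Real.sqrt (C ^ 2 - 4 * C * H - 4) / (2 * C * (1 + H ^ 2))) * Real.cos t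
            - (2 * H - C) / (2 * C * (1 + H ^ 2)))
          * Real.sqrt (1 + H ^ 2))) :
    Filter.Tendsto F
      (nhdsWithin (2 * (H + Real.sqrt (1 + H ^ 2)))
        (Set.Ioi (2 * (H + Real.sqrt (1 + H ^ 2)))))
      (nhds (Real.sqrt 2 * Real.pi * (H + Real.sqrt (1 + H ^ 2)) ^ ((3 : ℝ) / 2)
        / ((1 + H ^ 2) ^ ((1 : ℝ) / 4) * (1 + 2 * H ^ 2 + 2 * H * Real.sqrt (1 + H ^ 2))))) := by
  have hc₀ : 2 * H < 2 * (H + √(1 + H ^ 2)) := by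
    have : 0 < √(1 + H ^ 2) := by positivity
    linarith
  have hcont : ContinuousAt (fun C ↦ ∫ t in (0 : ℝ)..π, integrand H C t)
      (2 * (H + √(1 + H ^ 2))) :=
    ((continuousOn_integrand hH.le).parametric_intervalIntegral 0 π).continuousAt
      (Ioi_mem_nhds hc₀)
  have hlim : ∫ t in (0 : ℝ)..π, integrand H (2 * (H + √(1 + H ^ 2))) t =
      √2 * π * (H + √(1 + H ^ 2)) ^ (3 / 2 : ℝ) /
        ((1 + H ^ 2) ^ (1 / 4 : ℝ) * (1 + 2 * H ^ 2 + 2 * H * √(1 + H ^ 2))) := by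
    simp only [integrand_threshold, intervalIntegral.integral_const, sub_zero, smul_eq_mul]
    ring
  rw [← hlim]
  refine (hcont.tendsto.mono_left nhdsWithin_le_nhds).congr' ?_
  filter_upwards [self_mem_nhdsWithin] with C hC
  exact (hF C hC).symm
end

section
/- Let H > 0. For C > 2(H + √(1+H²)) define F(C) = ∫₀^{π} (1/C + H·(−q₂(C)·cos t − q₁(C))) / ((1 + q₁(C) + q₂(C)·cos t)·√(−q₂(C)·cos t − q₁(C))·√(1+H²)) dt, where q₁(C) = (2H − C)/(2C(1+H²)) and q₂(C) = √(C² − 4CH − 4)/(2C(1+H²)). Then F(C) tends to 2·arccot(H) = π − 2·arctan(H) as C → ∞. -/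
/-! In terms of `x = -q₂ cos t - q₁`, for which `1 + q₁ + q₂ cos t = 1 - x`, the integrand is
`(1/C + H x) / ((1 - x) √x √(1 + H²))`. Beyond the threshold `1/C² ≤ x ≤ 1/(1 + H²)`, which
bounds the integrand by `√(1 + H²)/H² + 1/H` uniformly in `C` and `t`. As `C → ∞`,
`x → (1 - cos t)/(2(1 + H²)) = sin²(t/2)/(1 + H²)`, and the integrand tends to
`H sin(t/2) / (H² + cos²(t/2))`, the derivative of `-2 arctan (cos(t/2) / H)`. Dominated
convergence then gives the limit `2 arctan (1/H) = π - 2 arctan H`. -/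

open Real Filter MeasureTheory intervalIntegral Topology

namespace CMCProfile

noncomputable def q₁ (H C : ℝ) : ℝ := (2 * H - C) / (2 * C * (1 + H ^ 2))

noncomputable def q₂ (H C : ℝ) : ℝ := √(C ^ 2 - 4 * C * H - 4) / (2 * C * (1 + H ^ 2))

noncomputable def depth (H C t : ℝ) : ℝ := -q₂ H C * cos t - q₁ H C

noncomputable def periodKernel (H ε x : ℝ) : ℝ := (ε + H * x) / ((1 - x) * √x * √(1 + H ^ 2))

theorem depth_mem_Icc {H C : ℝ} (hH : 0 ≤ H) (hC : 2 * (H + √(1 + H ^ 2)) < C) (t : ℝ) :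
    1 / C ^ 2 ≤ depth H C t ∧ depth H C t ≤ 1 / (1 + H ^ 2) := by
  set a := 1 + H ^ 2
  have ha0 : 0 < a := by positivity
  have hr : √a ^ 2 = a := sq_sqrt ha0.le
  have hC0 : 0 < C := lt_of_le_of_lt (by positivity) hC
  have hdisc : 0 < C ^ 2 - 4 * C * H - 4 := by nlinarith [sqrt_nonneg a]
  set q := √(C ^ 2 - 4 * C * H - 4)
  have hq : q ^ 2 = C ^ 2 - 4 * C * H - 4 := sq_sqrt hdisc.le
  have hq0 : 0 ≤ q := sqrt_nonneg _
  have hdepth : depth H C t = (C - 2 * H - q * cos t) / (2 * C * a) := by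
    simp only [depth, q₁, q₂]; ring
  -- `(C - 2H - q) (C - 2H + q) = 4 (1 + H²)`, and the second factor is at most `2C`.
  have hqlt : q < C - 2 * H := by nlinarith [sqrt_nonneg a]
  have hgap : 2 * a ≤ (C - 2 * H - q) * C := by
    nlinarith [mul_le_mul_of_nonneg_left (show C - 2 * H + q ≤ 2 * C by linarith)
      (sub_pos.2 hqlt).le]
  have hqcos : 0 ≤ q * (1 - cos t) := mul_nonneg hq0 (sub_nonneg.2 (cos_le_one t))
  have hqcos' : 0 ≤ q * (1 + cos t) := mul_nonneg hq0 (by linarith [neg_one_le_cos t])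
  rw [hdepth, div_le_div_iff₀ (by positivity) (by positivity),
    div_le_div_iff₀ (by positivity) ha0]
  constructor
  · nlinarith [mul_le_mul_of_nonneg_right hgap hC0.le, mul_nonneg hqcos (sq_nonneg C)]
  · nlinarith [mul_nonneg hqcos' ha0.le]


theorem abs_periodKernel_le {H ε x : ℝ} (hH : 0 < H) (hε : 0 < ε) (hεx : ε ^ 2 ≤ x)
    (hx : x ≤ 1 / (1 + H ^ 2)) :
    |periodKernel H ε x| ≤ √(1 + H ^ 2) / H ^ 2 + 1 / H := by
  set r := √(1 + H ^ 2)
  have hr : r ^ 2 = 1 + H ^ 2 := sq_sqrt (by positivity)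
  have hr0 : 0 < r := sqrt_pos.2 (by positivity)
  set s := √x
  have hs : s ^ 2 = x := sq_sqrt ((sq_nonneg ε).trans hεx)
  have hεs : ε ≤ s := le_sqrt_of_sq_le hεx
  have hs0 : 0 < s := hε.trans_le hεs
  have hxr : x * r ^ 2 ≤ 1 := by rwa [hr, ← le_div_iff₀ (by positivity)]
  have hsr : s * r ≤ 1 := by
    rwa [← sq_le_one_iff₀ (by positivity), mul_pow, hs]
  have hgap : H ^ 2 ≤ (1 - x) * r ^ 2 := by nlinarith
  have hden : 0 < (1 - x) * s * r := by
    have : 0 < 1 - x := by nlinarith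
    positivity
  unfold periodKernel
  rw [abs_of_nonneg (div_nonneg (by rw [← hs]; positivity) hden.le), div_le_iff₀ hden]
  calc ε + H * x ≤ s + H * s / r := by
        have : H * x ≤ H * s / r := by
          rw [← hs, le_div_iff₀ hr0]
          nlinarith [mul_le_mul_of_nonneg_left hsr (by positivity : 0 ≤ H * s)]
        linarith
    _ = (r / H ^ 2 + 1 / H) * (H ^ 2 * s / r) := by field_simp
    _ ≤ (r / H ^ 2 + 1 / H) * ((1 - x) * s * r) := by
        gcongr
        rw [div_le_iff₀ hr0]; nlinarith

theorem q₁_eq_inv (H : ℝ) {C : ℝ} (hC : C ≠ 0) :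
    q₁ H C = (2 * H * C⁻¹ - 1) / (2 * (1 + H ^ 2)) := by
  unfold q₁; field_simp

theorem q₂_eq_inv (H : ℝ) {C : ℝ} (hC : 0 < C) :
    q₂ H C = √(1 - 4 * H * C⁻¹ - 4 * C⁻¹ ^ 2) / (2 * (1 + H ^ 2)) := by
  have : 1 - 4 * H * C⁻¹ - 4 * C⁻¹ ^ 2 = (C ^ 2 - 4 * C * H - 4) / C ^ 2 := by
    field_simp
  rw [q₂, this, sqrt_div' _ (sq_nonneg C), sqrt_sq hC.le, div_div]
  ring_nf

theorem tendsto_depth (H t : ℝ) :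
    Tendsto (fun C => depth H C t) atTop (𝓝 (sin (t / 2) ^ 2 / (1 + H ^ 2))) := by
  have hcont : Continuous fun u : ℝ => -(√(1 - 4 * H * u - 4 * u ^ 2) / (2 * (1 + H ^ 2)))
      * cos t - (2 * H * u - 1) / (2 * (1 + H ^ 2)) := by fun_prop
  refine ((hcont.tendsto' 0 _ ?_).comp tendsto_inv_atTop_zero).congr' ?_
  · rw [sin_sq_eq_half_sub, mul_div_cancel₀ _ two_ne_zero]
    norm_num
    field_simp
    ring
  · filter_upwards [eventually_gt_atTop 0] with C hC
    simp only [Function.comp, depth, q₁_eq_inv H hC.ne', q₂_eq_inv H hC]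

theorem continuousAt_periodKernel (H : ℝ) {p : ℝ × ℝ} (hp₀ : 0 < p.2) (hp₁ : p.2 ≠ 1) :
    ContinuousAt (fun p : ℝ × ℝ => periodKernel H p.1 p.2) p := by
  unfold periodKernel
  refine ContinuousAt.div (by fun_prop) (by fun_prop) ?_
  have : 0 < √(1 + H ^ 2) := sqrt_pos.2 (by positivity)
  have : 0 < √p.2 := sqrt_pos.2 hp₀
  have : 1 - p.2 ≠ 0 := sub_ne_zero.2 hp₁.symm
  positivity

theorem periodKernel_zero_sin_sq {H θ : ℝ} (hH : 0 < H) (hθ : 0 < sin θ) :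
    periodKernel H 0 (sin θ ^ 2 / (1 + H ^ 2)) = H * sin θ / (H ^ 2 + cos θ ^ 2) := by
  have hr : 0 < √(1 + H ^ 2) := sqrt_pos.2 (by positivity)
  have h1 : 1 - sin θ ^ 2 / (1 + H ^ 2) = (H ^ 2 + cos θ ^ 2) / (1 + H ^ 2) := by
    field_simp
    linarith [sin_sq_add_cos_sq θ]
  rw [periodKernel, h1, sqrt_div' _ (by positivity), sqrt_sq hθ.le, zero_add]
  field_simp

theorem tendsto_periodKernel_depth {H t : ℝ} (hH : 0 < H) (ht : t ∈ Set.Ioc 0 π) :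
    Tendsto (fun C => periodKernel H (1 / C) (depth H C t)) atTop
      (𝓝 (H * sin (t / 2) / (H ^ 2 + cos (t / 2) ^ 2))) := by
  have hsin : 0 < sin (t / 2) := sin_pos_of_pos_of_lt_pi (by linarith [ht.1])
    (by linarith [ht.2, pi_pos])
  have hlim : Tendsto (fun C : ℝ => (1 / C, depth H C t)) atTop
      (𝓝 (0, sin (t / 2) ^ 2 / (1 + H ^ 2))) :=
    (tendsto_const_nhds.div_atTop tendsto_id).prodMk_nhds (tendsto_depth H t)
  rw [← periodKernel_zero_sin_sq hH hsin]
  refine (continuousAt_periodKernel H (by positivity) (ne_of_lt ?_)).tendsto.comp hlim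
  rw [div_lt_one (by positivity)]
  nlinarith [sin_sq_add_cos_sq (t / 2), sq_nonneg (cos (t / 2))]

theorem integral_limitProfile {H : ℝ} (hH : 0 < H) :
    ∫ t in (0 : ℝ)..π, H * sin (t / 2) / (H ^ 2 + cos (t / 2) ^ 2) = π - 2 * arctan H := by
  have hderiv (t : ℝ) : HasDerivAt (fun x => -2 * arctan (cos (x / 2) / H))
      (H * sin (t / 2) / (H ^ 2 + cos (t / 2) ^ 2)) t := by
    have := (((hasDerivAt_id t).div_const 2).cos.div_const H).arctan.const_mul (-2)
    refine this.congr_deriv ?_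
    simp only [id]
    field_simp
  have hcont : Continuous fun t => H * sin (t / 2) / (H ^ 2 + cos (t / 2) ^ 2) :=
    .div (by fun_prop) (by fun_prop) fun t => by positivity
  rw [integral_eq_sub_of_hasDerivAt (fun t _ => hderiv t) (hcont.intervalIntegrable 0 π)]
  simp only [cos_pi_div_two, zero_div, arctan_zero, cos_zero, one_div, arctan_inv_of_pos hH]
  ring

theorem tendsto_integral_periodKernel_depth {H : ℝ} (hH : 0 < H) :
    Tendsto (fun C => ∫ t in (0 : ℝ)..π, periodKernel H (1 / C) (depth H C t)) atTop
      (𝓝 (π - 2 * arctan H)) := by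
  rw [← integral_limitProfile hH]
  refine tendsto_integral_filter_of_dominated_convergence
    (fun _ => √(1 + H ^ 2) / H ^ 2 + 1 / H) (.of_forall fun C => ?_) ?_
    intervalIntegrable_const (.of_forall fun t ht => ?_)
  · exact (by unfold periodKernel depth q₁ q₂; fun_prop : Measurable _).aestronglyMeasurable
  · filter_upwards [eventually_gt_atTop (2 * (H + √(1 + H ^ 2)))] with C hC
    refine .of_forall fun t _ => ?_
    have hC0 : 0 < C := lt_trans (by positivity) hC
    obtain ⟨hlow, hup⟩ := depth_mem_Icc hH.le hC t
    exact abs_periodKernel_le hH (by positivity) (by rwa [div_pow, one_pow]) hup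
  · rw [Set.uIoc_of_le pi_pos.le] at ht
    exact tendsto_periodKernel_depth hH ht

end CMCProfile

open CMCProfile

/-- For `H > 0`, the closed-form period integral `F C` tends to
`2 arccot H = π − 2 arctan H` as `C → ∞`. -/
theorem stmt_10 (H : ℝ) (hH : 0 < H) (F : ℝ → ℝ)
    (hF : ∀ C : ℝ, 2 * (H + Real.sqrt (1 + H ^ 2)) < C →
      F C = ∫ t in (0 : ℝ)..Real.pi,
        (1 / C + H * (-(Real.sqrt (C ^ 2 - 4 * C * H - 4) / (2 * C * (1 + H ^ 2))) * Real.cos t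
          - (2 * H - C) / (2 * C * (1 + H ^ 2))))
        / ((1 + (2 * H - C) / (2 * C * (1 + H ^ 2))
            + (Real.sqrt (C ^ 2 - 4 * C * H - 4) / (2 * C * (1 + H ^ 2))) * Real.cos t)
          * Real.sqrt (-(Real.sqrt (C ^ 2 - 4 * C * H - 4) / (2 * C * (1 + H ^ 2))) * Real.cos t
            - (2 * H - C) / (2 * C * (1 + H ^ 2)))
          * Real.sqrt (1 + H ^ 2))) :
    Filter.Tendsto F Filter.atTop (nhds (Real.pi - 2 * Real.arctan H)) := by
  refine (tendsto_integral_periodKernel_depth hH).congr' ?_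
  filter_upwards [eventually_gt_atTop (2 * (H + √(1 + H ^ 2)))] with C hC
  rw [hF C hC]
  refine integral_congr fun t _ => ?_
  rw [periodKernel, show 1 - depth H C t = 1 + q₁ H C + q₂ H C * cos t by rw [depth]; ring]
  rfl
end

section
/- Let n ≥ 2 and m ≥ 2 be integers and let H be a real number with cot(π/m) < H < (m² − 2)·√(n−1)/(n·√(m² − 1)). Then 2·arccot(H) < 2π/m < π·√(2 − 2nH/√(4(n−1) + n²H²)), where arccot(H) = π/2 − arctan(H). -/
/-!
Both inequalities are elementary. The left one is `π/2 - π/m < arctan H`, which is the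
hypothesis `cot (π/m) < H` after applying the increasing function `arctan`, since
`arctan (cot x) = π/2 - x` for `0 < x < π`. For the right one, `2/m < √(2 - 2nH/S)` with
`S = √(4(n-1) + n²H²)` amounts to `nHm² < (m² - 2) S`; squaring, and using
`(m² - 2)² S² - (nHm²)² = 4((m² - 2)²(n - 1) - n²H²(m² - 1))`, this is the square of the upper
bound on `H`. That squaring needs `H ≥ 0`, which the left inequality supplies.
-/

open Real

namespace Real

theorem arctan_cot {x : ℝ} (hx₀ : 0 < x) (hxπ : x < π) : arctan (cot x) = π / 2 - x := by
  rw [← tan_inv_eq_cot, ← tan_pi_div_two_sub, arctan_tan] <;> linarith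

theorem pi_div_two_sub_arctan_lt {x H : ℝ} (hx₀ : 0 < x) (hxπ : x < π) (h : cot x < H) :
    π / 2 - arctan H < x := by
  have := arctan_strictMono h
  rw [arctan_cot hx₀ hxπ] at this
  linarith

end Real

section PeriodBound

variable {n m H : ℝ}

theorem sq_mul_lt_of_lt_div_sqrt (hn : 1 ≤ n) (hm : 1 < m ^ 2) (hH : 0 ≤ H)
    (h : H < (m ^ 2 - 2) * √(n - 1) / (n * √(m ^ 2 - 1))) :
    n ^ 2 * H ^ 2 * (m ^ 2 - 1) < (m ^ 2 - 2) ^ 2 * (n - 1) := by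
  rw [lt_div_iff₀ (by have := sqrt_pos.mpr (sub_pos.mpr hm); positivity)] at h
  have := pow_lt_pow_left₀ h (by positivity) two_ne_zero
  rw [mul_pow, mul_pow, mul_pow, sq_sqrt (by linarith), sq_sqrt (by linarith)] at this
  linarith

theorem mul_sq_lt_mul_sqrt (hn : 1 ≤ n) (hm : 2 < m ^ 2)
    (h : n ^ 2 * H ^ 2 * (m ^ 2 - 1) < (m ^ 2 - 2) ^ 2 * (n - 1)) :
    n * H * m ^ 2 < (m ^ 2 - 2) * √(4 * (n - 1) + n ^ 2 * H ^ 2) := by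
  have hS : 0 ≤ 4 * (n - 1) + n ^ 2 * H ^ 2 := by positivity
  refine lt_of_pow_lt_pow_left₀ 2 (mul_nonneg (by linarith) (sqrt_nonneg _)) ?_
  rw [mul_pow _ √_, sq_sqrt hS]
  nlinarith

theorem two_div_lt_sqrt_two_sub (hn : 1 < n) (hm₀ : 0 < m) (hm : 2 < m ^ 2) (hH : 0 ≤ H)
    (h : H < (m ^ 2 - 2) * √(n - 1) / (n * √(m ^ 2 - 1))) :
    2 / m < √(2 - 2 * n * H / √(4 * (n - 1) + n ^ 2 * H ^ 2)) := by
  have hkey := mul_sq_lt_mul_sqrt hn.le hm (sq_mul_lt_of_lt_div_sqrt hn.le (by linarith) hH h)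
  have hS : 0 < √(4 * (n - 1) + n ^ 2 * H ^ 2) := sqrt_pos.mpr (by positivity)
  rw [lt_sqrt (by positivity), div_pow, lt_sub_iff_add_lt, ← lt_sub_iff_add_lt',
    div_lt_iff₀ hS]
  have hm₂ : 0 < m ^ 2 := by positivity
  calc 2 * n * H = 2 * (n * H * m ^ 2) / m ^ 2 := by field_simp
    _ < 2 * ((m ^ 2 - 2) * √(4 * (n - 1) + n ^ 2 * H ^ 2)) / m ^ 2 := by gcongr
    _ = (2 - 2 ^ 2 / m ^ 2) * √(4 * (n - 1) + n ^ 2 * H ^ 2) := by field_simp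

end PeriodBound

/-- For integers `n, m ≥ 2` and `cot(π/m) < H < (m²−2)√(n−1)/(n√(m²−1))`,
one has `2 arccot H < 2π/m < π √(2 − 2nH/√(4(n−1) + n²H²))`. -/
theorem stmt_13 (n m : ℕ) (hn : 2 ≤ n) (hm : 2 ≤ m) (H : ℝ)
    (h1 : Real.cot (Real.pi / (m : ℝ)) < H)
    (h2 : H < ((m : ℝ) ^ 2 - 2) * Real.sqrt ((n : ℝ) - 1)
      / ((n : ℝ) * Real.sqrt ((m : ℝ) ^ 2 - 1))) :
    2 * (Real.pi / 2 - Real.arctan H) < 2 * Real.pi / (m : ℝ) ∧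
    2 * Real.pi / (m : ℝ) < Real.pi * Real.sqrt (2 - 2 * (n : ℝ) * H
      / Real.sqrt (4 * ((n : ℝ) - 1) + (n : ℝ) ^ 2 * H ^ 2)) := by
  have hm' : (2 : ℝ) ≤ m := by exact_mod_cast hm
  have hn' : (2 : ℝ) ≤ n := by exact_mod_cast hn
  have hπm : π / m ≤ π / 2 := div_le_div_of_nonneg_left pi_pos.le two_pos hm'
  have hleft := pi_div_two_sub_arctan_lt (div_pos pi_pos (by linarith))
    (div_lt_self pi_pos (by linarith)) h1
  have hH : 0 < H := arctan_pos.mp (by linarith)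
  refine ⟨by rw [mul_div_assoc]; linarith, ?_⟩
  calc 2 * π / m = π * (2 / m) := by ring
    _ < _ := mul_lt_mul_of_pos_left
      (two_div_lt_sqrt_two_sub (by linarith) (by linarith) (by nlinarith) hH.le h2) pi_pos
end

section
/- For every integer m ≥ 3, the inequality b₂(cot(π/(m+1))) > 2π/m holds, where b₂(H) = √2·π·(H + √(1+H²))^{3/2} / ((1+H²)^{1/4}·(1 + 2H² + 2H√(1+H²))). -/
/-!
With `A = H + √(1 + H²)` the factor `1 + 2H² + 2H√(1 + H²)` is `A²`, so
`b₂ H = √2 π / √(A √(1 + H²))`. At `H = cot θ`, `0 < θ < π`, one has `A √(1 + H²) = 1 / (1 - cos θ)`,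
hence `b₂ (cot θ) = √2 π √(1 - cos θ) = 2π sin (θ / 2)`. The claim becomes
`1 / m < sin x` for `x = π / (2(m + 1)) ≤ π / 8`, where `1 / m = x / (π / 2 - x)`, and this follows
from `x - x³/6 < sin x`.
-/

open Real

noncomputable def bTwo (H : ℝ) : ℝ :=
  √2 * π * (H + √(1 + H ^ 2)) ^ ((3 : ℝ) / 2)
    / ((1 + H ^ 2) ^ ((1 : ℝ) / 4) * (1 + 2 * H ^ 2 + 2 * H * √(1 + H ^ 2)))

lemma add_sqrt_one_add_sq_pos (H : ℝ) : 0 < H + √(1 + H ^ 2) := by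
  have : |H| < √(1 + H ^ 2) := by
    rw [lt_sqrt (abs_nonneg H), sq_abs]; linarith
  linarith [neg_abs_le H]

lemma bTwo_eq (H : ℝ) :
    bTwo H = √2 * π / √((H + √(1 + H ^ 2)) * √(1 + H ^ 2)) := by
  set S := √(1 + H ^ 2) with hS_def
  set A := H + S
  have hA : 0 < A := add_sqrt_one_add_sq_pos H
  have hS : 0 < S := sqrt_pos.2 (by positivity)
  have hSS : S ^ 2 = 1 + H ^ 2 := sq_sqrt (by positivity)
  have hquarter : (1 + H ^ 2) ^ ((1 : ℝ) / 4) = √S := by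
    rw [hS_def, sqrt_eq_rpow, sqrt_eq_rpow, ← rpow_mul (by positivity)]
    norm_num
  have hden : 1 + 2 * H ^ 2 + 2 * H * S = A ^ 2 := by
    linear_combination -hSS
  have hcube : A ^ ((3 : ℝ) / 2) = A * √A := by
    rw [show (3 : ℝ) / 2 = 1 + 1 / 2 by norm_num, rpow_add hA, rpow_one, ← sqrt_eq_rpow]
  have hAA : √A ^ 2 = A := sq_sqrt hA.le
  rw [bTwo, hquarter, hden, hcube, sqrt_mul hA.le]
  have : 0 < √A := sqrt_pos.2 hA
  have : 0 < √S := sqrt_pos.2 hS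
  field_simp
  rw [hAA]

lemma cot_add_sqrt_mul_sqrt {θ : ℝ} (hθ : 0 < sin θ) :
    (cot θ + √(1 + cot θ ^ 2)) * √(1 + cot θ ^ 2) = 1 / (1 - cos θ) := by
  have hsc := sin_sq_add_cos_sq θ
  have hc : cos θ < 1 := by nlinarith [cos_le_one θ]
  have hS : √(1 + cot θ ^ 2) = 1 / sin θ := by
    rw [cot_eq_cos_div_sin, sqrt_eq_iff_mul_self_eq_of_pos (by positivity)]
    field_simp; linarith
  rw [hS, cot_eq_cos_div_sin]
  have : 1 - cos θ ≠ 0 := by linarith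
  field_simp
  linear_combination -hsc

lemma bTwo_cot {θ : ℝ} (h₀ : 0 < θ) (hπ : θ < π) : bTwo (cot θ) = 2 * π * sin (θ / 2) := by
  rw [bTwo_eq, cot_add_sqrt_mul_sqrt (sin_pos_of_pos_of_lt_pi h₀ hπ),
    sin_half_eq_sqrt h₀.le (by linarith), one_div, sqrt_inv, div_inv_eq_mul, sqrt_div' _ zero_le_two]
  have : √2 ^ 2 = 2 := sq_sqrt zero_le_two
  field_simp
  rw [this, mul_comm]

lemma lt_sin_of_le_pi_div_eight {x : ℝ} (h₀ : 0 < x) (h₈ : x ≤ π / 8) : x / (π / 2 - x) < sin x := by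
  have hπ₁ := pi_gt_d2
  have hπ₂ := pi_lt_d2
  have hgap : 0 < π / 2 - x := by linarith
  have hpoly : 1 ≤ (1 - x ^ 2 / 6) * (π / 2 - x) := by nlinarith
  rw [div_lt_iff₀ hgap]
  calc x ≤ (x - x ^ 3 / 6) * (π / 2 - x) := by nlinarith
    _ < sin x * (π / 2 - x) := by gcongr; exact sin_gt_sub_cube h₀

lemma one_div_lt_sin_pi_div_succ_div_two {m : ℝ} (hm : 3 ≤ m) : 1 / m < sin (π / (m + 1) / 2) := by
  have hx : π / (m + 1) / 2 / (π / 2 - π / (m + 1) / 2) = 1 / m := by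
    have : m + 1 ≠ 0 := by linarith
    field_simp
    rw [add_sub_cancel_right, div_self (by linarith)]
  rw [← hx]
  refine lt_sin_of_le_pi_div_eight (by positivity) ?_
  rw [div_div]
  gcongr
  linarith

/-- For every integer `m ≥ 3`, `b₂(cot(π/(m+1))) > 2π/m`, where
`b₂ H = √2 π (H+√(1+H²))^{3/2} / ((1+H²)^{1/4}(1+2H²+2H√(1+H²)))`. -/
theorem stmt_14 (m : ℕ) (hm : 3 ≤ m) (b₂ : ℝ → ℝ)
    (hb₂ : ∀ H : ℝ, b₂ H = Real.sqrt 2 * Real.pi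
      * (H + Real.sqrt (1 + H ^ 2)) ^ ((3 : ℝ) / 2)
      / ((1 + H ^ 2) ^ ((1 : ℝ) / 4) * (1 + 2 * H ^ 2 + 2 * H * Real.sqrt (1 + H ^ 2)))) :
    2 * Real.pi / (m : ℝ) < b₂ (Real.cot (Real.pi / ((m : ℝ) + 1))) := by
  have hm' : (3 : ℝ) ≤ m := by exact_mod_cast hm
  rw [show b₂ = bTwo from funext hb₂,
    bTwo_cot (by positivity) (div_lt_self pi_pos (by linarith))]
  calc 2 * π / m = 2 * π * (1 / m) := by ring
    _ < 2 * π * sin (π / (m + 1) / 2) := by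
      gcongr
      exact one_div_lt_sin_pi_div_succ_div_two hm'
end

section
/- Let n ≥ 2 be an integer and let r, λ, θ : ℝ → ℝ be differentiable functions with r(u) > 0, λ(u) > 0, (r′(u))² + r(u)²·λ(u)² = 1 + r(u)², and θ′(u) = r(u)·λ(u)/(1 + r(u)²) for all u. For y ∈ ℝⁿ with |y| = 1 define φ(y,u) = (r(u)·y, √(1 + r(u)²)·sinh θ(u), √(1 + r(u)²)·cosh θ(u)) ∈ ℝ^{n+2}. Then, writing ⟨v,w⟩_L = v₁w₁ + ⋯ + v_{n+1}w_{n+1} − v_{n+2}w_{n+2} for the Lorentzian bilinear form on ℝ^{n+2}: (i) ⟨φ(y,u), φ(y,u)⟩_L = −1 for all y, u (so φ takes values in the hyperboloid model of hyperbolic space H^{n+1}); (ii) ⟨∂φ/∂u(y,u), ∂φ/∂u(y,u)⟩_L = 1 for all y, u; and (iii) φ is injective on {y ∈ ℝⁿ : |y| = 1} × ℝ. -/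
/-! With `s = √(1 + r²)`, both Lorentz norms split into a Euclidean part (`r²|y|²`, resp.
`r'²|y|²`) and a hyperbolic-rotation part, which the identity
`(a sinh t + b cosh t)² − (a cosh t + b sinh t)² = b² − a²` reduces to `−s²`, resp.
`s²θ'² − s'²`. Hence `⟨φ,φ⟩_L = r² − s² = −1`, and since `s' = r r'/s` the first integral gives
`⟨φ_u,φ_u⟩_L = r'² + (r²λ² − r²r'²)/(1 + r²) = 1`.

For injectivity, `(s sinh θ, s cosh θ)` determines `s > 0` (its Lorentz norm is `−s²`) and then
`θ`; as `θ' > 0`, `θ` is injective, which fixes `u`, and `r(u) > 0` recovers `y`. -/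

open Real

/-- The rotational parametrization
`φ(y,u) = (r(u)y, √(1+r(u)²) sinh θ(u), √(1+r(u)²) cosh θ(u))` of a hypersurface of
revolution in the hyperboloid model of `H^{n+1} ⊂ ℝ^{n+2}`. -/
noncomputable def hyperbolicProfileMap (n : ℕ) (r θ : ℝ → ℝ)
    (y : EuclideanSpace ℝ (Fin n)) (u : ℝ) : Fin (n + 2) → ℝ :=
  fun i =>
    if h : (i : ℕ) < n then r u * y ⟨i, h⟩
    else if (i : ℕ) = n then Real.sqrt (1 + (r u) ^ 2) * Real.sinh (θ u)
    else Real.sqrt (1 + (r u) ^ 2) * Real.cosh (θ u)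

/-- The Lorentzian bilinear form `⟨v,w⟩_L = v₁w₁ + ⋯ + v_{n+1}w_{n+1} − v_{n+2}w_{n+2}`
on `ℝ^{n+2}` (the last coordinate carries the minus sign). -/
def lorentzForm (n : ℕ) (v w : Fin (n + 2) → ℝ) : ℝ :=
  ∑ i : Fin (n + 2), (if (i : ℕ) = n + 1 then (-1 : ℝ) else 1) * v i * w i

open Function

theorem HasDerivAt.finSnoc {𝕜 F : Type*} [NontriviallyNormedField 𝕜] [NormedAddCommGroup F]
    [NormedSpace 𝕜 F] {n : ℕ} {f : 𝕜 → Fin n → F} {a : 𝕜 → F} {f' : Fin n → F} {a' : F}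
    {x : 𝕜} (hf : HasDerivAt f f' x) (ha : HasDerivAt a a' x) :
    HasDerivAt (fun v => (Fin.snoc (f v) (a v) : Fin (n + 1) → F)) (Fin.snoc f' a') x := by
  refine hasDerivAt_pi.2 fun i => ?_
  induction i using Fin.lastCases with
  | last => simpa using ha
  | cast j => simpa using hasDerivAt_pi.1 hf j

theorem dotProduct_const_mul_self {n : ℕ} (c : ℝ) (y : EuclideanSpace ℝ (Fin n)) :
    (fun j => c * y j) ⬝ᵥ (fun j => c * y j) = c ^ 2 * ‖y‖ ^ 2 := by
  simp only [dotProduct, EuclideanSpace.norm_sq_eq, Real.norm_eq_abs, sq_abs, Finset.mul_sum]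
  exact Finset.sum_congr rfl fun j _ => by ring

theorem injOn_mul_sinh_mul_cosh :
    Set.InjOn (fun p : ℝ × ℝ => (p.1 * sinh p.2, p.1 * cosh p.2)) (Set.Ioi 0 ×ˢ Set.univ) := by
  rintro ⟨s, t⟩ ⟨hs, -⟩ ⟨s', t'⟩ ⟨hs', -⟩ h
  simp only [Prod.mk.injEq] at h ⊢
  obtain ⟨hsinh, hcosh⟩ := h
  have hsq : s ^ 2 = s' ^ 2 := by
    linear_combination (s * cosh t + s' * cosh t') * hcosh - (s * sinh t + s' * sinh t') * hsinh
      - s ^ 2 * cosh_sq_sub_sinh_sq t + s' ^ 2 * cosh_sq_sub_sinh_sq t'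
  obtain rfl : s = s' := (pow_left_inj₀ (le_of_lt hs) (le_of_lt hs') two_ne_zero).1 hsq
  exact ⟨rfl, sinh_injective (mul_left_cancel₀ (ne_of_gt hs) hsinh)⟩

theorem lorentzForm_snoc_snoc (n : ℕ) (f g : Fin n → ℝ) (a b a' b' : ℝ) :
    lorentzForm n (Fin.snoc (Fin.snoc f a) b) (Fin.snoc (Fin.snoc g a') b') =
      f ⬝ᵥ g + a * a' - b * b' := by
  have hlt : ∀ j : Fin n, (j : ℕ) ≠ n + 1 := fun j => by omega
  simp [lorentzForm, Fin.sum_univ_castSucc, dotProduct, hlt, sub_eq_add_neg]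

theorem hyperbolicProfileMap_eq_snoc (n : ℕ) (r θ : ℝ → ℝ) (y : EuclideanSpace ℝ (Fin n))
    (u : ℝ) : hyperbolicProfileMap n r θ y u =
      Fin.snoc (Fin.snoc (fun j => r u * y j) (√(1 + r u ^ 2) * sinh (θ u)))
        (√(1 + r u ^ 2) * cosh (θ u)) := by
  funext i
  induction i using Fin.lastCases with
  | last => simp [hyperbolicProfileMap]
  | cast i =>
    induction i using Fin.lastCases with
    | last => simp [hyperbolicProfileMap]
    | cast j => simp [hyperbolicProfileMap]

section HyperbolicProfile

variable {n : ℕ} {r θ : ℝ → ℝ} {y : EuclideanSpace ℝ (Fin n)} {u : ℝ}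

theorem lorentzForm_hyperbolicProfileMap_self (hy : ‖y‖ = 1) :
    lorentzForm n (hyperbolicProfileMap n r θ y u) (hyperbolicProfileMap n r θ y u) = -1 := by
  rw [hyperbolicProfileMap_eq_snoc, lorentzForm_snoc_snoc, dotProduct_const_mul_self, hy]
  have hs : √(1 + r u ^ 2) ^ 2 = 1 + r u ^ 2 := sq_sqrt (by positivity)
  linear_combination (-1 : ℝ) * hs - √(1 + r u ^ 2) ^ 2 * cosh_sq_sub_sinh_sq (θ u)

theorem hasDerivAt_sqrt_one_add_sq {r' : ℝ} (hr : HasDerivAt r r' u) :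
    HasDerivAt (fun v => √(1 + r v ^ 2)) (r u * r' / √(1 + r u ^ 2)) u := by
  convert ((hr.fun_pow 2).const_add 1).sqrt (by positivity) using 1
  field_simp
  norm_num
  ring

theorem hasDerivAt_hyperbolicProfileMap {r' s' θ' : ℝ} (hr : HasDerivAt r r' u)
    (hs : HasDerivAt (fun v => √(1 + r v ^ 2)) s' u) (hθ : HasDerivAt θ θ' u) :
    HasDerivAt (hyperbolicProfileMap n r θ y)
      (Fin.snoc (Fin.snoc (fun j => r' * y j)
        (s' * sinh (θ u) + √(1 + r u ^ 2) * (cosh (θ u) * θ')))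
        (s' * cosh (θ u) + √(1 + r u ^ 2) * (sinh (θ u) * θ'))) u := by
  rw [show hyperbolicProfileMap n r θ y = _ from funext (hyperbolicProfileMap_eq_snoc n r θ y)]
  exact ((hasDerivAt_pi.2 fun j => hr.mul_const _).finSnoc (hs.mul hθ.sinh)).finSnoc
    (hs.mul hθ.cosh)

theorem exists_hasDerivAt_hyperbolicProfileMap_lorentzForm_eq_one {r' l : ℝ} (hy : ‖y‖ = 1)
    (hr : HasDerivAt r r' u) (hθ : HasDerivAt θ (r u * l / (1 + r u ^ 2)) u)
    (hfirst : r' ^ 2 + r u ^ 2 * l ^ 2 = 1 + r u ^ 2) :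
    ∃ d, HasDerivAt (hyperbolicProfileMap n r θ y) d u ∧ lorentzForm n d d = 1 := by
  refine ⟨_, hasDerivAt_hyperbolicProfileMap hr (hasDerivAt_sqrt_one_add_sq hr) hθ, ?_⟩
  rw [lorentzForm_snoc_snoc, dotProduct_const_mul_self, hy]
  set s := √(1 + r u ^ 2)
  have hs : s ^ 2 = 1 + r u ^ 2 := sq_sqrt (by positivity)
  have hs0 : s ≠ 0 := by positivity
  set a := r u * r' / s
  set b := s * (r u * l / (1 + r u ^ 2))
  calc _ = r' ^ 2 + b ^ 2 - a ^ 2 := by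
        linear_combination (b ^ 2 - a ^ 2) * cosh_sq_sub_sinh_sq (θ u)
    _ = 1 := by
      rw [mul_pow, div_pow, hs, div_pow, hs]
      field_simp
      linear_combination hfirst

theorem hyperbolicProfileMap_injective (hr : ∀ u, 0 < r u) (hθ : Injective θ) :
    Injective (uncurry (hyperbolicProfileMap n r θ)) := by
  rintro ⟨y, u⟩ ⟨y', u'⟩ h
  simp only [uncurry_apply_pair, hyperbolicProfileMap_eq_snoc, Fin.snoc_inj] at h
  obtain ⟨⟨hy, hsinh⟩, hcosh⟩ := h
  have hmem (v : ℝ) : (√(1 + r v ^ 2), θ v) ∈ Set.Ioi 0 ×ˢ Set.univ :=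
    Set.mk_mem_prod (Set.mem_Ioi.2 (sqrt_pos.2 (by positivity))) trivial
  have hpolar : (√(1 + r u ^ 2), θ u) = (√(1 + r u' ^ 2), θ u') :=
    injOn_mul_sinh_mul_cosh (hmem u) (hmem u') (Prod.ext hsinh hcosh)
  obtain rfl := hθ (Prod.ext_iff.1 hpolar).2
  refine Prod.ext ?_ rfl
  ext j
  exact mul_left_cancel₀ (hr u).ne' (congrFun hy j)

end HyperbolicProfile

theorem stmt_19_general (n : ℕ) (r lam θ : ℝ → ℝ)
    (hr : Differentiable ℝ r)
    (hrpos : ∀ u, 0 < r u) (hlampos : ∀ u, 0 < lam u)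
    (hfirst : ∀ u, (deriv r u) ^ 2 + (r u) ^ 2 * (lam u) ^ 2 = 1 + (r u) ^ 2)
    (hθ' : ∀ u, deriv θ u = r u * lam u / (1 + (r u) ^ 2)) :
    (∀ (y : EuclideanSpace ℝ (Fin n)), ‖y‖ = 1 → ∀ u : ℝ,
      lorentzForm n (hyperbolicProfileMap n r θ y u) (hyperbolicProfileMap n r θ y u) = -1 ∧
      ∃ d : Fin (n + 2) → ℝ,
        HasDerivAt (fun v => hyperbolicProfileMap n r θ y v) d u ∧ lorentzForm n d d = 1) ∧
    Set.InjOn (fun p : EuclideanSpace ℝ (Fin n) × ℝ => hyperbolicProfileMap n r θ p.1 p.2)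
      ({y : EuclideanSpace ℝ (Fin n) | ‖y‖ = 1} ×ˢ (Set.univ : Set ℝ)) := by
  have hθ_pos (u : ℝ) : 0 < deriv θ u := by
    have := hrpos u
    have := hlampos u
    rw [hθ' u]
    positivity
  refine ⟨fun y hy u => ⟨lorentzForm_hyperbolicProfileMap_self hy, ?_⟩,
    (hyperbolicProfileMap_injective hrpos (strictMono_of_deriv_pos hθ_pos).injective).injOn⟩
  have hθu := (differentiableAt_of_deriv_ne_zero (hθ_pos u).ne').hasDerivAt
  rw [hθ' u] at hθu
  exact exists_hasDerivAt_hyperbolicProfileMap_lorentzForm_eq_one hy (hr u).hasDerivAt hθu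
    (hfirst u)

/-- If `r > 0`, `λ > 0`, `(r')² + r²λ² = 1 + r²` and
`θ' = rλ/(1+r²)`, then for every unit `y` the point `φ(y,u)` lies on the hyperboloid
(`⟨φ,φ⟩_L = −1`), the `u`-partial derivative of `φ` is a unit spacelike vector
(`⟨∂φ/∂u, ∂φ/∂u⟩_L = 1`), and `φ` is injective on `{y : |y| = 1} × ℝ`. -/
theorem stmt_19 (n : ℕ) (hn : 2 ≤ n) (r lam θ : ℝ → ℝ)
    (hr : Differentiable ℝ r) (hlam : Differentiable ℝ lam) (hθ : Differentiable ℝ θ)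
    (hrpos : ∀ u, 0 < r u) (hlampos : ∀ u, 0 < lam u)
    (hfirst : ∀ u, (deriv r u) ^ 2 + (r u) ^ 2 * (lam u) ^ 2 = 1 + (r u) ^ 2)
    (hθ' : ∀ u, deriv θ u = r u * lam u / (1 + (r u) ^ 2)) :
    (∀ (y : EuclideanSpace ℝ (Fin n)), ‖y‖ = 1 → ∀ u : ℝ,
      lorentzForm n (hyperbolicProfileMap n r θ y u) (hyperbolicProfileMap n r θ y u) = -1 ∧
      ∃ d : Fin (n + 2) → ℝ,
        HasDerivAt (fun v => hyperbolicProfileMap n r θ y v) d u ∧ lorentzForm n d d = 1) ∧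
    Set.InjOn (fun p : EuclideanSpace ℝ (Fin n) × ℝ => hyperbolicProfileMap n r θ p.1 p.2)
      ({y : EuclideanSpace ℝ (Fin n) | ‖y‖ = 1} ×ˢ (Set.univ : Set ℝ)) :=
  stmt_19_general n r lam θ hr hrpos hlampos hfirst hθ'
end
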